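/- arXiv:2202.00741 — 11 statements merged into one kernel-verified Lean document; each statement's English description precedes it below -/
import Mathlib

section
/- Let E be a finite-dimensional real normed vector space, let f : E → ℝ be locally Lipschitz (every point has a neighbourhood on which f is Lipschitz), and let x0 ∈ E. Then there exists an open convex neighbourhood U of x0 with compact closure such that the least Lipschitz constant of f on cl U equals the supremum of the local dilatations of f over cl U; that is, L(cl U, f) = sSup { dil f x : x ∈ cl U }. -/
open Metric Set

/-- The least Lipschitz constant of `f` on `A`:
`sSup { |f x1 − f x2| / ‖x1 − x2‖ : x1, x2 ∈ A, x1 ≠ x2 }`. -/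
noncomputable def leastLipConst {E : Type*} [NormedAddCommGroup E]
    (f : E → ℝ) (A : Set E) : ℝ :=
  sSup { c : ℝ | ∃ x1 ∈ A, ∃ x2 ∈ A, x1 ≠ x2 ∧ c = |f x1 - f x2| / ‖x1 - x2‖ }

/-- The local dilatation of `f` at `x`:
`sInf { L(cl V, f) : V an open neighbourhood of x with compact closure }`. -/
noncomputable def dil {E : Type*} [NormedAddCommGroup E] (f : E → ℝ) (x : E) : ℝ :=
  sInf { c : ℝ | ∃ V : Set E, IsOpen V ∧ x ∈ V ∧ IsCompact (closure V) ∧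
    c = leastLipConst f (closure V) }

/-!
Let `g r` be the least Lipschitz constant of `f` on `closedBall x0 r`. Since `g` is monotone, it
is continuous at some `r > 0`; take `U = ball x0 r`. Each `ball x0 s` with `s > r` is an open
neighbourhood of every point of `closedBall x0 r`, so the dilatations there are at most `g s`,
hence at most `g r` by continuity. Conversely, any `c` exceeding all these dilatations is a
Lipschitz constant of `f` near every point of the closed ball, and a continuous induction along
segments turns such local constants into a global one on the convex ball.
-/

open Filter Topology

lemma dist_le_mul_sub_of_forall_eventually_nhdsGT {X : Type*} [PseudoMetricSpace X] {φ : ℝ → X}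
    {a b K : ℝ} (hab : a ≤ b) (hφ : ContinuousOn φ (Icc a b))
    (h : ∀ t ∈ Ico a b, ∀ᶠ u in 𝓝[>] t, dist (φ u) (φ t) ≤ K * (u - t)) :
    dist (φ b) (φ a) ≤ K * (b - a) := by
  let s := {t : ℝ | dist (φ t) (φ a) ≤ K * (t - a)}
  have hs : IsClosed (s ∩ Icc a b) := by
    rw [inter_comm]
    exact isClosed_Icc.isClosed_le (f := fun t ↦ dist (φ t) (φ a)) (g := fun t ↦ K * (t - a))
      (continuous_dist.comp_continuousOn (hφ.prodMk continuousOn_const)) (by fun_prop)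
  have hgt : ∀ t ∈ s ∩ Ico a b, s ∈ 𝓝[>] t := fun t ⟨hts, ht⟩ ↦ by
    filter_upwards [h t ht] with u hu
    calc dist (φ u) (φ a) ≤ dist (φ u) (φ t) + dist (φ t) (φ a) := dist_triangle _ _ _
      _ ≤ K * (u - t) + K * (t - a) := add_le_add hu hts
      _ = K * (u - a) := by ring
  have hsa : a ∈ s := by simp [s]
  exact hs.Icc_subset_of_forall_mem_nhdsWithin hsa hgt (right_mem_Icc.2 hab)

lemma Convex.dist_le_mul_of_forall_eventually_nhds {E F : Type*} [NormedAddCommGroup E]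
    [NormedSpace ℝ E] [PseudoMetricSpace F] {f : E → F} {K : Set E} {M : ℝ}
    (hK : Convex ℝ K) (hf : ContinuousOn f K)
    (h : ∀ x ∈ K, ∀ᶠ y in 𝓝 x, dist (f y) (f x) ≤ M * dist y x) {a b : E}
    (ha : a ∈ K) (hb : b ∈ K) : dist (f b) (f a) ≤ M * dist b a := by
  have hmaps : MapsTo (AffineMap.lineMap a b) (Icc (0 : ℝ) 1) K := fun t ht ↦
    hK.lineMap_mem ha hb ht
  have hcont : Continuous (AffineMap.lineMap a b : ℝ → E) := AffineMap.lineMap_continuous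
  have hloc : ∀ t ∈ Ico (0 : ℝ) 1, ∀ᶠ u in 𝓝[>] t,
      dist (f (AffineMap.lineMap a b u)) (f (AffineMap.lineMap a b t)) ≤
        M * dist b a * (u - t) := fun t ht ↦ by
    have hnear := (hcont.tendsto t).eventually (h _ (hmaps (Ico_subset_Icc_self ht)))
    filter_upwards [nhdsWithin_le_nhds hnear, self_mem_nhdsWithin] with u hu (htu : t < u)
    rw [dist_lineMap_lineMap, Real.dist_eq, abs_of_pos (sub_pos.2 htu), dist_comm a b] at hu
    linarith
  simpa using dist_le_mul_sub_of_forall_eventually_nhdsGT zero_le_one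
    (hf.comp hcont.continuousOn hmaps) hloc

section LeastLipConst

variable {E : Type*} [NormedAddCommGroup E] {f : E → ℝ} {A B : Set E} {M : ℝ}

lemma leastLipConst_eq_sSup_dist (f : E → ℝ) (A : Set E) :
    leastLipConst f A =
      sSup {c : ℝ | ∃ x1 ∈ A, ∃ x2 ∈ A, x1 ≠ x2 ∧ c = dist (f x1) (f x2) / dist x1 x2} := by
  simp only [leastLipConst, dist_eq_norm, Real.norm_eq_abs]

lemma leastLipConst_nonneg (f : E → ℝ) (A : Set E) : 0 ≤ leastLipConst f A := by
  rw [leastLipConst_eq_sSup_dist]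
  refine Real.sSup_nonneg ?_
  rintro c ⟨a, -, b, -, -, rfl⟩
  positivity

lemma leastLipConst_le (hM : 0 ≤ M) (h : ∀ a ∈ A, ∀ b ∈ A, dist (f a) (f b) ≤ M * dist a b) :
    leastLipConst f A ≤ M := by
  rw [leastLipConst_eq_sSup_dist]
  refine Real.sSup_le ?_ hM
  rintro c ⟨a, ha, b, hb, hab, rfl⟩
  exact div_le_of_le_mul₀ dist_nonneg hM (h a ha b hb)

lemma LipschitzOnWith.dist_le_leastLipConst_mul {K : NNReal} (hf : LipschitzOnWith K f A)
    {a b : E} (ha : a ∈ A) (hb : b ∈ A) : dist (f a) (f b) ≤ leastLipConst f A * dist a b := by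
  rcases eq_or_ne a b with rfl | hab
  · simp
  have hdist : 0 < dist a b := dist_pos.2 hab
  have hbdd : BddAbove
      {c : ℝ | ∃ x1 ∈ A, ∃ x2 ∈ A, x1 ≠ x2 ∧ c = dist (f x1) (f x2) / dist x1 x2} := by
    refine ⟨K, ?_⟩
    rintro c ⟨x1, hx1, x2, hx2, hx12, rfl⟩
    exact div_le_of_le_mul₀ dist_nonneg K.2 (hf.dist_le_mul x1 hx1 x2 hx2)
  rw [← div_le_iff₀ hdist, leastLipConst_eq_sSup_dist]
  exact le_csSup hbdd ⟨a, ha, b, hb, hab, rfl⟩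

lemma LipschitzOnWith.leastLipConst_mono {K : NNReal} (hf : LipschitzOnWith K f B)
    (hAB : A ⊆ B) : leastLipConst f A ≤ leastLipConst f B :=
  leastLipConst_le (leastLipConst_nonneg f B) fun _ ha _ hb ↦
    hf.dist_le_leastLipConst_mul (hAB ha) (hAB hb)

lemma LocallyLipschitz.monotone_leastLipConst_closedBall [ProperSpace E]
    (hf : LocallyLipschitz f) (x0 : E) : Monotone fun r ↦ leastLipConst f (closedBall x0 r) :=
  fun _ s hrs ↦
    have ⟨_, hK⟩ := hf.locallyLipschitzOn.exists_lipschitzOnWith_of_compact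
      (isCompact_closedBall x0 s)
    hK.leastLipConst_mono (closedBall_subset_closedBall hrs)

end LeastLipConst

section Dil

variable {E : Type*} [NormedAddCommGroup E] {f : E → ℝ} {x : E}

lemma dil_nonneg (f : E → ℝ) (x : E) : 0 ≤ dil f x := by
  refine Real.sInf_nonneg ?_
  rintro c ⟨V, -, -, -, rfl⟩
  exact leastLipConst_nonneg f _

lemma dil_le_leastLipConst {V : Set E} (hV : IsOpen V) (hxV : x ∈ V)
    (hVc : IsCompact (closure V)) : dil f x ≤ leastLipConst f (closure V) := by
  refine csInf_le ⟨0, ?_⟩ ⟨V, hV, hxV, hVc, rfl⟩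
  rintro c ⟨W, -, -, -, rfl⟩
  exact leastLipConst_nonneg f _

lemma LocallyLipschitz.eventually_dist_le_of_dil_lt [ProperSpace E] (hf : LocallyLipschitz f)
    {c : ℝ} (h : dil f x < c) : ∀ᶠ y in 𝓝 x, dist (f y) (f x) ≤ c * dist y x := by
  have hball : IsCompact (closure (ball x 1)) :=
    (isCompact_closedBall x 1).of_isClosed_subset isClosed_closure closure_ball_subset_closedBall
  obtain ⟨_, ⟨V, hV, hxV, hVc, rfl⟩, hlt⟩ := exists_lt_of_csInf_lt
    (by exact ⟨_, ball x 1, isOpen_ball, mem_ball_self one_pos, hball, rfl⟩) h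
  obtain ⟨K, hK⟩ := hf.locallyLipschitzOn.exists_lipschitzOnWith_of_compact hVc
  filter_upwards [hV.mem_nhds hxV] with y hy
  calc dist (f y) (f x) ≤ leastLipConst f (closure V) * dist y x :=
        hK.dist_le_leastLipConst_mul (subset_closure hy) (subset_closure hxV)
    _ ≤ c * dist y x := by gcongr

lemma dil_le_leastLipConst_closedBall [NormedSpace ℝ E] [ProperSpace E] {x0 : E} {r : ℝ}
    (hr : ContinuousWithinAt (fun s ↦ leastLipConst f (closedBall x0 s)) (Ioi r) r)
    (hx : x ∈ closedBall x0 r) : dil f x ≤ leastLipConst f (closedBall x0 r) := by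
  have hr0 : 0 ≤ r := nonempty_closedBall.1 ⟨x, hx⟩
  refine ge_of_tendsto hr (eventually_nhdsWithin_of_forall fun s (hs : r < s) ↦ ?_)
  have hs0 : s ≠ 0 := (hr0.trans_lt hs).ne'
  have hxs : x ∈ ball x0 s := mem_ball.2 ((mem_closedBall.1 hx).trans_lt hs)
  simpa only [closure_ball x0 hs0] using
    dil_le_leastLipConst (f := f) isOpen_ball hxs (by
      rw [closure_ball x0 hs0]; exact isCompact_closedBall x0 s)

lemma Convex.leastLipConst_le_sSup_dil [NormedSpace ℝ E] [ProperSpace E] {K : Set E}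
    (hK : Convex ℝ K) (hf : LocallyLipschitz f) (hbdd : BddAbove (dil f '' K)) :
    leastLipConst f K ≤ sSup (dil f '' K) := by
  refine le_of_forall_gt_imp_ge_of_dense fun c hc ↦ ?_
  have hc0 : 0 ≤ c := by
    refine (Real.sSup_nonneg ?_).trans hc.le
    rintro _ ⟨y, -, rfl⟩
    exact dil_nonneg f y
  have hloc : ∀ x ∈ K, ∀ᶠ y in 𝓝 x, dist (f y) (f x) ≤ c * dist y x := fun x hx ↦
    hf.eventually_dist_le_of_dil_lt ((le_csSup hbdd (mem_image_of_mem _ hx)).trans_lt hc)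
  exact leastLipConst_le hc0 fun a ha b hb ↦
    hK.dist_le_mul_of_forall_eventually_nhds hf.continuous.continuousOn hloc hb ha

end Dil

/-- For a locally Lipschitz `f : E → ℝ` on a finite-dimensional real normed space and any
`x0`, there is an open convex neighbourhood `U` of `x0` with compact closure such that the
least Lipschitz constant of `f` on `closure U` equals the supremum of the local dilatations
of `f` over `closure U`. -/
theorem leastLipConst_eq_sSup_dil
    {E : Type*} [NormedAddCommGroup E] [NormedSpace ℝ E] [FiniteDimensional ℝ E]
    (f : E → ℝ) (hf : LocallyLipschitz f) (x0 : E) :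
    ∃ U : Set E, IsOpen U ∧ Convex ℝ U ∧ x0 ∈ U ∧ IsCompact (closure U) ∧
      leastLipConst f (closure U) = sSup (dil f '' closure U) := by
  have hmono := hf.monotone_leastLipConst_closedBall x0
  obtain ⟨r, hr_cont, hr0⟩ := (hmono.countable_not_continuousAt.dense_compl ℝ).exists_mem_open
    (isOpen_Ioi (a := (0 : ℝ))) nonempty_Ioi
  have hdil : ∀ x ∈ closedBall x0 r, dil f x ≤ leastLipConst f (closedBall x0 r) :=
    fun x hx ↦ dil_le_leastLipConst_closedBall (not_not.1 hr_cont).continuousWithinAt hx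
  have hbdd : BddAbove (dil f '' closedBall x0 r) := ⟨_, forall_mem_image.2 hdil⟩
  refine ⟨ball x0 r, isOpen_ball, convex_ball x0 r, mem_ball_self hr0, ?_, ?_⟩
  · rw [closure_ball x0 hr0.ne']
    exact isCompact_closedBall x0 r
  rw [closure_ball x0 hr0.ne']
  exact le_antisymm ((convex_closedBall x0 r).leastLipConst_le_sSup_dil hf hbdd)
    (csSup_le ((nonempty_closedBall.2 hr0.le).image _) (forall_mem_image.2 hdil))
end

section
/- Let (M, d) be a metric space, let T ⊆ ℝ be an interval, and let f : ℝ × M → ℝ. Assume: (a) for every x ∈ M there exist an open neighbourhood U of x and a nonnegative function l_x : ℝ → ℝ, integrable on every compact subinterval of T, such that |f(t, x1) − f(t, x2)| ≤ l_x(t) · d(x1, x2) for all t ∈ T and all x1, x2 ∈ U; (b) for every compact K ⊆ M there is a nonnegative function κ : ℝ → ℝ, integrable on every compact subinterval of T, with |f(t, x)| ≤ κ(t) for all t ∈ T and x ∈ K. Then for every compact K ⊆ M there exists a nonnegative function l : ℝ → ℝ, integrable on every compact subinterval of T, such that |f(t, x1) − f(t, x2)| ≤ l(t) · d(x1, x2)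 for all t ∈ T and all x1, x2 ∈ K. -/
open Set MeasureTheory

/-- Paper's Lemma 2.4 (Property of time-varying locally Lipschitz functions), with the
Riemannian distance abstracted to a metric space.  If `f : ℝ × M → ℝ` is locally Lipschitz
in the state variable with a locally integrable Lipschitz modulus near every point, and
locally integrally bounded on compact sets, then on every compact `K ⊆ M` there is a single
nonnegative, locally integrable modulus `l` with
`|f(t,x1) − f(t,x2)| ≤ l t * dist x1 x2` for all `t ∈ T`, `x1 x2 ∈ K`. -/
theorem timeVarying_locally_lipschitz_uniform_on_compact
    {M : Type*} [MetricSpace M] (T : Set ℝ) (hT : T.OrdConnected)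
    (f : ℝ → M → ℝ)
    (ha : ∀ x : M, ∃ U ∈ nhds x, IsOpen U ∧ ∃ l : ℝ → ℝ, (∀ t, 0 ≤ l t) ∧
      (∀ a b : ℝ, Icc a b ⊆ T → IntegrableOn l (Icc a b)) ∧
      ∀ t ∈ T, ∀ x1 ∈ U, ∀ x2 ∈ U, |f t x1 - f t x2| ≤ l t * dist x1 x2)
    (hb : ∀ K : Set M, IsCompact K → ∃ κ : ℝ → ℝ, (∀ t, 0 ≤ κ t) ∧
      (∀ a b : ℝ, Icc a b ⊆ T → IntegrableOn κ (Icc a b)) ∧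
      ∀ t ∈ T, ∀ x ∈ K, |f t x| ≤ κ t) :
    ∀ K : Set M, IsCompact K → ∃ l : ℝ → ℝ, (∀ t, 0 ≤ l t) ∧
      (∀ a b : ℝ, Icc a b ⊆ T → IntegrableOn l (Icc a b)) ∧
      ∀ t ∈ T, ∀ x1 ∈ K, ∀ x2 ∈ K, |f t x1 - f t x2| ≤ l t * dist x1 x2 := by
  intro K hK
  -- choose neighbourhoods and local moduli
  choose U hUnhds hUopen L hLnn hLint hLlip using ha
  -- bound on K
  obtain ⟨κ, hκnn, hκint, hκbd⟩ := hb K hK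
  -- finite subcover
  obtain ⟨s, hs⟩ := hK.elim_nhds_subcover U (fun x _ => hUnhds x)
  -- Lebesgue number for the finite cover
  obtain ⟨δ, hδpos, hδ⟩ := lebesgue_number_lemma_of_metric (ι := s) hK
    (fun i => hUopen i) (by
      intro x hx
      obtain ⟨i, hi, hxU⟩ := mem_iUnion₂.1 (hs.2 hx)
      exact mem_iUnion.2 ⟨⟨i, hi⟩, hxU⟩)
  set l : ℝ → ℝ := fun t => (∑ i ∈ s, L i t) + (2 / δ) * κ t with hl
  refine ⟨l, ?_, ?_, ?_⟩
  · intro t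
    have h1 : 0 ≤ ∑ i ∈ s, L i t := Finset.sum_nonneg fun i _ => hLnn i t
    have h2 : 0 ≤ (2 / δ) * κ t :=
      mul_nonneg (div_nonneg (by norm_num) hδpos.le) (hκnn t)
    exact add_nonneg h1 h2
  · intro a b hab
    exact ((integrable_finset_sum s fun i _ => hLint i a b hab).add
      ((hκint a b hab).const_mul _))
  · intro t ht x1 hx1 x2 hx2
    have hsum_nn : 0 ≤ ∑ i ∈ s, L i t := Finset.sum_nonneg fun i _ => hLnn i t
    have hκt : 0 ≤ (2 / δ) * κ t :=
      mul_nonneg (div_nonneg (by norm_num) hδpos.le) (hκnn t)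
    rcases lt_or_ge (dist x1 x2) δ with hd | hd
    · obtain ⟨i, hi⟩ := hδ x1 hx1
      have hx1' : x1 ∈ U i := hi (Metric.mem_ball_self hδpos)
      have hx2' : x2 ∈ U i := hi (by simpa [Metric.mem_ball, dist_comm] using hd)
      have := hLlip i t ht x1 hx1' x2 hx2'
      have hle : L (i : M) t ≤ l t := by
        have : L (i : M) t ≤ ∑ j ∈ s, L j t :=
          Finset.single_le_sum (fun j _ => hLnn j t) i.2
        simp only [hl]; linarith
      calc |f t x1 - f t x2| ≤ L (i : M) t * dist x1 x2 := this
        _ ≤ l t * dist x1 x2 := mul_le_mul_of_nonneg_right hle dist_nonneg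
    · have h1 := hκbd t ht x1 hx1
      have h2 := hκbd t ht x2 hx2
      have htri : |f t x1 - f t x2| ≤ 2 * κ t := by
        calc |f t x1 - f t x2| ≤ |f t x1| + |f t x2| := abs_sub _ _
          _ ≤ 2 * κ t := by linarith
      have hkey : 2 * κ t ≤ (2 / δ) * κ t * dist x1 x2 := by
        have : (2 / δ) * κ t * δ ≤ (2 / δ) * κ t * dist x1 x2 :=
          mul_le_mul_of_nonneg_left hd (by positivity)
        calc 2 * κ t = (2 / δ) * κ t * δ := by field_simp
          _ ≤ (2 / δ) * κ t * dist x1 x2 := this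
      calc |f t x1 - f t x2| ≤ 2 * κ t := htri
        _ ≤ (2 / δ) * κ t * dist x1 x2 := hkey
        _ ≤ l t * dist x1 x2 := by
            apply mul_le_mul_of_nonneg_right _ dist_nonneg
            simp only [hl]; linarith
end

section
/- Let (M, d) be a metric space, let S = [a, b] ⊆ ℝ be a compact interval, let P be a topological space, let p0 ∈ P, let K ⊆ M be compact, and let f : ℝ × M × P → ℝ be such that t ↦ f(t, x, p) is measurable for every (x, p). Assume: (a) for every x ∈ K there exist an open neighbourhood U_x of x, an open neighbourhood O_x of p0, and a constant C_x ≥ 0 such that ∫_S |f(t, x1, p) − f(t, x2, p)| dt ≤ C_x · d(x1, x2) for all x1, x2 ∈ U_x and all p ∈ O_x; (b) there is an open neighbourhood O' of p0 such that ∫_S |f(t, x, p)| dt ≤ 1 for all x ∈ K and p ∈ O'. Then there exist C ≥ 0 and an open neighbourhood O of p0 such that ∫_S |f(t, x1, p) − f(t, x2, p)| dt ≤ C · d(x1, x2) for all x1, x2 ∈ K and all p ∈ O. -/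
open Set MeasureTheory

/-- Paper's Lemma 5.3 (Property of time- and parameter-dependent locally Lipschitz
functions), with the Riemannian distance abstracted to a metric space.  Integrals are
formalized as lower Lebesgue integrals of the nonnegative measurable integrands. -/
theorem timeParam_locally_lipschitz_uniform_on_compact
    {M P : Type*} [MetricSpace M] [TopologicalSpace P]
    (a b : ℝ) (p0 : P) (K : Set M) (hK : IsCompact K)
    (f : ℝ → M → P → ℝ)
    (hmeas : ∀ (x : M) (p : P), Measurable fun t => f t x p)
    (hlip : ∀ x ∈ K, ∃ U : Set M, IsOpen U ∧ x ∈ U ∧ ∃ O : Set P, IsOpen O ∧ p0 ∈ O ∧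
      ∃ C : ℝ, 0 ≤ C ∧ ∀ x1 ∈ U, ∀ x2 ∈ U, ∀ p ∈ O,
        (∫⁻ t in Icc a b, ENNReal.ofReal |f t x1 p - f t x2 p|) ≤
          ENNReal.ofReal (C * dist x1 x2))
    (hbd : ∃ O' : Set P, IsOpen O' ∧ p0 ∈ O' ∧ ∀ x ∈ K, ∀ p ∈ O',
      (∫⁻ t in Icc a b, ENNReal.ofReal |f t x p|) ≤ 1) :
    ∃ C : ℝ, 0 ≤ C ∧ ∃ O : Set P, IsOpen O ∧ p0 ∈ O ∧
      ∀ x1 ∈ K, ∀ x2 ∈ K, ∀ p ∈ O,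
        (∫⁻ t in Icc a b, ENNReal.ofReal |f t x1 p - f t x2 p|) ≤
          ENNReal.ofReal (C * dist x1 x2) := by
  classical
  obtain ⟨O', hO'open, hp0O', hbd'⟩ := hbd
  choose! U hUopen hxU O hOopen hpO C hCnn hLip using hlip
  -- finite subcover
  obtain ⟨t, htK, htcov⟩ := hK.elim_nhds_subcover U
    (fun x hx => (hUopen x hx).mem_nhds (hxU x hx))
  -- Lebesgue number
  have hcov : K ⊆ ⋃ i : {x // x ∈ t}, U i := by
    intro y hy
    rcases mem_iUnion₂.1 (htcov hy) with ⟨i, hi, hyi⟩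
    exact mem_iUnion.2 ⟨⟨i, hi⟩, hyi⟩
  obtain ⟨δ, hδpos, hδ⟩ := lebesgue_number_lemma_of_metric hK
    (fun i : {x // x ∈ t} => hUopen i (htK i i.2)) hcov
  set C0 : ℝ := (∑ x ∈ t, C x) + 2 / δ with hC0
  have hsum_nn : 0 ≤ ∑ x ∈ t, C x :=
    Finset.sum_nonneg fun x hx => hCnn x (htK x hx)
  have hC0nn : 0 ≤ C0 := by positivity
  refine ⟨C0, hC0nn, (⋂ x ∈ t, O x) ∩ O', ?_, ?_, ?_⟩
  · exact (isOpen_biInter_finset fun x hx => hOopen x (htK x hx)).inter hO'open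
  · exact ⟨mem_iInter₂.2 fun x hx => hpO x (htK x hx), hp0O'⟩
  · intro x1 hx1 x2 hx2 p hp
    rcases hp with ⟨hpO', hpO''⟩
    by_cases hd : dist x1 x2 < δ
    · obtain ⟨i, hi⟩ := hδ x1 hx1
      have h1 : x1 ∈ U i := hi (Metric.mem_ball_self hδpos)
      have h2 : x2 ∈ U i := hi (by simpa [Metric.mem_ball, dist_comm] using hd)
      have hiK : (i : M) ∈ K := htK i i.2
      have := hLip i hiK x1 h1 x2 h2 p (mem_iInter₂.1 hpO' i i.2)
      refine this.trans (ENNReal.ofReal_le_ofReal ?_)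
      apply mul_le_mul_of_nonneg_right _ dist_nonneg
      calc C i ≤ ∑ x ∈ t, C x :=
            Finset.single_le_sum (fun x hx => hCnn x (htK x hx)) i.2
        _ ≤ C0 := by rw [hC0]; nlinarith [div_nonneg (by norm_num : (0:ℝ) ≤ 2) hδpos.le]
    · push_neg at hd
      have hb1 := hbd' x1 hx1 p hpO''
      have hb2 := hbd' x2 hx2 p hpO''
      calc (∫⁻ s in Icc a b, ENNReal.ofReal |f s x1 p - f s x2 p|)
          ≤ ∫⁻ s in Icc a b,
              (ENNReal.ofReal |f s x1 p| + ENNReal.ofReal |f s x2 p|) := by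
            apply lintegral_mono
            intro s
            dsimp only
            rw [← ENNReal.ofReal_add (abs_nonneg _) (abs_nonneg _)]
            exact ENNReal.ofReal_le_ofReal
              (by simpa [sub_eq_add_neg, abs_neg] using abs_add_le (f s x1 p) (-(f s x2 p)))
        _ = (∫⁻ s in Icc a b, ENNReal.ofReal |f s x1 p|)
            + ∫⁻ s in Icc a b, ENNReal.ofReal |f s x2 p| :=
            lintegral_add_left ((hmeas x1 p).abs.ennreal_ofReal) _
        _ ≤ 1 + 1 := add_le_add hb1 hb2
        _ = ENNReal.ofReal 2 := by norm_num [ENNReal.ofReal]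
        _ ≤ ENNReal.ofReal (C0 * dist x1 x2) := by
            apply ENNReal.ofReal_le_ofReal
            have h2δ : 2 / δ * δ = 2 := div_mul_cancel₀ 2 hδpos.ne'
            have hc : 2 / δ ≤ C0 := by rw [hC0]; linarith
            calc (2:ℝ) = 2 / δ * δ := h2δ.symm
              _ ≤ C0 * dist x1 x2 :=
                mul_le_mul hc hd hδpos.le hC0nn
end

section
/- Let E be a finite-dimensional real normed space, let T ⊆ ℝ be an interval, and let X : ℝ × E → E satisfy: t ↦ X(t, x) is measurable for every x, and x ↦ X(t, x) is continuous for every t. Let T' ⊆ T be a subinterval and let ξ : ℝ → E be continuous on T' with t ↦ X(t, ξ(t)) integrable on every compact subinterval of T'. Then the following are equivalent: (i) for all t0, t ∈ T', ξ(t) = ξ(t0) + ∫_{t0}^{t} X(s, ξ(s)) ds; (ii) for every infinitely differentiable function f : E → ℝ and all t0, t ∈ T', f(ξ(t)) = f(ξ(t0)) + ∫_{t0}^{t} (fderiv ℝ f (ξ(s))) (X(s, ξ(s))) ds. -/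
open Set MeasureTheory intervalIntegral

/-- Paper's Lemma 3.2 ('Weak characterization of integral curves') in the local model
`E = ℝⁿ`: a continuous curve satisfies the integral equation for the time-varying vector
field `X` iff the corresponding integral identity holds for every smooth real-valued
function, via the Fréchet derivative. -/
theorem weak_characterization_of_integral_curves
    {E : Type*} [NormedAddCommGroup E] [NormedSpace ℝ E] [FiniteDimensional ℝ E] [MeasurableSpace E] [BorelSpace E]
    (T T' : Set ℝ) (hT : T.OrdConnected) (hT' : T'.OrdConnected) (hsub : T' ⊆ T)
    (X : ℝ → E → E)
    (hXmeas : ∀ x : E, Measurable fun t => X t x)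
    (hXcont : ∀ t : ℝ, Continuous fun x => X t x)
    (ξ : ℝ → E) (hξ : ContinuousOn ξ T')
    (hint : ∀ a b : ℝ, Icc a b ⊆ T' →
      IntegrableOn (fun s => X s (ξ s)) (Icc a b)) :
    (∀ t0 ∈ T', ∀ t ∈ T', ξ t = ξ t0 + ∫ s in t0..t, X s (ξ s)) ↔
      (∀ f : E → ℝ, ContDiff ℝ (⊤ : ℕ∞) f → ∀ t0 ∈ T', ∀ t ∈ T',
        f (ξ t) = f (ξ t0) + ∫ s in t0..t, (fderiv ℝ f (ξ s)) (X s (ξ s))) := by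
  have hIccsub : ∀ t0 ∈ T', ∀ t ∈ T', Icc (t0 ⊓ t) (t0 ⊔ t) ⊆ T' := fun t0 h0 t ht =>
    hT'.uIcc_subset h0 ht
  have hvint : ∀ t0 ∈ T', ∀ t ∈ T', IntervalIntegrable (fun s => X s (ξ s)) volume t0 t := by
    intro t0 h0 t ht
    rw [intervalIntegrable_iff]
    exact (hint _ _ (hIccsub t0 h0 t ht)).mono_set Ioc_subset_Icc_self
  constructor
  · intro hODE f hf t0 ht0 t ht
    set v : ℝ → E := fun s => X s (ξ s) with hvdef
    set a := t0 ⊓ t with hadef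
    set b := t0 ⊔ t with hbdef
    have ht0I : t0 ∈ Icc a b := ⟨inf_le_left, le_sup_left⟩
    have htI : t ∈ Icc a b := ⟨inf_le_right, le_sup_right⟩
    have hIT : Icc a b ⊆ T' := hIccsub t0 ht0 t ht
    have hvI : IntegrableOn v (Icc a b) := hint a b hIT
    have hmeasIcc : MeasurableSet (Icc a b) := measurableSet_Icc
    have hξc : ContinuousOn ξ (Icc a b) := hξ.mono hIT
    have hIocsub : ∀ s ∈ Icc a b, uIoc t0 s ⊆ Icc a b := by
      intro s hs
      refine subset_trans (fun x hx => ?_) (ordConnected_Icc.uIcc_subset ht0I hs)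
      exact Ioc_subset_Icc_self hx
    obtain ⟨R, hR⟩ := isCompact_Icc.exists_bound_of_continuousOn hξc
    set K := Metric.closedBall (0 : E) (R + 1) with hKdef
    have hKconv : Convex ℝ K := convex_closedBall _ _
    have hKcp : IsCompact K := isCompact_closedBall 0 _
    have hξK : ∀ s ∈ Icc a b, ξ s ∈ K := by
      intro s hs
      simp only [hKdef, Metric.mem_closedBall, dist_zero_right]
      linarith [hR s hs]
    have hfd : Continuous (fderiv ℝ f) := hf.continuous_fderiv (by simp)
    obtain ⟨M₀, hM₀⟩ := hKcp.exists_bound_of_continuousOn hfd.continuousOn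
    set M := max M₀ 0 with hMdef
    have hM : ∀ x ∈ K, ‖fderiv ℝ f x‖ ≤ M := fun x hx => (hM₀ x hx).trans (le_max_left _ _)
    have hM0 : (0:ℝ) ≤ M := le_max_right _ _
    have hdiffa : ∀ x : E, DifferentiableAt ℝ f x := fun x => hf.differentiable (by simp) x
    -- integrability of the target integrand
    have h1m : AEStronglyMeasurable (fun s => fderiv ℝ f (ξ s)) (volume.restrict (Icc a b)) :=
      (hfd.comp_continuousOn hξc).aestronglyMeasurable hmeasIcc
    have hfvmeas : AEStronglyMeasurable (fun s => (fderiv ℝ f (ξ s)) (v s))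
        (volume.restrict (Icc a b)) :=
      isBoundedBilinearMap_apply.continuous.comp_aestronglyMeasurable
        (h1m.prodMk hvI.aestronglyMeasurable)
    have hfvI : IntegrableOn (fun s => (fderiv ℝ f (ξ s)) (v s)) (Icc a b) := by
      refine Integrable.mono' (hvI.norm.const_mul M) hfvmeas ?_
      filter_upwards [ae_restrict_mem hmeasIcc] with s hs
      calc ‖(fderiv ℝ f (ξ s)) (v s)‖ ≤ ‖fderiv ℝ f (ξ s)‖ * ‖v s‖ :=
            ContinuousLinearMap.le_opNorm _ _
        _ ≤ M * ‖v s‖ := by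
            exact mul_le_mul_of_nonneg_right (hM _ (hξK s hs)) (norm_nonneg _)
    have hfvint : IntervalIntegrable (fun s => (fderiv ℝ f (ξ s)) (v s)) volume t0 t := by
      rw [intervalIntegrable_iff]
      exact hfvI.mono_set Ioc_subset_Icc_self
    set V := ∫ s in Icc a b, ‖v s‖ with hVdef
    have hV0 : 0 ≤ V := setIntegral_nonneg hmeasIcc fun s _ => norm_nonneg _
    set D := f (ξ t) - (f (ξ t0) + ∫ s in t0..t, (fderiv ℝ f (ξ s)) (v s)) with hDdef
    have key : ∀ ε > (0:ℝ), ‖D‖ ≤ (2 * M + V) * ε := by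
      intro ε hε
      obtain ⟨δ, hδ0, hδ⟩ := Metric.uniformContinuousOn_iff.1
        (hKcp.uniformContinuousOn_of_continuous hfd.continuousOn) ε hε
      set ε' := min ε (min (δ / 2) 1) with hε'def
      have hε'pos : 0 < ε' := lt_min hε (lt_min (by linarith) one_pos)
      have hε'le : ε' ≤ ε := min_le_left _ _
      have hε'δ : ε' < δ := lt_of_le_of_lt ((min_le_right _ _).trans (min_le_left _ _)) (by linarith)
      have hε'1 : ε' ≤ 1 := (min_le_right _ _).trans (min_le_right _ _)
      have hw : Integrable ((Icc a b).indicator v) volume :=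
        (integrable_indicator_iff hmeasIcc).2 hvI
      obtain ⟨g, -, hgapprox, hgcont, hgint⟩ :=
        hw.exists_hasCompactSupport_integral_sub_le hε'pos
      have hIccapprox : ∫ s in Icc a b, ‖v s - g s‖ ≤ ε' := by
        calc ∫ s in Icc a b, ‖v s - g s‖
            = ∫ s in Icc a b, ‖(Icc a b).indicator v s - g s‖ := by
              refine setIntegral_congr_fun hmeasIcc fun s hs => ?_
              rw [indicator_of_mem hs]
          _ ≤ ∫ s, ‖(Icc a b).indicator v s - g s‖ :=
              setIntegral_le_integral (hw.sub hgint).norm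
                (Filter.Eventually.of_forall fun _ => norm_nonneg _)
          _ ≤ ε' := hgapprox
      set η : ℝ → E := fun s => ξ t0 + ∫ u in t0..s, g u with hηdef
      have hηd : ∀ s, HasDerivAt η (g s) s := fun s =>
        ((hgcont.integral_hasStrictDerivAt t0 s).hasDerivAt).const_add (ξ t0)
      have hηc : Continuous η := continuous_iff_continuousAt.2 fun s => (hηd s).continuousAt
      have hηt0 : η t0 = ξ t0 := by simp [hηdef]
      have hclose : ∀ s ∈ Icc a b, ‖η s - ξ s‖ ≤ ε' := by
        intro s hs
        have hODEs : ξ s = ξ t0 + ∫ u in t0..s, v u := hODE t0 ht0 s (hIT hs)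
        have hvints : IntervalIntegrable v volume t0 s :=
          intervalIntegrable_iff.2 (hvI.mono_set (hIocsub s hs))
        have hgints : IntervalIntegrable g volume t0 s := hgcont.intervalIntegrable _ _
        have heq : η s - ξ s = ∫ u in t0..s, (g u - v u) := by
          rw [hODEs, integral_sub hgints hvints]
          simp only [hηdef]
          abel
        rw [heq]
        calc ‖∫ u in t0..s, (g u - v u)‖ ≤ ∫ u in uIoc t0 s, ‖g u - v u‖ :=
              intervalIntegral.norm_integral_le_integral_norm_uIoc
          _ ≤ ∫ u in Icc a b, ‖g u - v u‖ := by
              refine setIntegral_mono_set ((hgint.integrableOn.sub hvI).norm)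
                (Filter.Eventually.of_forall fun _ => norm_nonneg _)
                ((hIocsub s hs).eventuallyLE)
          _ = ∫ u in Icc a b, ‖v u - g u‖ := by simp_rw [norm_sub_rev]
          _ ≤ ε' := hIccapprox
      have hηK : ∀ s ∈ Icc a b, η s ∈ K := by
        intro s hs
        simp only [hKdef, Metric.mem_closedBall, dist_zero_right]
        have hrw : η s = ξ s + (η s - ξ s) := by abel
        calc ‖η s‖ = ‖ξ s + (η s - ξ s)‖ := by rw [← hrw]
          _ ≤ ‖ξ s‖ + ‖η s - ξ s‖ := norm_add_le _ _
          _ ≤ R + 1 := add_le_add (hR s hs) ((hclose s hs).trans hε'1)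
      have hcontd : Continuous fun s => (fderiv ℝ f (η s)) (g s) :=
        (hfd.comp hηc).clm_apply hgcont
      have hFTC : f (η t) - f (η t0) = ∫ s in t0..t, (fderiv ℝ f (η s)) (g s) := by
        rw [intervalIntegral.integral_eq_sub_of_hasDerivAt
          (fun s _ => (hdiffa (η s)).hasFDerivAt.comp_hasDerivAt s (hηd s))
          (hcontd.intervalIntegrable t0 t)]
        rfl
      have hηgint : IntervalIntegrable (fun s => (fderiv ℝ f (η s)) (g s)) volume t0 t :=
        hcontd.intervalIntegrable _ _
      have keyeq : D = (f (ξ t) - f (η t)) +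
          ∫ s in t0..t, ((fderiv ℝ f (η s)) (g s) - (fderiv ℝ f (ξ s)) (v s)) := by
        rw [integral_sub hηgint hfvint, ← hFTC, hηt0, hDdef]
        ring
      have h1 : ‖f (ξ t) - f (η t)‖ ≤ M * ε' := by
        calc ‖f (ξ t) - f (η t)‖ ≤ M * ‖ξ t - η t‖ :=
              hKconv.norm_image_sub_le_of_norm_fderiv_le (fun x _ => hdiffa x) hM
                (hηK t htI) (hξK t htI)
          _ ≤ M * ε' := by
              refine mul_le_mul_of_nonneg_left ?_ hM0
              rw [norm_sub_rev]
              exact hclose t htI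
      have hptwise : ∀ s ∈ Icc a b,
          ‖(fderiv ℝ f (η s)) (g s) - (fderiv ℝ f (ξ s)) (v s)‖
            ≤ M * ‖v s - g s‖ + ε * ‖v s‖ := by
        intro s hs
        have tri : ‖(fderiv ℝ f (η s)) (g s) - (fderiv ℝ f (ξ s)) (v s)‖
            ≤ ‖(fderiv ℝ f (η s)) (g s) - (fderiv ℝ f (η s)) (v s)‖ +
              ‖(fderiv ℝ f (η s)) (v s) - (fderiv ℝ f (ξ s)) (v s)‖ := by
          have := norm_add_le ((fderiv ℝ f (η s)) (g s) - (fderiv ℝ f (η s)) (v s))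
            ((fderiv ℝ f (η s)) (v s) - (fderiv ℝ f (ξ s)) (v s))
          simpa using this
        refine tri.trans (add_le_add ?_ ?_)
        · calc ‖(fderiv ℝ f (η s)) (g s) - (fderiv ℝ f (η s)) (v s)‖
              = ‖(fderiv ℝ f (η s)) (g s - v s)‖ := by rw [map_sub]
            _ ≤ ‖fderiv ℝ f (η s)‖ * ‖g s - v s‖ := ContinuousLinearMap.le_opNorm _ _
            _ ≤ M * ‖v s - g s‖ := by
                rw [norm_sub_rev (g s)]
                exact mul_le_mul_of_nonneg_right (hM _ (hηK s hs)) (norm_nonneg _)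
        · calc ‖(fderiv ℝ f (η s)) (v s) - (fderiv ℝ f (ξ s)) (v s)‖
              = ‖(fderiv ℝ f (η s) - fderiv ℝ f (ξ s)) (v s)‖ := by
                rw [ContinuousLinearMap.sub_apply]
            _ ≤ ‖fderiv ℝ f (η s) - fderiv ℝ f (ξ s)‖ * ‖v s‖ :=
                ContinuousLinearMap.le_opNorm _ _
            _ ≤ ε * ‖v s‖ := by
                refine mul_le_mul_of_nonneg_right ?_ (norm_nonneg _)
                have hd := hδ (η s) (hηK s hs) (ξ s) (hξK s hs)
                  (by rw [dist_eq_norm]; exact lt_of_le_of_lt (hclose s hs) hε'δ)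
                rw [dist_eq_norm] at hd
                exact hd.le
      have hηgI : IntegrableOn (fun s => (fderiv ℝ f (η s)) (g s)) (Icc a b) :=
        hcontd.integrableOn_Icc
      have h2 : ‖∫ s in t0..t, ((fderiv ℝ f (η s)) (g s) - (fderiv ℝ f (ξ s)) (v s))‖
          ≤ ∫ s in Icc a b, ‖(fderiv ℝ f (η s)) (g s) - (fderiv ℝ f (ξ s)) (v s)‖ := by
        refine intervalIntegral.norm_integral_le_integral_norm_uIoc.trans ?_
        exact setIntegral_mono_set ((hηgI.sub hfvI).norm)
          (Filter.Eventually.of_forall fun _ => norm_nonneg _)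
          (Ioc_subset_Icc_self.eventuallyLE)
      have hi1 : IntegrableOn (fun s => M * ‖v s - g s‖) (Icc a b) :=
        (hvI.sub hgint.integrableOn).norm.const_mul M
      have hi2 : IntegrableOn (fun s => ε * ‖v s‖) (Icc a b) := hvI.norm.const_mul ε
      have h3 : ∫ s in Icc a b, ‖(fderiv ℝ f (η s)) (g s) - (fderiv ℝ f (ξ s)) (v s)‖
          ≤ M * ε' + ε * V := by
        calc ∫ s in Icc a b, ‖(fderiv ℝ f (η s)) (g s) - (fderiv ℝ f (ξ s)) (v s)‖
            ≤ ∫ s in Icc a b, (M * ‖v s - g s‖ + ε * ‖v s‖) := by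
              exact setIntegral_mono_on ((hηgI.sub hfvI).norm) (hi1.add hi2) hmeasIcc hptwise
          _ = M * (∫ s in Icc a b, ‖v s - g s‖) + ε * V := by
              rw [integral_add hi1 hi2, MeasureTheory.integral_const_mul, MeasureTheory.integral_const_mul]
          _ ≤ M * ε' + ε * V := by
              refine add_le_add (mul_le_mul_of_nonneg_left hIccapprox hM0) le_rfl
      calc ‖D‖ ≤ ‖f (ξ t) - f (η t)‖ +
            ‖∫ s in t0..t, ((fderiv ℝ f (η s)) (g s) - (fderiv ℝ f (ξ s)) (v s))‖ := by
            rw [keyeq]; exact norm_add_le _ _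
        _ ≤ M * ε' + (M * ε' + ε * V) := add_le_add h1 (h2.trans h3)
        _ ≤ (2 * M + V) * ε := by nlinarith [mul_le_mul_of_nonneg_left hε'le hM0]
    have hD0 : D = 0 := by
      rw [← norm_le_zero_iff]
      refine le_of_forall_pos_le_add fun ε hε => ?_
      have hC : (0:ℝ) < 2 * M + V + 1 := by linarith
      have := key (ε / (2 * M + V + 1)) (by positivity)
      calc ‖D‖ ≤ (2 * M + V) * (ε / (2 * M + V + 1)) := this
        _ ≤ ε := by
            rw [div_eq_inv_mul, ← mul_assoc]
            have h1 : (2 * M + V) * (2 * M + V + 1)⁻¹ ≤ 1 := by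
              rw [mul_inv_le_iff₀ hC]; linarith
            nlinarith
        _ ≤ 0 + ε := by linarith
    have := sub_eq_zero.1 hD0
    linarith [this]
  · intro h t0 ht0 t ht
    rw [NormedSpace.eq_iff_forall_dual_eq ℝ]
    intro g
    have hg := h g (ContinuousLinearMap.contDiff g) t0 ht0 t ht
    simp only [ContinuousLinearMap.fderiv] at hg
    rw [map_add, ← ContinuousLinearMap.intervalIntegral_comp_comm g (hvint t0 ht0 t ht)]
    exact hg
end

section
/- Let E be a real Banach space, P a topological space, T ⊆ ℝ an interval, t0 ∈ T, x0 ∈ E, p0 ∈ P, and X : ℝ × E × P → E. Suppose there exist r > 0, α > 0, λ ∈ (0,1), an open neighbourhood O of p0, and integrable functions h, ℓ : ℝ → ℝ on I := T ∩ [t0 − α, t0 + α] such that, with B := closedBall x0 (2r): (i) for every x ∈ B and p ∈ O, s ↦ X(s, x, p) is measurable on I; (ii) for every s ∈ I and p ∈ O, y ↦ X(s, y, p) is continuous on B; (iii) ‖X(s, y, p)‖ ≤ h(s) for all s ∈ I, y ∈ B, p ∈ O, and ∫_I h(s) ds < r; (iv) ‖X(s, x1, p) − X(s, x2, p)‖ ≤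 ℓ(s) ‖x1 − x2‖ for all s ∈ I, x1, x2 ∈ B, p ∈ O, and ∫_I ℓ(s) ds ≤ λ. For x ∈ closedBall x0 r and p ∈ O let Φ(·, x, p) : I → E denote the unique continuous curve with ‖Φ(t, x, p) − x‖ ≤ r for all t ∈ I and Φ(t, x, p) = x + ∫_{t0}^{t} X(s, Φ(s, x, p), p) ds. Then for every t ∈ I, every p ∈ O, and all x1, x2 ∈ closedBall x0 r: ‖Φ(t, x1, p) − Φ(t, x2, p)‖ ≤ (1 − λ)⁻¹ ‖x1 − x2‖. -/
open Set MeasureTheory intervalIntegral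

/-! Subtracting the integral equations of the two solutions and using the Lipschitz bound
gives `‖Φ u x₁ p - Φ u x₂ p‖ ≤ ‖x₁ - x₂‖ + λ S` for every `u ∈ I`, where `S` is the supremum
of `‖Φ · x₁ p - Φ · x₂ p‖` over `I` (finite, since both curves stay within `r` of their
starting points). Taking the supremum on the left gives `(1 - λ) S ≤ ‖x₁ - x₂‖`. -/

lemma csSup_le_inv_one_sub_mul_of_le_add_mul {s : Set ℝ} (hne : s.Nonempty) {a lam : ℝ}
    (hlam : lam < 1) (h : ∀ y ∈ s, y ≤ a + lam * sSup s) :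
    sSup s ≤ (1 - lam)⁻¹ * a := by
  have hsup := csSup_le hne h
  rw [inv_mul_eq_div, le_div_iff₀ (sub_pos.2 hlam)]
  linarith

section IntegralEquation

variable {E : Type*} [NormedAddCommGroup E] [NormedSpace ℝ E] {I : Set ℝ} {t0 u : ℝ}

lemma norm_intervalIntegral_le_setIntegral_of_ordConnected (hI : I.OrdConnected)
    (ht0 : t0 ∈ I) (hu : u ∈ I) {g : ℝ → E} {k : ℝ → ℝ} (hg : IntegrableOn g I)
    (hk : IntegrableOn k I) (hk0 : ∀ s ∈ I, 0 ≤ k s) (hgk : ∀ s ∈ I, ‖g s‖ ≤ k s) :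
    ‖∫ s in t0..u, g s‖ ≤ ∫ s in I, k s := by
  have hsub : uIoc t0 u ⊆ I := uIoc_subset_uIcc.trans (hI.uIcc_subset ht0 hu)
  calc ‖∫ s in t0..u, g s‖ ≤ ∫ s in uIoc t0 u, ‖g s‖ := norm_integral_le_integral_norm_uIoc
    _ ≤ ∫ s in uIoc t0 u, k s :=
      setIntegral_mono_on (hg.mono_set hsub).norm (hk.mono_set hsub) measurableSet_uIoc
        fun s hs => hgk s (hsub hs)
    _ ≤ ∫ s in I, k s :=
      setIntegral_mono_set hk ((ae_restrict_iff' hI.measurableSet).2 (ae_of_all _ hk0))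
        hsub.eventuallyLE

variable {F : ℝ → E → E} {γ₁ γ₂ : ℝ → E} {x₁ x₂ : E} {ℓ : ℝ → ℝ} {lam : ℝ}

lemma norm_sub_le_add_mul_of_integral_eq (hI : I.OrdConnected) (ht0 : t0 ∈ I)
    (hγ₁ : ∀ u ∈ I, γ₁ u = x₁ + ∫ s in t0..u, F s (γ₁ s))
    (hγ₂ : ∀ u ∈ I, γ₂ u = x₂ + ∫ s in t0..u, F s (γ₂ s))
    (hF₁ : IntegrableOn (fun s => F s (γ₁ s)) I) (hF₂ : IntegrableOn (fun s => F s (γ₂ s)) I)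
    (hℓint : IntegrableOn ℓ I) (hℓ0 : ∀ s ∈ I, 0 ≤ ℓ s) (hℓ : ∫ s in I, ℓ s ≤ lam)
    (hlip : ∀ s ∈ I, ‖F s (γ₁ s) - F s (γ₂ s)‖ ≤ ℓ s * ‖γ₁ s - γ₂ s‖)
    {S : ℝ} (hS : ∀ s ∈ I, ‖γ₁ s - γ₂ s‖ ≤ S) (hu : u ∈ I) :
    ‖γ₁ u - γ₂ u‖ ≤ ‖x₁ - x₂‖ + lam * S := by
  have hS0 : 0 ≤ S := (norm_nonneg _).trans (hS t0 ht0)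
  have hint : ∀ {γ : ℝ → E}, IntegrableOn (fun s => F s (γ s)) I →
      IntervalIntegrable (fun s => F s (γ s)) volume t0 u := fun h =>
    (h.mono_set (hI.uIcc_subset ht0 hu)).intervalIntegrable
  have hdiff : γ₁ u - γ₂ u = (x₁ - x₂) + ∫ s in t0..u, (F s (γ₁ s) - F s (γ₂ s)) := by
    rw [hγ₁ u hu, hγ₂ u hu, integral_sub (hint hF₁) (hint hF₂)]
    abel
  have hdrift : ‖∫ s in t0..u, (F s (γ₁ s) - F s (γ₂ s))‖ ≤ lam * S :=
    calc ‖∫ s in t0..u, (F s (γ₁ s) - F s (γ₂ s))‖ ≤ ∫ s in I, ℓ s * S :=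
          norm_intervalIntegral_le_setIntegral_of_ordConnected hI ht0 hu (hF₁.sub hF₂)
            (hℓint.mul_const S) (fun s hs => mul_nonneg (hℓ0 s hs) hS0)
            fun s hs => (hlip s hs).trans (mul_le_mul_of_nonneg_left (hS s hs) (hℓ0 s hs))
      _ = (∫ s in I, ℓ s) * S := integral_mul_const S ℓ
      _ ≤ lam * S := mul_le_mul_of_nonneg_right hℓ hS0
  rw [hdiff]
  exact (norm_add_le _ _).trans (add_le_add_right hdrift _)

lemma norm_sub_le_of_integral_eq (hI : I.OrdConnected) (ht0 : t0 ∈ I)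
    (hγ₁ : ∀ u ∈ I, γ₁ u = x₁ + ∫ s in t0..u, F s (γ₁ s))
    (hγ₂ : ∀ u ∈ I, γ₂ u = x₂ + ∫ s in t0..u, F s (γ₂ s))
    (hF₁ : IntegrableOn (fun s => F s (γ₁ s)) I) (hF₂ : IntegrableOn (fun s => F s (γ₂ s)) I)
    (hℓint : IntegrableOn ℓ I) (hℓ0 : ∀ s ∈ I, 0 ≤ ℓ s) (hℓ : ∫ s in I, ℓ s ≤ lam)
    (hlam : lam < 1) (hlip : ∀ s ∈ I, ‖F s (γ₁ s) - F s (γ₂ s)‖ ≤ ℓ s * ‖γ₁ s - γ₂ s‖)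
    (hbdd : BddAbove ((fun s => ‖γ₁ s - γ₂ s‖) '' I)) (hu : u ∈ I) :
    ‖γ₁ u - γ₂ u‖ ≤ (1 - lam)⁻¹ * ‖x₁ - x₂‖ := by
  have hS : ∀ s ∈ I, ‖γ₁ s - γ₂ s‖ ≤ sSup ((fun s => ‖γ₁ s - γ₂ s‖) '' I) :=
    fun s hs => le_csSup hbdd (mem_image_of_mem _ hs)
  refine (hS u hu).trans
    (csSup_le_inv_one_sub_mul_of_le_add_mul ((nonempty_of_mem ht0).image _) hlam ?_)
  rintro _ ⟨v, hv, rfl⟩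
  exact norm_sub_le_add_mul_of_integral_eq hI ht0 hγ₁ hγ₂ hF₁ hF₂ hℓint hℓ0 hℓ hlip hS hv

end IntegralEquation

theorem local_flow_lipschitz_in_state_general
    {E P : Type*} [NormedAddCommGroup E] [NormedSpace ℝ E]
    (T : Set ℝ) (hT : T.OrdConnected) (t0 : ℝ) (ht0 : t0 ∈ T)
    (x0 : E) (X : ℝ → E → P → E)
    (r α lam : ℝ) (hα : 0 < α) (hlam1 : lam < 1)
    (O : Set P)
    (I : Set ℝ) (B : Set E)
    (hI : I = T ∩ Icc (t0 - α) (t0 + α)) (hB : B = Metric.closedBall x0 (2 * r))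
    (ℓ : ℝ → ℝ) (hℓint : IntegrableOn ℓ I)
    (hXlip : ∀ s ∈ I, ∀ x1 ∈ B, ∀ x2 ∈ B, ∀ p ∈ O,
      ‖X s x1 p - X s x2 p‖ ≤ ℓ s * ‖x1 - x2‖)
    (hℓsmall : ∫ s in I, ℓ s ≤ lam)
    (Φ : ℝ → E → P → E)
    (hΦ : ∀ x ∈ Metric.closedBall x0 r, ∀ p ∈ O,
      ContinuousOn (fun t => Φ t x p) I ∧ (∀ t ∈ I, ‖Φ t x p - x‖ ≤ r) ∧
      IntegrableOn (fun s => X s (Φ s x p) p) I ∧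
      ∀ t ∈ I, Φ t x p = x + ∫ s in t0..t, X s (Φ s x p) p) :
    ∀ t ∈ I, ∀ p ∈ O, ∀ x1 ∈ Metric.closedBall x0 r, ∀ x2 ∈ Metric.closedBall x0 r,
      ‖Φ t x1 p - Φ t x2 p‖ ≤ (1 - lam)⁻¹ * ‖x1 - x2‖ := by
  intro t ht p hp x1 hx1 x2 hx2
  -- for `x1 ≠ x2`, the Lipschitz bound at these two points forces `0 ≤ ℓ` on `I`
  rcases eq_or_ne x1 x2 with rfl | hx12
  · simp
  obtain ⟨-, hbd1, hint1, heq1⟩ := hΦ x1 hx1 p hp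
  obtain ⟨-, hbd2, hint2, heq2⟩ := hΦ x2 hx2 p hp
  have hIord : I.OrdConnected := hI ▸ hT.inter ordConnected_Icc
  have ht0I : t0 ∈ I := hI ▸ ⟨ht0, by linarith, by linarith⟩
  have hr : 0 ≤ r := Metric.nonempty_closedBall.1 ⟨x1, hx1⟩
  have hflowB : ∀ x ∈ Metric.closedBall x0 r, (∀ s ∈ I, ‖Φ s x p - x‖ ≤ r) →
      ∀ s ∈ I, Φ s x p ∈ B := fun x hx hbd s hs =>
    hB ▸ Metric.closedBall_subset_closedBall' (by rw [Metric.mem_closedBall] at hx; linarith)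
      (mem_closedBall_iff_norm.2 (hbd s hs))
  have hℓ0 : ∀ s ∈ I, 0 ≤ ℓ s := fun s hs => by
    have hball : Metric.closedBall x0 r ⊆ B :=
      hB ▸ Metric.closedBall_subset_closedBall (by linarith)
    have hlip := (norm_nonneg _).trans (hXlip s hs x1 (hball hx1) x2 (hball hx2) p hp)
    exact nonneg_of_mul_nonneg_left hlip (norm_pos_iff.2 (sub_ne_zero.2 hx12))
  have hbdd : BddAbove ((fun s => ‖Φ s x1 p - Φ s x2 p‖) '' I) := by
    refine ⟨2 * r + 2 * r, ?_⟩
    rintro _ ⟨s, hs, rfl⟩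
    have h1 := mem_closedBall_iff_norm.1 (hB ▸ hflowB x1 hx1 hbd1 s hs)
    have h2 := mem_closedBall_iff_norm'.1 (hB ▸ hflowB x2 hx2 hbd2 s hs)
    exact (norm_sub_le_norm_sub_add_norm_sub _ x0 _).trans (add_le_add h1 h2)
  exact norm_sub_le_of_integral_eq (F := fun s y => X s y p) hIord ht0I heq1 heq2 hint1 hint2
    hℓint hℓ0 hℓsmall hlam1
    (fun s hs => hXlip s hs _ (hflowB x1 hx1 hbd1 s hs) _ (hflowB x2 hx2 hbd2 s hs) p hp) hbdd ht

/-- Part (i) of the paper's Lemma 3.6 in the Banach-space local model: the fixed-time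
local flow map `x ↦ Φ t x p` is Lipschitz with constant `(1 - λ)⁻¹`, uniformly in
`t ∈ I` and `p ∈ O`. -/
theorem local_flow_lipschitz_in_state
    {E P : Type*} [NormedAddCommGroup E] [NormedSpace ℝ E] [CompleteSpace E]
    [TopologicalSpace P]
    (T : Set ℝ) (hT : T.OrdConnected) (t0 : ℝ) (ht0 : t0 ∈ T)
    (x0 : E) (p0 : P) (X : ℝ → E → P → E)
    (r α lam : ℝ) (hr : 0 < r) (hα : 0 < α) (hlam0 : 0 < lam) (hlam1 : lam < 1)
    (O : Set P) (hO : IsOpen O) (hp0 : p0 ∈ O)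
    (I : Set ℝ) (B : Set E)
    (hI : I = T ∩ Icc (t0 - α) (t0 + α)) (hB : B = Metric.closedBall x0 (2 * r))
    (h ℓ : ℝ → ℝ) (hhint : IntegrableOn h I) (hℓint : IntegrableOn ℓ I)
    (hXmeas : ∀ x ∈ B, ∀ p ∈ O,
      AEStronglyMeasurable (fun s => X s x p) (volume.restrict I))
    (hXcont : ∀ s ∈ I, ∀ p ∈ O, ContinuousOn (fun y => X s y p) B)
    (hXbd : ∀ s ∈ I, ∀ y ∈ B, ∀ p ∈ O, ‖X s y p‖ ≤ h s)
    (hhsmall : ∫ s in I, h s < r)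
    (hXlip : ∀ s ∈ I, ∀ x1 ∈ B, ∀ x2 ∈ B, ∀ p ∈ O,
      ‖X s x1 p - X s x2 p‖ ≤ ℓ s * ‖x1 - x2‖)
    (hℓsmall : ∫ s in I, ℓ s ≤ lam)
    (Φ : ℝ → E → P → E)
    (hΦ : ∀ x ∈ Metric.closedBall x0 r, ∀ p ∈ O,
      ContinuousOn (fun t => Φ t x p) I ∧ (∀ t ∈ I, ‖Φ t x p - x‖ ≤ r) ∧
      IntegrableOn (fun s => X s (Φ s x p) p) I ∧
      ∀ t ∈ I, Φ t x p = x + ∫ s in t0..t, X s (Φ s x p) p) :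
    ∀ t ∈ I, ∀ p ∈ O, ∀ x1 ∈ Metric.closedBall x0 r, ∀ x2 ∈ Metric.closedBall x0 r,
      ‖Φ t x1 p - Φ t x2 p‖ ≤ (1 - lam)⁻¹ * ‖x1 - x2‖ :=
  local_flow_lipschitz_in_state_general T hT t0 ht0 x0 X r α lam hα hlam1 O I B hI hB ℓ hℓint hXlip
    hℓsmall Φ hΦ
end

section
/- Let E be a real Banach space, P a topological space, T ⊆ ℝ an interval, t0 ∈ T, x0 ∈ E, p0 ∈ P, and X : ℝ × E × P → E. Suppose there exist r > 0, α > 0, λ ∈ (0,1), an open neighbourhood O of p0, and integrable functions h, ℓ : ℝ → ℝ on I := T ∩ [t0 − α, t0 + α] such that, with B := closedBall x0 (2r): (i) for every x ∈ B and p ∈ O, s ↦ X(s, x, p) is measurable on I; (ii) for every s ∈ I and p ∈ O, y ↦ X(s, y, p) is continuous on B; (iii) ‖X(s, y, p)‖ ≤ h(s) for all s ∈ I, y ∈ B, p ∈ O, and ∫_I h(s) ds < r; (iv) ‖X(s, x1, p) − X(s, x2, p)‖ ≤ ℓ(s) ‖x1 − x2‖ for all s ∈ I, x1, x2 ∈ B,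 p ∈ O, and ∫_I ℓ(s) ds ≤ λ. For x ∈ closedBall x0 r and p ∈ O let Φ(·, x, p) : I → E be the unique continuous curve with ‖Φ(t, x, p) − x‖ ≤ r on I and Φ(t, x, p) = x + ∫_{t0}^{t} X(s, Φ(s, x, p), p) ds. Then there exist r'' ∈ (0, r], α'' ∈ (0, α], a neighbourhood O'' ⊆ O of p0, and a constant C ≥ 1 such that for every t ∈ T ∩ [t0 − α'', t0 + α''] and every p ∈ O'', the map x ↦ Φ(t, x, p) is injective on closedBall x0 r'' and satisfies C⁻¹ ‖x1 − x2‖ ≤ ‖Φ(t, x1, p) − Φ(t, x2, p)‖ ≤ C ‖x1 − x2‖ for all x1, x2 ∈ closedBall x0 r''. -/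
/-!
Two solutions of the integral equation differ, after time `t`, from their initial difference by
`∫_{t0}^{t} (X(s, Φ₁) - X(s, Φ₂)) ds`, whose norm is at most `(∫ |ℓ|) · sup ‖Φ₁ - Φ₂‖`. By absolute
continuity of the integral, shrinking the time window makes `∫ |ℓ| ≤ 1/3`; then
`sup ≤ ‖x₁ - x₂‖ + sup / 3` bounds the supremum by `3/2 ‖x₁ - x₂‖`, so the flow map is a
perturbation of the identity by a `1/2`-Lipschitz map, hence bi-Lipschitz with constant `2`.
-/

open Set Filter Topology MeasureTheory intervalIntegral
open scoped Interval

section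

variable {E : Type*} [NormedAddCommGroup E]

theorem eventually_setIntegral_norm_Icc_inter_lt {f : ℝ → E} {I : Set ℝ} (hf : IntegrableOn f I)
    (t0 : ℝ) {ε : ℝ} (hε : 0 < ε) :
    ∀ᶠ δ in 𝓝[>] (0 : ℝ), ∫ s in Icc (t0 - δ) (t0 + δ) ∩ I, ‖f s‖ < ε := by
  have hvol : Tendsto (fun δ : ℝ => volume.restrict I (Icc (t0 - δ) (t0 + δ))) (𝓝[>] 0) (𝓝 0) := by
    refine tendsto_of_tendsto_of_tendsto_of_le_of_le tendsto_const_nhds ?_ (fun _ => bot_le)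
      fun δ => Measure.restrict_apply_le _ _
    simp only [Real.volume_Icc]
    refine ENNReal.ofReal_zero ▸ (ENNReal.tendsto_ofReal ?_).mono_left nhdsWithin_le_nhds
    exact Continuous.tendsto' (by fun_prop) 0 0 (by ring)
  filter_upwards [(hf.norm.tendsto_setIntegral_nhds_zero hvol).eventually (gt_mem_nhds hε)]
    with δ hδ
  rwa [Measure.restrict_restrict measurableSet_Icc] at hδ

theorem bddAbove_image_norm_sub_of_mapsTo {α : Type*} {S : Set α} {γ₁ γ₂ : α → E} {x0 : E}
    {R : ℝ} (h₁ : MapsTo γ₁ S (Metric.closedBall x0 R)) (h₂ : MapsTo γ₂ S (Metric.closedBall x0 R)) :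
    BddAbove ((fun s => ‖γ₁ s - γ₂ s‖) '' S) := by
  refine ⟨R + R, ?_⟩
  rintro _ ⟨s, hs, rfl⟩
  exact (dist_eq_norm _ _).symm.trans_le
    ((dist_triangle_right _ _ x0).trans (add_le_add (h₁ hs) (h₂ hs)))

section IntegralEquation

variable [NormedSpace ℝ E] {S : Set ℝ} {t0 : ℝ} {x₁ x₂ : E} {γ₁ γ₂ f₁ f₂ : ℝ → E} {L : ℝ → ℝ}

theorem norm_sub_sub_le_integral_norm_mul (hS : S.OrdConnected) (ht0 : t0 ∈ S)
    (hf₁ : IntegrableOn f₁ S) (hf₂ : IntegrableOn f₂ S) (hL : IntegrableOn L S)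
    (hγ₁ : ∀ t ∈ S, γ₁ t = x₁ + ∫ s in t0..t, f₁ s)
    (hγ₂ : ∀ t ∈ S, γ₂ t = x₂ + ∫ s in t0..t, f₂ s)
    (hlip : ∀ s ∈ S, ‖f₁ s - f₂ s‖ ≤ L s * ‖γ₁ s - γ₂ s‖)
    {M : ℝ} (hM : ∀ s ∈ S, ‖γ₁ s - γ₂ s‖ ≤ M) {t : ℝ} (ht : t ∈ S) :
    ‖(γ₁ t - γ₂ t) - (x₁ - x₂)‖ ≤ (∫ s in S, ‖L s‖) * M := by
  have hΙ : Ι t0 t ⊆ S := uIoc_subset_uIcc.trans (hS.uIcc_subset ht0 ht)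
  have hM0 : 0 ≤ M := (norm_nonneg _).trans (hM t ht)
  have hdiff : (γ₁ t - γ₂ t) - (x₁ - x₂) = ∫ s in t0..t, (f₁ s - f₂ s) := by
    rw [hγ₁ t ht, hγ₂ t ht, integral_sub (intervalIntegrable_iff.2 (hf₁.mono_set hΙ))
      (intervalIntegrable_iff.2 (hf₂.mono_set hΙ))]
    abel
  have hpoint : ∀ s ∈ S, ‖f₁ s - f₂ s‖ ≤ ‖L s‖ * M := fun s hs =>
    calc ‖f₁ s - f₂ s‖ ≤ L s * ‖γ₁ s - γ₂ s‖ := hlip s hs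
      _ ≤ ‖L s‖ * ‖γ₁ s - γ₂ s‖ := by gcongr; exact le_abs_self _
      _ ≤ ‖L s‖ * M := by gcongr; exact hM s hs
  calc ‖(γ₁ t - γ₂ t) - (x₁ - x₂)‖ ≤ ∫ s in Ι t0 t, ‖f₁ s - f₂ s‖ := by
        rw [hdiff]; exact norm_integral_le_integral_norm_uIoc
    _ ≤ ∫ s in Ι t0 t, ‖L s‖ * M :=
        setIntegral_mono_on (IntegrableOn.mono_set (hf₁.sub hf₂).norm hΙ)
          (IntegrableOn.mono_set (hL.norm.mul_const M) hΙ)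
          measurableSet_uIoc fun s hs => hpoint s (hΙ hs)
    _ ≤ ∫ s in S, ‖L s‖ * M :=
        setIntegral_mono_set (hL.norm.mul_const M)
          (.of_forall fun s => mul_nonneg (norm_nonneg _) hM0) hΙ.eventuallyLE
    _ = (∫ s in S, ‖L s‖) * M := integral_mul_const M _

theorem norm_sub_sub_le_of_integral_eq (hS : S.OrdConnected) (ht0 : t0 ∈ S)
    (hf₁ : IntegrableOn f₁ S) (hf₂ : IntegrableOn f₂ S) (hL : IntegrableOn L S)
    (hγ₁ : ∀ t ∈ S, γ₁ t = x₁ + ∫ s in t0..t, f₁ s)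
    (hγ₂ : ∀ t ∈ S, γ₂ t = x₂ + ∫ s in t0..t, f₂ s)
    (hlip : ∀ s ∈ S, ‖f₁ s - f₂ s‖ ≤ L s * ‖γ₁ s - γ₂ s‖)
    (hbdd : BddAbove ((fun s => ‖γ₁ s - γ₂ s‖) '' S)) {κ : ℝ} (hLκ : ∫ s in S, ‖L s‖ ≤ κ)
    (hκ : κ < 1) {t : ℝ} (ht : t ∈ S) :
    ‖(γ₁ t - γ₂ t) - (x₁ - x₂)‖ ≤ κ / (1 - κ) * ‖x₁ - x₂‖ := by
  set M := sSup ((fun s => ‖γ₁ s - γ₂ s‖) '' S)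
  have hdev := fun {u} (hu : u ∈ S) => norm_sub_sub_le_integral_norm_mul hS ht0 hf₁ hf₂ hL hγ₁ hγ₂
    hlip (fun s hs => le_csSup hbdd (mem_image_of_mem _ hs)) hu
  have hM : 0 ≤ M := (norm_nonneg _).trans (le_csSup hbdd (mem_image_of_mem _ ht))
  have hκ0 : 0 ≤ κ := (integral_nonneg fun _ => norm_nonneg _).trans hLκ
  have hMself : M ≤ ‖x₁ - x₂‖ + κ * M := by
    refine csSup_le ⟨_, mem_image_of_mem _ ht⟩ ?_
    rintro _ ⟨u, hu, rfl⟩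
    calc ‖γ₁ u - γ₂ u‖ ≤ ‖x₁ - x₂‖ + ‖(γ₁ u - γ₂ u) - (x₁ - x₂)‖ := norm_le_norm_add_norm_sub' _ _
      _ ≤ ‖x₁ - x₂‖ + κ * M := by gcongr; exact (hdev hu).trans (by gcongr)
  have hMle : M ≤ ‖x₁ - x₂‖ / (1 - κ) := by
    rw [le_div_iff₀ (sub_pos.2 hκ)]; linarith
  calc ‖(γ₁ t - γ₂ t) - (x₁ - x₂)‖ ≤ κ * M := (hdev ht).trans (by gcongr)
    _ ≤ κ * (‖x₁ - x₂‖ / (1 - κ)) := by gcongr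
    _ = κ / (1 - κ) * ‖x₁ - x₂‖ := by ring

end IntegralEquation

theorem injOn_and_biLipschitz_of_norm_sub_sub_le {s : Set E} {g : E → E} {c : ℝ} (hc : c < 1)
    (hg : ∀ x ∈ s, ∀ y ∈ s, ‖(g x - g y) - (x - y)‖ ≤ c * ‖x - y‖) :
    InjOn g s ∧ ∀ x ∈ s, ∀ y ∈ s,
      (1 - c) * ‖x - y‖ ≤ ‖g x - g y‖ ∧ ‖g x - g y‖ ≤ (1 - c)⁻¹ * ‖x - y‖ := by
  have hbounds : ∀ x ∈ s, ∀ y ∈ s,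
      (1 - c) * ‖x - y‖ ≤ ‖g x - g y‖ ∧ ‖g x - g y‖ ≤ (1 - c)⁻¹ * ‖x - y‖ := by
    intro x hx y hy
    obtain ⟨hlow, hup⟩ := abs_le.1 ((abs_norm_sub_norm_le _ _).trans (hg x hx y hy))
    have hupper : (1 + c) * ‖x - y‖ ≤ (1 - c)⁻¹ * ‖x - y‖ := by
      gcongr
      rw [← one_div, le_div_iff₀ (sub_pos.2 hc)]
      nlinarith [sq_nonneg c]
    constructor <;> linarith
  refine ⟨fun x hx y hy hxy => ?_, hbounds⟩
  have h := (hbounds x hx y hy).1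
  rw [hxy, sub_self, norm_zero] at h
  exact sub_eq_zero.1 (norm_le_zero_iff.1
    (nonpos_of_mul_nonpos_right h (sub_pos.2 hc)))

end

theorem local_flow_biLipschitz_in_state_general
    {E P : Type*} [NormedAddCommGroup E] [NormedSpace ℝ E]
    [TopologicalSpace P]
    (T : Set ℝ) (hT : T.OrdConnected) (t0 : ℝ) (ht0 : t0 ∈ T)
    (x0 : E) (p0 : P) (X : ℝ → E → P → E)
    (r α : ℝ) (hr : 0 < r) (hα : 0 < α)
    (O : Set P) (hO : IsOpen O) (hp0 : p0 ∈ O)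
    (I : Set ℝ) (B : Set E)
    (hI : I = T ∩ Icc (t0 - α) (t0 + α)) (hB : B = Metric.closedBall x0 (2 * r))
    (ℓ : ℝ → ℝ) (hℓint : IntegrableOn ℓ I)
    (hXlip : ∀ s ∈ I, ∀ x1 ∈ B, ∀ x2 ∈ B, ∀ p ∈ O,
      ‖X s x1 p - X s x2 p‖ ≤ ℓ s * ‖x1 - x2‖)
    (Φ : ℝ → E → P → E)
    (hΦ : ∀ x ∈ Metric.closedBall x0 r, ∀ p ∈ O,
      ContinuousOn (fun t => Φ t x p) I ∧ (∀ t ∈ I, ‖Φ t x p - x‖ ≤ r) ∧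
      IntegrableOn (fun s => X s (Φ s x p) p) I ∧
      ∀ t ∈ I, Φ t x p = x + ∫ s in t0..t, X s (Φ s x p) p) :
    ∃ r'' : ℝ, r'' ∈ Ioc (0 : ℝ) r ∧ ∃ α'' : ℝ, α'' ∈ Ioc (0 : ℝ) α ∧
      ∃ O'' : Set P, IsOpen O'' ∧ p0 ∈ O'' ∧ O'' ⊆ O ∧ ∃ C : ℝ, 1 ≤ C ∧
      ∀ t ∈ T ∩ Icc (t0 - α'') (t0 + α''), ∀ p ∈ O'',
        InjOn (fun x => Φ t x p) (Metric.closedBall x0 r'') ∧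
        ∀ x1 ∈ Metric.closedBall x0 r'', ∀ x2 ∈ Metric.closedBall x0 r'',
          C⁻¹ * ‖x1 - x2‖ ≤ ‖Φ t x1 p - Φ t x2 p‖ ∧
          ‖Φ t x1 p - Φ t x2 p‖ ≤ C * ‖x1 - x2‖ := by
  subst hB
  obtain ⟨δ, hℓδ, hδ, hδα⟩ := ((eventually_setIntegral_norm_Icc_inter_lt hℓint t0
    (by norm_num : (0 : ℝ) < 1 / 3)).and (Ioo_mem_nhdsGT hα)).exists
  set S := Icc (t0 - δ) (t0 + δ) ∩ I
  have hSI : S ⊆ I := inter_subset_right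
  have hS : S.OrdConnected := ordConnected_Icc.inter (hI ▸ hT.inter ordConnected_Icc)
  have hTS : T ∩ Icc (t0 - δ) (t0 + δ) ⊆ S := fun t ⟨htT, htδ⟩ =>
    ⟨htδ, hI ▸ ⟨htT, Icc_subset_Icc (by linarith) (by linarith) htδ⟩⟩
  have hflow : ∀ x ∈ Metric.closedBall x0 r, ∀ p ∈ O,
      MapsTo (fun s => Φ s x p) I (Metric.closedBall x0 (2 * r)) := fun x hx p hp s hs =>
    Metric.closedBall_subset_closedBall' (by linarith [Metric.mem_closedBall.1 hx])
      (mem_closedBall_iff_norm.2 ((hΦ x hx p hp).2.1 s hs))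
  refine ⟨r, ⟨hr, le_rfl⟩, δ, ⟨hδ, hδα.le⟩, O, hO, hp0, subset_rfl, (1 - 2⁻¹)⁻¹, by norm_num,
    fun t ht p hp => ?_⟩
  have hdev : ∀ x1 ∈ Metric.closedBall x0 r, ∀ x2 ∈ Metric.closedBall x0 r,
      ‖(Φ t x1 p - Φ t x2 p) - (x1 - x2)‖ ≤ 2⁻¹ * ‖x1 - x2‖ := by
    intro x1 hx1 x2 hx2
    obtain ⟨-, -, hint1, heq1⟩ := hΦ x1 hx1 p hp
    obtain ⟨-, -, hint2, heq2⟩ := hΦ x2 hx2 p hp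
    convert norm_sub_sub_le_of_integral_eq hS (hTS ⟨ht0, by constructor <;> linarith⟩)
      (hint1.mono_set hSI) (hint2.mono_set hSI) (hℓint.mono_set hSI)
      (fun t ht => heq1 t (hSI ht)) (fun t ht => heq2 t (hSI ht))
      (fun s hs => hXlip s (hSI hs) _ (hflow x1 hx1 p hp (hSI hs)) _ (hflow x2 hx2 p hp (hSI hs))
        p hp)
      (bddAbove_image_norm_sub_of_mapsTo ((hflow x1 hx1 p hp).mono_left hSI)
        ((hflow x2 hx2 p hp).mono_left hSI)) hℓδ.le (by norm_num) (hTS ht) using 2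
    norm_num
  simpa only [inv_inv] using injOn_and_biLipschitz_of_norm_sub_sub_le (by norm_num) hdev

/-- Part (iii) of the paper's Lemma 3.7 in the Banach-space local model: near
`(t0, x0, p0)` the fixed-time flow maps are bi-Lipschitz (in particular injective)
onto their images, uniformly in time and parameter. -/
theorem local_flow_biLipschitz_in_state
    {E P : Type*} [NormedAddCommGroup E] [NormedSpace ℝ E] [CompleteSpace E]
    [TopologicalSpace P]
    (T : Set ℝ) (hT : T.OrdConnected) (t0 : ℝ) (ht0 : t0 ∈ T)
    (x0 : E) (p0 : P) (X : ℝ → E → P → E)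
    (r α lam : ℝ) (hr : 0 < r) (hα : 0 < α) (hlam0 : 0 < lam) (hlam1 : lam < 1)
    (O : Set P) (hO : IsOpen O) (hp0 : p0 ∈ O)
    (I : Set ℝ) (B : Set E)
    (hI : I = T ∩ Icc (t0 - α) (t0 + α)) (hB : B = Metric.closedBall x0 (2 * r))
    (h ℓ : ℝ → ℝ) (hhint : IntegrableOn h I) (hℓint : IntegrableOn ℓ I)
    (hXmeas : ∀ x ∈ B, ∀ p ∈ O,
      AEStronglyMeasurable (fun s => X s x p) (volume.restrict I))
    (hXcont : ∀ s ∈ I, ∀ p ∈ O, ContinuousOn (fun y => X s y p) B)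
    (hXbd : ∀ s ∈ I, ∀ y ∈ B, ∀ p ∈ O, ‖X s y p‖ ≤ h s)
    (hhsmall : ∫ s in I, h s < r)
    (hXlip : ∀ s ∈ I, ∀ x1 ∈ B, ∀ x2 ∈ B, ∀ p ∈ O,
      ‖X s x1 p - X s x2 p‖ ≤ ℓ s * ‖x1 - x2‖)
    (hℓsmall : ∫ s in I, ℓ s ≤ lam)
    (Φ : ℝ → E → P → E)
    (hΦ : ∀ x ∈ Metric.closedBall x0 r, ∀ p ∈ O,
      ContinuousOn (fun t => Φ t x p) I ∧ (∀ t ∈ I, ‖Φ t x p - x‖ ≤ r) ∧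
      IntegrableOn (fun s => X s (Φ s x p) p) I ∧
      ∀ t ∈ I, Φ t x p = x + ∫ s in t0..t, X s (Φ s x p) p) :
    ∃ r'' : ℝ, r'' ∈ Ioc (0 : ℝ) r ∧ ∃ α'' : ℝ, α'' ∈ Ioc (0 : ℝ) α ∧
      ∃ O'' : Set P, IsOpen O'' ∧ p0 ∈ O'' ∧ O'' ⊆ O ∧ ∃ C : ℝ, 1 ≤ C ∧
      ∀ t ∈ T ∩ Icc (t0 - α'') (t0 + α''), ∀ p ∈ O'',
        InjOn (fun x => Φ t x p) (Metric.closedBall x0 r'') ∧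
        ∀ x1 ∈ Metric.closedBall x0 r'', ∀ x2 ∈ Metric.closedBall x0 r'',
          C⁻¹ * ‖x1 - x2‖ ≤ ‖Φ t x1 p - Φ t x2 p‖ ∧
          ‖Φ t x1 p - Φ t x2 p‖ ≤ C * ‖x1 - x2‖ :=
  local_flow_biLipschitz_in_state_general T hT t0 ht0 x0 p0 X r α hr hα O hO hp0 I B hI hB ℓ hℓint
    hXlip Φ hΦ
end

section
/- Let E be a real Banach space, P a topological space, T ⊆ ℝ an interval, t0 ∈ T, x0 ∈ E, p0 ∈ P, and X : ℝ × E × P → E. Suppose there exist r > 0, α > 0, λ ∈ (0,1), an open neighbourhood O of p0, and integrable functions h, ℓ : ℝ → ℝ on I := T ∩ [t0 − α, t0 + α] such that, with B := closedBall x0 (2r): (i) for every x ∈ B and p ∈ O, s ↦ X(s, x, p) is measurable on I; (ii) for every s ∈ I and p ∈ O, y ↦ X(s, y, p) is continuous on B; (iii) ‖X(s, y, p)‖ ≤ h(s) for all s ∈ I, y ∈ B, p ∈ O, and ∫_I h(s) ds < r; (iv) ‖X(s, x1, p) − X(s, x2, p)‖ ≤ ℓ(s) ‖x1 − x2‖ for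 all s ∈ I, x1, x2 ∈ B, p ∈ O, and ∫_I ℓ(s) ds ≤ λ. Assume additionally: (v) for every p1 ∈ O, every continuous curve γ : I → B, and every ε > 0 there is a neighbourhood O' ⊆ O of p1 with ∫_I ‖X(s, γ(s), p) − X(s, γ(s), p1)‖ ds < ε for all p ∈ O'. For x ∈ closedBall x0 r and p ∈ O let Φ(·, x, p) : I → E be the unique continuous curve with ‖Φ(t, x, p) − x‖ ≤ r on I and Φ(t, x, p) = x + ∫_{t0}^{t} X(s, Φ(s, x, p), p) ds. Then the map (t, x, p) ↦ Φ(t, x, p) is continuous on I × closedBall x0 r × O. -/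
/-!
Fix `(t₁, x₁, p₁)` and write `γ = Φ(·, x₁, p₁)`. Subtracting the integral equations of
`Φ(·, x, p)` and `γ` and splitting `X(s, Φ, p) - X(s, γ, p₁)` at `X(s, γ, p)` gives, with
`J = ∫_I ‖X(s, Φ, p) - X(s, γ, p₁)‖`, the bound `J ≤ λ (‖x - x₁‖ + J) + δ(p)` where
`δ(p) = ∫_I ‖X(s, γ s, p) - X(s, γ s, p₁)‖`. As `λ < 1`, `Φ(·, x, p)` is uniformly within
`(‖x - x₁‖ + δ(p)) / (1 - λ)` of `γ` on `I`, and `δ(p) → 0` by (v). Uniform convergence in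
`(x, p)` plus continuity of `γ` in `t` gives joint continuity. The one measure-theoretic point is
the integrability of `s ↦ X(s, γ s, p)`: approximate `γ` by simple functions with values in its
(separable) image and use continuity of `X` in the state.
-/

open Set MeasureTheory intervalIntegral Filter Topology TopologicalSpace

theorem MeasureTheory.aestronglyMeasurable_comp_simpleFunc {α E F : Type*} [MeasurableSpace α]
    [TopologicalSpace F] [PseudoMetrizableSpace F] {μ : Measure α} {u : α → E → F}
    (c : SimpleFunc α E) (hu : ∀ y ∈ range c, AEStronglyMeasurable (u · y) μ) :
    AEStronglyMeasurable (fun a => u a (c a)) μ := by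
  have hcover : (univ : Set α) = ⋃ y : c.range, c ⁻¹' {(y : E)} := by
    ext a; simp
  rw [← Measure.restrict_univ (μ := μ), hcover, aestronglyMeasurable_iUnion_iff]
  rintro ⟨y, hy⟩
  refine (hu y (c.mem_range.1 hy)).restrict.congr
    (ae_restrict_of_forall_mem (c.measurableSet_preimage _) fun a ha => ?_)
  simp only [show c a = y from ha]

theorem MeasureTheory.aestronglyMeasurable_comp_of_caratheodory
    {α E F : Type*} [TopologicalSpace α] [PseudoMetrizableSpace α] [SeparableSpace α]
    [MeasurableSpace α] [OpensMeasurableSpace α] [PseudoMetricSpace E]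
    [TopologicalSpace F] [PseudoMetrizableSpace F] {μ : Measure α}
    {I : Set α} (hI : MeasurableSet I) {B : Set E} {X : α → E → F}
    (hmeas : ∀ y ∈ B, AEStronglyMeasurable (X · y) (μ.restrict I))
    (hcont : ∀ s ∈ I, ContinuousOn (X s) B) {γ : α → E} (hγ : ContinuousOn γ I)
    (hγB : MapsTo γ I B) :
    AEStronglyMeasurable (fun s => X s (γ s)) (μ.restrict I) := by
  borelize E
  classical
  rcases I.eq_empty_or_nonempty with rfl | ⟨t, ht⟩
  · simp
  have := (hγ.isSeparable_image (.of_separableSpace I)).separableSpace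
  have hγ' : Measurable (I.piecewise γ fun _ => γ t) :=
    hγ.measurable_piecewise continuousOn_const hI
  set c := SimpleFunc.approxOn _ hγ' (γ '' I) (γ t) (mem_image_of_mem γ ht)
  have hcB : ∀ n s, c n s ∈ B := fun n s =>
    image_subset_iff.2 hγB (SimpleFunc.approxOn_mem hγ' _ n s)
  refine aestronglyMeasurable_of_tendsto_ae atTop (f := fun n s => X s (c n s))
    (fun n => aestronglyMeasurable_comp_simpleFunc (c n) fun _ ⟨s, hs⟩ =>
      hs ▸ hmeas _ (hcB n s)) ?_
  refine ae_restrict_of_forall_mem hI fun s hs => ?_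
  have hcγ : Tendsto (c · s) atTop (𝓝 (γ s)) := by
    have := SimpleFunc.tendsto_approxOn hγ' (mem_image_of_mem γ ht) (x := s)
      (subset_closure (by rw [piecewise_eq_of_mem _ _ _ hs]; exact mem_image_of_mem γ hs))
    rwa [piecewise_eq_of_mem _ _ _ hs] at this
  exact (hcont s hs _ (hγB hs)).tendsto.comp
    (tendsto_nhdsWithin_iff.2 ⟨hcγ, Eventually.of_forall fun n => hcB n s⟩)

theorem MeasureTheory.integrableOn_comp_of_caratheodory
    {α E F : Type*} [TopologicalSpace α] [PseudoMetrizableSpace α] [SeparableSpace α]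
    [MeasurableSpace α] [OpensMeasurableSpace α] [PseudoMetricSpace E]
    [NormedAddCommGroup F] {μ : Measure α}
    {I : Set α} (hI : MeasurableSet I) {B : Set E} {X : α → E → F}
    (hmeas : ∀ y ∈ B, AEStronglyMeasurable (X · y) (μ.restrict I))
    (hcont : ∀ s ∈ I, ContinuousOn (X s) B) {h : α → ℝ} (hh : IntegrableOn h I μ)
    (hbd : ∀ s ∈ I, ∀ y ∈ B, ‖X s y‖ ≤ h s) {γ : α → E} (hγ : ContinuousOn γ I)
    (hγB : MapsTo γ I B) :
    IntegrableOn (fun s => X s (γ s)) I μ :=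
  hh.mono' (aestronglyMeasurable_comp_of_caratheodory hI hmeas hcont hγ hγB)
    (ae_restrict_of_forall_mem hI fun s hs => hbd s hs _ (hγB hs))

theorem norm_intervalIntegral_le_setIntegral_norm {E : Type*} [NormedAddCommGroup E]
    [NormedSpace ℝ E] {I : Set ℝ} (hI : I.OrdConnected) {a b : ℝ} (ha : a ∈ I) (hb : b ∈ I)
    {f : ℝ → E} (hf : IntegrableOn f I) :
    ‖∫ s in a..b, f s‖ ≤ ∫ s in I, ‖f s‖ :=
  calc ‖∫ s in a..b, f s‖ ≤ ∫ s in uIoc a b, ‖f s‖ := norm_integral_le_integral_norm_uIoc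
    _ ≤ ∫ s in I, ‖f s‖ :=
      setIntegral_mono_set hf.norm (Eventually.of_forall fun _ => norm_nonneg _)
        (uIoc_subset_uIcc.trans (hI.uIcc_subset ha hb)).eventuallyLE

theorem norm_sub_le_of_eq_add_intervalIntegral {E : Type*} [NormedAddCommGroup E]
    [NormedSpace ℝ E] {I : Set ℝ} (hI : I.OrdConnected) {t0 : ℝ} (ht0 : t0 ∈ I)
    {u v f g : ℝ → E} {a b : E} (hf : IntegrableOn f I) (hg : IntegrableOn g I)
    (hu : ∀ t ∈ I, u t = a + ∫ s in t0..t, f s) (hv : ∀ t ∈ I, v t = b + ∫ s in t0..t, g s)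
    {ℓ ψ : ℝ → ℝ} {lam : ℝ} (hℓ : IntegrableOn ℓ I) (hℓ0 : ∀ s ∈ I, 0 ≤ ℓ s)
    (hℓlam : ∫ s in I, ℓ s ≤ lam) (hlam : lam < 1) (hψ : IntegrableOn ψ I)
    (hfg : ∀ s ∈ I, ‖f s - g s‖ ≤ ℓ s * ‖u s - v s‖ + ψ s) {t : ℝ} (ht : t ∈ I) :
    ‖u t - v t‖ ≤ (‖a - b‖ + ∫ s in I, ψ s) / (1 - lam) := by
  -- `‖a - b‖ + J` bounds `‖u - v‖` on all of `I`; feeding this back into `hfg` bounds `J` itself.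
  set J := ∫ s in I, ‖f s - g s‖
  have hdist : ∀ t ∈ I, ‖u t - v t‖ ≤ ‖a - b‖ + J := by
    intro t ht
    have hint : ∀ k : ℝ → E, IntegrableOn k I → IntervalIntegrable k volume t0 t :=
      fun k hk => (hk.mono_set (hI.uIcc_subset ht0 ht)).intervalIntegrable
    calc ‖u t - v t‖ = ‖(a - b) + ∫ s in t0..t, (f s - g s)‖ := by
          rw [hu t ht, hv t ht, integral_sub (hint f hf) (hint g hg)]; congr 1; abel
      _ ≤ ‖a - b‖ + J := (norm_add_le _ _).trans (add_le_add le_rfl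
          (norm_intervalIntegral_le_setIntegral_norm hI ht0 ht (f := fun s => f s - g s)
            (hf.sub hg)))
  set M := ‖a - b‖ + J
  have hJ : J ≤ lam * M + ∫ s in I, ψ s :=
    calc J ≤ ∫ s in I, (ℓ s * M + ψ s) :=
          setIntegral_mono_on (hf.sub hg).norm ((hℓ.mul_const M).add hψ) hI.measurableSet
            fun s hs => (hfg s hs).trans (add_le_add
              (mul_le_mul_of_nonneg_left (hdist s hs) (hℓ0 s hs)) le_rfl)
      _ = (∫ s in I, ℓ s) * M + ∫ s in I, ψ s := by
          rw [integral_add (hℓ.mul_const M) hψ, MeasureTheory.integral_mul_const]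
      _ ≤ lam * M + ∫ s in I, ψ s := by gcongr
  rw [le_div_iff₀ (sub_pos.2 hlam)]
  nlinarith [mul_le_mul_of_nonneg_right (hdist t ht) (sub_pos.2 hlam).le]

theorem norm_sub_le_of_integral_equations {E : Type*} [NormedAddCommGroup E]
    [NormedSpace ℝ E] {I : Set ℝ} (hI : I.OrdConnected) {t0 : ℝ} (ht0 : t0 ∈ I) {B : Set E}
    {Y Z : ℝ → E → E} {u v : ℝ → E} {a b : E} (huB : MapsTo u I B) (hvB : MapsTo v I B)
    (hYu : IntegrableOn (fun s => Y s (u s)) I) (hZv : IntegrableOn (fun s => Z s (v s)) I)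
    (hYv : IntegrableOn (fun s => Y s (v s)) I)
    (hu : ∀ t ∈ I, u t = a + ∫ s in t0..t, Y s (u s))
    (hv : ∀ t ∈ I, v t = b + ∫ s in t0..t, Z s (v s))
    {ℓ : ℝ → ℝ} {lam : ℝ} (hℓ : IntegrableOn ℓ I) (hℓ0 : ∀ s ∈ I, 0 ≤ ℓ s)
    (hℓlam : ∫ s in I, ℓ s ≤ lam) (hlam : lam < 1)
    (hY : ∀ s ∈ I, ∀ x ∈ B, ∀ y ∈ B, ‖Y s x - Y s y‖ ≤ ℓ s * ‖x - y‖) {t : ℝ} (ht : t ∈ I) :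
    ‖u t - v t‖ ≤ (‖a - b‖ + ∫ s in I, ‖Y s (v s) - Z s (v s)‖) / (1 - lam) :=
  norm_sub_le_of_eq_add_intervalIntegral hI ht0 hYu hZv hu hv hℓ hℓ0 hℓlam hlam
    (hYv.sub hZv).norm (fun s hs => (norm_sub_le_norm_sub_add_norm_sub _ (Y s (v s)) _).trans
      (add_le_add (hY s hs _ (huB hs) _ (hvB hs)) le_rfl)) ht

theorem nonneg_of_norm_sub_le_mul_norm_sub_on_closedBall {E F : Type*}
    [NormedAddCommGroup E] [NormedSpace ℝ E] [Nontrivial E] [SeminormedAddCommGroup F]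
    {f : E → F} {c : E} {ρ L : ℝ} (hρ : 0 < ρ)
    (hf : ∀ x ∈ Metric.closedBall c ρ, ∀ y ∈ Metric.closedBall c ρ,
      ‖f x - f y‖ ≤ L * ‖x - y‖) :
    0 ≤ L := by
  obtain ⟨v, hv⟩ := exists_norm_eq E hρ.le
  have := hf (c + v) (by simp [hv]) c (Metric.mem_closedBall_self hρ.le)
  rw [add_sub_cancel_left, hv] at this
  exact (mul_nonneg_iff_of_pos_right hρ).1 ((norm_nonneg _).trans this)

theorem ContinuousWithinAt.uncurry_of_tendstoUniformlyOn {α β γ : Type*}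
    [TopologicalSpace α] [TopologicalSpace β] [UniformSpace γ] {F : α → β → γ}
    {s : Set α} {t : Set β} {a : α} {b : β} (hcont : ContinuousWithinAt (F · b) s a)
    (hunif : TendstoUniformlyOn (fun b' a' => F a' b') (F · b) (𝓝[t] b) s) :
    ContinuousWithinAt (Function.uncurry F) (s ×ˢ t) (a, b) := by
  have hsnd : Tendsto Prod.snd (𝓝[s ×ˢ t] (a, b)) (𝓝[t] b) :=
    (continuous_snd.tendsto _).inf (tendsto_principal_principal.2 fun q hq => hq.2)
  have hfst : Tendsto Prod.fst (𝓝[s ×ˢ t] (a, b)) (𝓝[s] a) :=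
    (continuous_fst.tendsto _).inf (tendsto_principal_principal.2 fun q hq => hq.1)
  exact TendstoUniformlyOn.tendsto_comp (F := fun q : α × β => (F · q.2))
    (fun u hu => hsnd.eventually (hunif u hu)) hcont hfst

theorem Metric.tendstoUniformlyOn_of_dist_le {ι α β : Type*} [PseudoMetricSpace α]
    {F : ι → β → α} {f : β → α} {p : Filter ι} {s : Set β} {δ : ι → ℝ}
    (hδ : Tendsto δ p (𝓝 0)) (hF : ∀ᶠ n in p, ∀ x ∈ s, dist (f x) (F n x) ≤ δ n) :
    TendstoUniformlyOn F f p s :=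
  tendstoUniformlyOn_iff.2 fun _ hε => (hF.and (hδ.eventually (gt_mem_nhds hε))).mono
    fun _ h x hx => (h.1 x hx).trans_lt h.2

theorem local_flow_jointly_continuous_general
    {E P : Type*} [NormedAddCommGroup E] [NormedSpace ℝ E]
    [TopologicalSpace P]
    (T : Set ℝ) (hT : T.OrdConnected) (t0 : ℝ) (ht0 : t0 ∈ T)
    (x0 : E) (X : ℝ → E → P → E)
    (r α lam : ℝ) (hr : 0 < r) (hα : 0 < α) (hlam1 : lam < 1)
    (O : Set P)
    (I : Set ℝ) (B : Set E)
    (hI : I = T ∩ Icc (t0 - α) (t0 + α)) (hB : B = Metric.closedBall x0 (2 * r))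
    (h ℓ : ℝ → ℝ) (hhint : IntegrableOn h I) (hℓint : IntegrableOn ℓ I)
    (hXmeas : ∀ x ∈ B, ∀ p ∈ O,
      AEStronglyMeasurable (fun s => X s x p) (volume.restrict I))
    (hXcont : ∀ s ∈ I, ∀ p ∈ O, ContinuousOn (fun y => X s y p) B)
    (hXbd : ∀ s ∈ I, ∀ y ∈ B, ∀ p ∈ O, ‖X s y p‖ ≤ h s)
    (hXlip : ∀ s ∈ I, ∀ x1 ∈ B, ∀ x2 ∈ B, ∀ p ∈ O,
      ‖X s x1 p - X s x2 p‖ ≤ ℓ s * ‖x1 - x2‖)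
    (hℓsmall : ∫ s in I, ℓ s ≤ lam)
    (hXparam : ∀ p1 ∈ O, ∀ γ : ℝ → E, ContinuousOn γ I → (∀ s ∈ I, γ s ∈ B) →
      ∀ ε > (0 : ℝ), ∃ O' : Set P, IsOpen O' ∧ p1 ∈ O' ∧ O' ⊆ O ∧
        ∀ p ∈ O', ∫ s in I, ‖X s (γ s) p - X s (γ s) p1‖ < ε)
    (Φ : ℝ → E → P → E)
    (hΦ : ∀ x ∈ Metric.closedBall x0 r, ∀ p ∈ O,
      ContinuousOn (fun t => Φ t x p) I ∧ (∀ t ∈ I, ‖Φ t x p - x‖ ≤ r) ∧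
      IntegrableOn (fun s => X s (Φ s x p) p) I ∧
      ∀ t ∈ I, Φ t x p = x + ∫ s in t0..t, X s (Φ s x p) p) :
    ContinuousOn (fun q : ℝ × E × P => Φ q.1 q.2.1 q.2.2)
      (I ×ˢ Metric.closedBall x0 r ×ˢ O) := by
  -- Over a nontrivial `E`, the Lipschitz bound on a ball of positive radius forces `ℓ ≥ 0`.
  rcases subsingleton_or_nontrivial E with hE | hE
  · exact (continuous_of_const fun _ _ => Subsingleton.elim _ _).continuousOn
  subst hB
  have hIord : I.OrdConnected := hI ▸ hT.inter ordConnected_Icc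
  have ht0I : t0 ∈ I := hI ▸ ⟨ht0, by linarith, by linarith⟩
  have hΦB : ∀ x ∈ Metric.closedBall x0 r, ∀ p ∈ O,
      MapsTo (Φ · x p) I (Metric.closedBall x0 (2 * r)) := fun x hx p hp s hs => by
    have := (hΦ x hx p hp).2.1 s hs
    rw [Metric.mem_closedBall] at hx ⊢
    linarith [dist_triangle (Φ s x p) x x0, dist_eq_norm (Φ s x p) x]
  rintro ⟨t1, x1, p1⟩ ⟨ht1, hx1, hp1⟩
  obtain ⟨hγ, -, hγint, hγeq⟩ := hΦ x1 hx1 p1 hp1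
  have hℓ0 : ∀ s ∈ I, 0 ≤ ℓ s := fun s hs =>
    nonneg_of_norm_sub_le_mul_norm_sub_on_closedBall (by positivity) (hXlip s hs · · · · p1 hp1)
  set δ : P → ℝ := fun p => ∫ s in I, ‖X s (Φ s x1 p1) p - X s (Φ s x1 p1) p1‖
  have hdist : ∀ x ∈ Metric.closedBall x0 r, ∀ p ∈ O, ∀ t ∈ I,
      ‖Φ t x p - Φ t x1 p1‖ ≤ (‖x - x1‖ + δ p) / (1 - lam) := fun x hx p hp t ht =>
    norm_sub_le_of_integral_equations (Z := (X · · p1)) hIord ht0I (hΦB x hx p hp)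
      (hΦB x1 hx1 p1 hp1) (hΦ x hx p hp).2.2.1 hγint
      (integrableOn_comp_of_caratheodory hIord.measurableSet
        (hXmeas · · p hp) (hXcont · · p hp) hhint (hXbd · · · · p hp) hγ (hΦB x1 hx1 p1 hp1))
      (hΦ x hx p hp).2.2.2 hγeq hℓint hℓ0 hℓsmall hlam1 (hXlip · · · · · · p hp) ht
  have hδ : Tendsto δ (𝓝 p1) (𝓝 0) := by
    refine tendsto_order.2 ⟨fun a ha => Eventually.of_forall fun p =>
      ha.trans_le (integral_nonneg fun _ => norm_nonneg _), fun ε hε => ?_⟩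
    obtain ⟨O', hO', hp1O', -, hlt⟩ := hXparam p1 hp1 _ hγ (hΦB x1 hx1 p1 hp1) ε hε
    exact eventually_of_mem (hO'.mem_nhds hp1O') hlt
  have hbound : Tendsto (fun q : E × P => (‖q.1 - x1‖ + δ q.2) / (1 - lam))
      (𝓝[Metric.closedBall x0 r ×ˢ O] (x1, p1)) (𝓝 0) := by
    have := (((tendsto_norm_sub_self x1).comp (continuous_fst.tendsto (x1, p1))).add
      (hδ.comp (continuous_snd.tendsto (x1, p1)))).div_const (1 - lam)
    simpa using this.mono_left nhdsWithin_le_nhds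
  refine ContinuousWithinAt.uncurry_of_tendstoUniformlyOn
    (F := fun t (q : E × P) => Φ t q.1 q.2) (hγ t1 ht1)
    (Metric.tendstoUniformlyOn_of_dist_le hbound ?_)
  filter_upwards [self_mem_nhdsWithin] with ⟨x, p⟩ ⟨hx, hp⟩ t ht
  rw [dist_comm, dist_eq_norm]
  exact hdist x hx p hp t ht

/-- Part (ii) of the paper's Lemma 3.6 / Lemma 3.7 in the Banach-space local model:
joint continuity of the local flow in time, initial state, and parameter, under the
additional continuity-in-parameter hypothesis (v). -/
theorem local_flow_jointly_continuous
    {E P : Type*} [NormedAddCommGroup E] [NormedSpace ℝ E] [CompleteSpace E]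
    [TopologicalSpace P]
    (T : Set ℝ) (hT : T.OrdConnected) (t0 : ℝ) (ht0 : t0 ∈ T)
    (x0 : E) (p0 : P) (X : ℝ → E → P → E)
    (r α lam : ℝ) (hr : 0 < r) (hα : 0 < α) (hlam0 : 0 < lam) (hlam1 : lam < 1)
    (O : Set P) (hO : IsOpen O) (hp0 : p0 ∈ O)
    (I : Set ℝ) (B : Set E)
    (hI : I = T ∩ Icc (t0 - α) (t0 + α)) (hB : B = Metric.closedBall x0 (2 * r))
    (h ℓ : ℝ → ℝ) (hhint : IntegrableOn h I) (hℓint : IntegrableOn ℓ I)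
    (hXmeas : ∀ x ∈ B, ∀ p ∈ O,
      AEStronglyMeasurable (fun s => X s x p) (volume.restrict I))
    (hXcont : ∀ s ∈ I, ∀ p ∈ O, ContinuousOn (fun y => X s y p) B)
    (hXbd : ∀ s ∈ I, ∀ y ∈ B, ∀ p ∈ O, ‖X s y p‖ ≤ h s)
    (hhsmall : ∫ s in I, h s < r)
    (hXlip : ∀ s ∈ I, ∀ x1 ∈ B, ∀ x2 ∈ B, ∀ p ∈ O,
      ‖X s x1 p - X s x2 p‖ ≤ ℓ s * ‖x1 - x2‖)
    (hℓsmall : ∫ s in I, ℓ s ≤ lam)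
    (hXparam : ∀ p1 ∈ O, ∀ γ : ℝ → E, ContinuousOn γ I → (∀ s ∈ I, γ s ∈ B) →
      ∀ ε > (0 : ℝ), ∃ O' : Set P, IsOpen O' ∧ p1 ∈ O' ∧ O' ⊆ O ∧
        ∀ p ∈ O', ∫ s in I, ‖X s (γ s) p - X s (γ s) p1‖ < ε)
    (Φ : ℝ → E → P → E)
    (hΦ : ∀ x ∈ Metric.closedBall x0 r, ∀ p ∈ O,
      ContinuousOn (fun t => Φ t x p) I ∧ (∀ t ∈ I, ‖Φ t x p - x‖ ≤ r) ∧
      IntegrableOn (fun s => X s (Φ s x p) p) I ∧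
      ∀ t ∈ I, Φ t x p = x + ∫ s in t0..t, X s (Φ s x p) p) :
    ContinuousOn (fun q : ℝ × E × P => Φ q.1 q.2.1 q.2.2)
      (I ×ˢ Metric.closedBall x0 r ×ˢ O) :=
  local_flow_jointly_continuous_general T hT t0 ht0 x0 X r α lam hr hα hlam1 O I B hI hB h ℓ hhint
    hℓint hXmeas hXcont hXbd hXlip hℓsmall hXparam Φ hΦ
end

section
/- Let E be a real Banach space, let t0 ≤ t1 be real numbers, let A ⊆ E, let X : ℝ × E → E, and let ℓ : ℝ → ℝ be nonnegative and integrable on [t0, t1] with ‖X(s, y1) − X(s, y2)‖ ≤ ℓ(s) ‖y1 − y2‖ for all s ∈ [t0, t1] and y1, y2 ∈ A. Let ξ1, ξ2 : [t0, t1] → E be continuous curves with values in A such that s ↦ X(s, ξ_i(s)) is integrable on [t0, t1] and ξ_i(t) = ξ_i(t0) + ∫_{t0}^{t} X(s, ξ_i(s)) ds for all t ∈ [t0, t1] (i = 1, 2). Then for all t ∈ [t0, t1]: ‖ξ1(t) − ξ2(t)‖ ≤ exp(∫_{t0}^{t} ℓ(s) ds) · ‖ξ1(t0) − ξ2(t0)‖.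 -/
open Set MeasureTheory intervalIntegral

private lemma gronwall_aux
    {l φ : ℝ → ℝ} {t0 t : ℝ} (ht : t0 ≤ t) {C : ℝ} (hC : 0 ≤ C)
    (hφc : ContinuousOn φ (Icc t0 t)) (hφ0 : ∀ τ ∈ Icc t0 t, 0 ≤ φ τ)
    (hl0 : ∀ s, 0 ≤ l s) (hlint : IntegrableOn l (Icc t0 t))
    (key : ∀ τ ∈ Icc t0 t, φ τ ≤ C + ∫ s in t0..τ, l s * φ s) :
    φ t ≤ Real.exp (∫ s in t0..t, l s) * C := by
  -- integrability of the product l * φ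
  have hφm : AEStronglyMeasurable φ (volume.restrict (Icc t0 t)) :=
    hφc.aestronglyMeasurable measurableSet_Icc
  obtain ⟨M, hM⟩ : ∃ M, ∀ x ∈ Icc t0 t, ‖φ x‖ ≤ M :=
    isCompact_Icc.exists_bound_of_continuousOn hφc
  have hmul : IntegrableOn (fun s => l s * φ s) (Icc t0 t) := by
    have : IntegrableOn (fun s => φ s * l s) (Icc t0 t) :=
      Integrable.bdd_mul hlint hφm
        ((ae_restrict_iff' measurableSet_Icc).2 (ae_of_all _ hM))
    simpa [mul_comm] using this
  have hmulII : ∀ x y, t0 ≤ x → x ≤ y → y ≤ t →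
      IntervalIntegrable (fun s => l s * φ s) volume x y := by
    intro x y hx hxy hyt
    exact (hmul.mono_set
      (uIcc_subset_Icc ⟨hx, hxy.trans hyt⟩ ⟨hx.trans hxy, hyt⟩)).intervalIntegrable
  have hlII : ∀ x y, t0 ≤ x → x ≤ y → y ≤ t →
      IntervalIntegrable l volume x y := by
    intro x y hx hxy hyt
    exact (hlint.mono_set
      (uIcc_subset_Icc ⟨hx, hxy.trans hyt⟩ ⟨hx.trans hxy, hyt⟩)).intervalIntegrable
  set L : ℝ → ℝ := fun x => ∫ s in t0..x, l s with hLdef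
  have hLcont : ContinuousOn L (Icc t0 t) := by
    have := continuousOn_primitive_interval (a := t0) (b := t) (μ := volume) (f := l)
      (by rwa [uIcc_of_le ht])
    rwa [uIcc_of_le ht] at this
  have hLt0 : L t0 = 0 := integral_same
  have hLdiff : ∀ x y, t0 ≤ x → x ≤ y → y ≤ t →
      L y - L x = ∫ s in x..y, l s := by
    intro x y hx hxy hyt
    have := integral_add_adjacent_intervals (hlII t0 x le_rfl hx (hxy.trans hyt))
      (hlII x y hx hxy hyt)
    simp only [hLdef]
    linarith [this]
  have hLmono : ∀ x y, t0 ≤ x → x ≤ y → y ≤ t → L x ≤ L y := by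
    intro x y hx hxy hyt
    have h1 : (0:ℝ) ≤ ∫ s in x..y, l s :=
      intervalIntegral.integral_nonneg hxy (fun u _ => hl0 u)
    have := hLdiff x y hx hxy hyt
    linarith
  have hL0 : ∀ x, t0 ≤ x → x ≤ t → 0 ≤ L x := by
    intro x hx hxt
    have := hLmono t0 x le_rfl hx hxt
    rw [hLt0] at this; exact this
  -- the basic one-interval estimate
  have piece : ∀ a τ, t0 ≤ a → a ≤ τ → τ ≤ t → ∀ e D : ℝ, 0 ≤ e → e < 1 → 0 ≤ D →
      (∫ s in t0..a, l s * φ s) ≤ D → L τ - L a ≤ e →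
      (∀ σ ∈ Icc a τ, φ σ ≤ (C + D) / (1 - e)) ∧
        (∫ s in t0..τ, l s * φ s) ≤ D + e * ((C + D) / (1 - e)) := by
    intro a τ ha haτ hτt e D he0 he1 hD0 hintD heps
    have h1e : (0:ℝ) < 1 - e := by linarith
    have seg : ∀ b, a ≤ b → b ≤ τ → ∀ B : ℝ, 0 ≤ B → (∀ σ ∈ Icc a b, φ σ ≤ B) →
        (∫ s in a..b, l s * φ s) ≤ e * B := by
      intro b hab hbτ B hB0 hBb
      have step1 : (∫ s in a..b, l s * φ s) ≤ ∫ s in a..b, l s * B := by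
        refine intervalIntegral.integral_mono_on hab
          (hmulII a b ha hab (hbτ.trans hτt)) ?_ ?_
        · exact (hlII a b ha hab (hbτ.trans hτt)).mul_const B
        · intro s hs
          exact mul_le_mul_of_nonneg_left (hBb s hs) (hl0 s)
      have step2 : (∫ s in a..b, l s * B) = (L b - L a) * B := by
        rw [intervalIntegral.integral_mul_const, ← hLdiff a b ha hab (hbτ.trans hτt)]
      have step3 : (L b - L a) * B ≤ e * B := by
        refine mul_le_mul_of_nonneg_right ?_ hB0
        have := hLmono b τ (ha.trans hab) hbτ hτt
        linarith
      linarith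
    obtain ⟨σ0, hσ0mem, hσ0max⟩ :=
      isCompact_Icc.exists_isMaxOn (⟨a, left_mem_Icc.2 haτ⟩ : (Icc a τ).Nonempty)
        (hφc.mono (Icc_subset_Icc ha hτt))
    have hmax : ∀ σ ∈ Icc a τ, φ σ ≤ φ σ0 := fun σ hσ => hσ0max hσ
    set S := φ σ0 with hSdef
    have hσ0t : σ0 ∈ Icc t0 t := ⟨ha.trans hσ0mem.1, hσ0mem.2.trans hτt⟩
    have hS0 : 0 ≤ S := hφ0 σ0 hσ0t
    have hsplit : (∫ s in t0..σ0, l s * φ s)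
        = (∫ s in t0..a, l s * φ s) + ∫ s in a..σ0, l s * φ s :=
      (integral_add_adjacent_intervals (hmulII t0 a le_rfl ha (haτ.trans hτt))
        (hmulII a σ0 ha hσ0mem.1 (hσ0mem.2.trans hτt))).symm
    have hseg1 : (∫ s in a..σ0, l s * φ s) ≤ e * S :=
      seg σ0 hσ0mem.1 hσ0mem.2 S hS0
        (fun σ hσ => hmax σ ⟨hσ.1, hσ.2.trans hσ0mem.2⟩)
    have hkey := key σ0 hσ0t
    have hSle : S ≤ (C + D) / (1 - e) := by
      rw [le_div_iff₀ h1e]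
      have : S ≤ C + D + e * S := by
        rw [hsplit] at hkey; linarith
      nlinarith
    have hBnn : 0 ≤ (C + D) / (1 - e) := div_nonneg (by linarith) h1e.le
    refine ⟨fun σ hσ => (hmax σ hσ).trans hSle, ?_⟩
    have hsplit2 : (∫ s in t0..τ, l s * φ s)
        = (∫ s in t0..a, l s * φ s) + ∫ s in a..τ, l s * φ s :=
      (integral_add_adjacent_intervals (hmulII t0 a le_rfl ha (haτ.trans hτt))
        (hmulII a τ ha haτ hτt)).symm
    have hseg2 : (∫ s in a..τ, l s * φ s) ≤ e * ((C + D) / (1 - e)) :=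
      seg τ haτ le_rfl _ hBnn (fun σ hσ => (hmax σ hσ).trans hSle)
    rw [hsplit2]; linarith
  -- the main induction
  have main : ∀ e : ℝ, 0 ≤ e → e < 1 → ∀ j : ℕ, ∀ τ ∈ Icc t0 t, L τ ≤ j * e →
      φ τ ≤ C * ((1 - e)⁻¹) ^ j ∧
        (∫ s in t0..τ, l s * φ s) ≤ C * (((1 - e)⁻¹) ^ j - 1) := by
    intro e he0 he1
    have h1e : (0:ℝ) < 1 - e := by linarith
    set q : ℝ := (1 - e)⁻¹ with hqdef
    have hq0 : 0 < q := inv_pos.2 h1e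
    have hqe : q * (1 - e) = 1 := inv_mul_cancel₀ h1e.ne'
    have hq1 : 1 ≤ q := by nlinarith
    intro j
    induction j with
    | zero =>
      intro τ hτ hLτ
      simp only [Nat.cast_zero, zero_mul] at hLτ
      have := piece t0 τ le_rfl hτ.1 hτ.2 0 0 le_rfl one_pos le_rfl
        (by simp) (by rw [hLt0]; linarith)
      obtain ⟨hb, hint⟩ := this
      constructor
      · have := hb τ (right_mem_Icc.2 hτ.1)
        simpa using this
      · simpa using hint
    | succ j ih =>
      intro τ hτ hLτ
      have hqj1 : (1:ℝ) ≤ q ^ j := one_le_pow₀ hq1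
      have hqmono : q ^ j ≤ q ^ (j + 1) := by
        calc q ^ j = q ^ j * 1 := (mul_one _).symm
        _ ≤ q ^ j * q := by nlinarith
        _ = q ^ (j + 1) := (pow_succ q j).symm
      by_cases hcase : L τ ≤ j * e
      · obtain ⟨h1, h2⟩ := ih τ hτ hcase
        exact ⟨h1.trans (mul_le_mul_of_nonneg_left hqmono hC),
          h2.trans (mul_le_mul_of_nonneg_left (by linarith) hC)⟩
      · push_neg at hcase
        have hje0 : (0:ℝ) ≤ j * e := mul_nonneg j.cast_nonneg he0
        have hmem : (j * e : ℝ) ∈ Icc (L t0) (L τ) := ⟨by rw [hLt0]; exact hje0, hcase.le⟩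
        obtain ⟨a, ha, hLa⟩ :=
          intermediate_value_Icc hτ.1 (hLcont.mono (Icc_subset_Icc le_rfl hτ.2)) hmem
        have haT : a ∈ Icc t0 t := ⟨ha.1, ha.2.trans hτ.2⟩
        obtain ⟨-, h2⟩ := ih a haT (le_of_eq hLa)
        have hD0 : 0 ≤ C * (q ^ j - 1) := mul_nonneg hC (by linarith)
        have hLτa : L τ - L a ≤ e := by
          rw [hLa]
          push_cast at hLτ
          linarith
        obtain ⟨hb, hint⟩ := piece a τ ha.1 ha.2 hτ.2 e (C * (q ^ j - 1))
          he0 he1 hD0 h2 hLτa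
        have hident : (C + C * (q ^ j - 1)) / (1 - e) = C * q ^ (j + 1) := by
          rw [div_eq_iff h1e.ne']
          have : q ^ (j + 1) = q ^ j * q := pow_succ q j
          rw [this]
          nlinarith [hqe]
        constructor
        · have := hb τ (right_mem_Icc.2 ha.2)
          rwa [hident] at this
        · rw [hident] at hint
          have heq : C * (q ^ j - 1) + e * (C * q ^ (j + 1)) = C * (q ^ (j + 1) - 1) := by
            linear_combination (-(C * q ^ j)) * hqe
          linarith
  -- the limit argument
  set Λ : ℝ := ∫ s in t0..t, l s with hΛdef
  have hΛ0 : 0 ≤ Λ := intervalIntegral.integral_nonneg ht (fun u _ => hl0 u)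
  have hbound : ∀ n : ℕ, 1 ≤ n → Λ / n < 1 → φ t ≤ C * ((1 - Λ / n)⁻¹) ^ n := by
    intro n hn hlt
    have hne : (n : ℝ) ≠ 0 := Nat.cast_ne_zero.2 (by omega)
    have he0 : 0 ≤ Λ / n := div_nonneg hΛ0 n.cast_nonneg
    have hLt : L t ≤ n * (Λ / n) := by
      rw [mul_div_cancel₀ _ hne]
    exact (main (Λ / n) he0 hlt n t ⟨ht, le_rfl⟩ hLt).1
  have htend : Filter.Tendsto (fun n : ℕ => C * ((1 - Λ / n)⁻¹) ^ n)
      Filter.atTop (nhds (C * Real.exp Λ)) := by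
    have h1 : Filter.Tendsto (fun n : ℕ => (1 + (-Λ) / n) ^ n)
        Filter.atTop (nhds (Real.exp (-Λ))) := Real.tendsto_one_add_div_pow_exp (-Λ)
    have h2 : Filter.Tendsto (fun n : ℕ => ((1 + (-Λ) / n) ^ n)⁻¹)
        Filter.atTop (nhds ((Real.exp (-Λ))⁻¹)) := h1.inv₀ (Real.exp_ne_zero _)
    have h3 : (fun n : ℕ => ((1 - Λ / n)⁻¹) ^ n)
        = fun n : ℕ => ((1 + (-Λ) / n) ^ n)⁻¹ := by
      funext n
      rw [inv_pow]
      congr 2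
      ring
    have h4 : (Real.exp (-Λ))⁻¹ = Real.exp Λ := by rw [Real.exp_neg, inv_inv]
    rw [h4] at h2
    exact (h2.const_mul C).congr (fun n => by rw [congrFun h3 n])
  have hev : ∀ᶠ n : ℕ in Filter.atTop, φ t ≤ C * ((1 - Λ / n)⁻¹) ^ n := by
    have hdiv : Filter.Tendsto (fun n : ℕ => Λ / n) Filter.atTop (nhds 0) :=
      tendsto_const_div_atTop_nhds_zero_nat Λ
    have hlt : ∀ᶠ n : ℕ in Filter.atTop, Λ / n < 1 :=
      hdiv.eventually (eventually_lt_nhds one_pos)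
    filter_upwards [hlt, Filter.eventually_ge_atTop 1] with n h1 h2
    exact hbound n h2 h1
  have := ge_of_tendsto htend hev
  rw [mul_comm] at this
  exact this

/-- Gronwall-type estimate with time-integrable Lipschitz modulus: the quantitative core
of the paper's Corollary 3.12 ('Uniform Lipschitz character of flows') in the
Banach-space local model. -/
theorem gronwall_estimate_integrable_modulus
    {E : Type*} [NormedAddCommGroup E] [NormedSpace ℝ E]
    (t0 t1 : ℝ) (ht : t0 ≤ t1) (A : Set E) (X : ℝ → E → E) (l : ℝ → ℝ)
    (hl0 : ∀ s, 0 ≤ l s) (hlint : IntegrableOn l (Icc t0 t1))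
    (hlip : ∀ s ∈ Icc t0 t1, ∀ y1 ∈ A, ∀ y2 ∈ A, ‖X s y1 - X s y2‖ ≤ l s * ‖y1 - y2‖)
    (ξ1 ξ2 : ℝ → E)
    (h1c : ContinuousOn ξ1 (Icc t0 t1)) (h2c : ContinuousOn ξ2 (Icc t0 t1))
    (h1A : ∀ t ∈ Icc t0 t1, ξ1 t ∈ A) (h2A : ∀ t ∈ Icc t0 t1, ξ2 t ∈ A)
    (h1i : IntegrableOn (fun s => X s (ξ1 s)) (Icc t0 t1))
    (h2i : IntegrableOn (fun s => X s (ξ2 s)) (Icc t0 t1))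
    (h1e : ∀ t ∈ Icc t0 t1, ξ1 t = ξ1 t0 + ∫ s in t0..t, X s (ξ1 s))
    (h2e : ∀ t ∈ Icc t0 t1, ξ2 t = ξ2 t0 + ∫ s in t0..t, X s (ξ2 s)) :
    ∀ t ∈ Icc t0 t1,
      ‖ξ1 t - ξ2 t‖ ≤ Real.exp (∫ s in t0..t, l s) * ‖ξ1 t0 - ξ2 t0‖ := by
  intro t htmem
  set φ : ℝ → ℝ := fun τ => ‖ξ1 τ - ξ2 τ‖ with hφdef
  set C : ℝ := ‖ξ1 t0 - ξ2 t0‖ with hCdef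
  have hφc : ContinuousOn φ (Icc t0 t) :=
    ((h1c.sub h2c).norm).mono (Icc_subset_Icc le_rfl htmem.2)
  -- integrability of l * φ on Icc t0 t1
  have hφc1 : ContinuousOn φ (Icc t0 t1) := (h1c.sub h2c).norm
  have hφm : AEStronglyMeasurable φ (volume.restrict (Icc t0 t1)) :=
    hφc1.aestronglyMeasurable measurableSet_Icc
  obtain ⟨M, hM⟩ : ∃ M, ∀ x ∈ Icc t0 t1, ‖φ x‖ ≤ M :=
    isCompact_Icc.exists_bound_of_continuousOn hφc1
  have hmul : IntegrableOn (fun s => l s * φ s) (Icc t0 t1) := by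
    have : IntegrableOn (fun s => φ s * l s) (Icc t0 t1) :=
      Integrable.bdd_mul hlint hφm
        ((ae_restrict_iff' measurableSet_Icc).2 (ae_of_all _ hM))
    simpa [mul_comm] using this
  refine gronwall_aux htmem.1 (norm_nonneg _) hφc (fun τ _ => norm_nonneg _) hl0
    (hlint.mono_set (Icc_subset_Icc le_rfl htmem.2)) ?_
  intro τ hτ
  have hτ1 : τ ∈ Icc t0 t1 := ⟨hτ.1, hτ.2.trans htmem.2⟩
  have hsub : uIcc t0 τ ⊆ Icc t0 t1 := uIcc_subset_Icc ⟨le_rfl, ht⟩ hτ1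
  have hI1 : IntervalIntegrable (fun s => X s (ξ1 s)) volume t0 τ :=
    (h1i.mono_set hsub).intervalIntegrable
  have hI2 : IntervalIntegrable (fun s => X s (ξ2 s)) volume t0 τ :=
    (h2i.mono_set hsub).intervalIntegrable
  have hIlφ : IntervalIntegrable (fun s => l s * φ s) volume t0 τ :=
    (hmul.mono_set hsub).intervalIntegrable
  have hrw : ξ1 τ - ξ2 τ = (ξ1 t0 - ξ2 t0)
      + ∫ s in t0..τ, (X s (ξ1 s) - X s (ξ2 s)) := by
    rw [intervalIntegral.integral_sub hI1 hI2, h1e τ hτ1, h2e τ hτ1]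
    abel
  calc φ τ = ‖(ξ1 t0 - ξ2 t0) + ∫ s in t0..τ, (X s (ξ1 s) - X s (ξ2 s))‖ := by
        simp only [hφdef]
        rw [hrw]
    _ ≤ C + ‖∫ s in t0..τ, (X s (ξ1 s) - X s (ξ2 s))‖ := norm_add_le _ _
    _ ≤ C + ∫ s in t0..τ, ‖X s (ξ1 s) - X s (ξ2 s)‖ := by
        gcongr
        exact intervalIntegral.norm_integral_le_integral_norm hτ.1
    _ ≤ C + ∫ s in t0..τ, l s * φ s := by
        gcongr
        refine intervalIntegral.integral_mono_on hτ.1 (hI1.sub hI2).norm hIlφ ?_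
        intro s hs
        have hs1 : s ∈ Icc t0 t1 := ⟨hs.1, hs.2.trans hτ1.2⟩
        exact hlip s hs1 _ (h1A s hs1) _ (h2A s hs1)
end

section
/- Let E be a finite-dimensional real normed space, T ⊆ ℝ an interval, and X : ℝ × E → E such that: (a) t ↦ X(t, x) is measurable for every x ∈ E; (b) x ↦ X(t, x) is continuous for every t ∈ T; (c) for every compact subinterval S ⊆ T and every compact K ⊆ E there exist integrable functions h, ℓ : S → ℝ with ‖X(t, x)‖ ≤ h(t) and ‖X(t, x1) − X(t, x2)‖ ≤ ℓ(t) ‖x1 − x2‖ for all t ∈ S and x, x1, x2 ∈ K. Call ξ a solution through (t0, x) on a subinterval J ⊆ T containing t0 if ξ : J → E is continuous, ξ(t0) = x, u ↦ X(u, ξ(u)) is integrable on every compact subinterval of J, and ξ(t) = x + ∫_{t0}^{t} X(u, ξ(u)) du for all t ∈ J. Define D_X := { (t1, t0, x) ∈ T × T × E : there is a solution through (t0, x) on a subinterval of T containing both t0 and t1 }. Then: (1) any two solutions through the same (t0, x) agree on the intersection of their domains; (2) D_X is open in T × T × E (subspace topology); (3) the map Φ : D_X → E defined by Φ(t1, t0,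 x) := ξ(t1), for any solution ξ through (t0, x) defined at t1, is well defined and continuous. -/
/-!
Everything rests on one estimate: over a time window on which the integrable Lipschitz modulus
has integral at most `1/2`, two solutions with a common base time differ by at most twice their
initial distance (compare the difference with its maximum on the window). A compact interval is
covered by `N` such windows, so the error grows at most by the factor `2ᴺ`; with zero initial
error this is uniqueness. Local existence is the contraction principle for the Picard map on
continuous curves in a closed ball over such a window.

Given a solution on `[c, d]`, first extend it a little beyond both ends inside `T`. Starting from
nearby initial data, build solutions window by window outwards from the initial time: as long as
the error stays below `1/2`, each window starts in a ball that lies in a fixed compact tube around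
the reference solution, so the estimate applies. Choosing the initial error below `2⁻ᴺ` times the
tolerance keeps every solution close to the reference one on all of `[c, d]`. Hence the flow domain
is a neighbourhood of each of its points in `T × T × E`, and the flow is continuous.
-/

open Set MeasureTheory intervalIntegral Filter Topology Metric
open scoped Interval

def IsSolutionOn {E : Type*} [NormedAddCommGroup E] [NormedSpace ℝ E]
    (T : Set ℝ) (X : ℝ → E → E) (t0 : ℝ) (x : E) (J : Set ℝ) (ξ : ℝ → E) : Prop :=
  J ⊆ T ∧ J.OrdConnected ∧ t0 ∈ J ∧ ContinuousOn ξ J ∧ ξ t0 = x ∧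
    (∀ a b : ℝ, Icc a b ⊆ J → IntegrableOn (fun u => X u (ξ u)) (Icc a b)) ∧
    ∀ t ∈ J, ξ t = x + ∫ u in t0..t, X u (ξ u)

theorem MeasureTheory.IntegrableOn.exists_pos_forall_setIntegral_Icc_le {f : ℝ → ℝ} {c d ε : ℝ}
    (hf : IntegrableOn f (Icc c d)) (hε : 0 < ε) :
    ∃ δ > 0, ∀ u v, Icc u v ⊆ Icc c d → v - u ≤ δ → ∫ t in Icc u v, f t ≤ ε := by
  rcases lt_or_ge d c with hdc | hcd
  · refine ⟨1, one_pos, fun u v huv _ => ?_⟩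
    rw [Icc_eq_empty_of_lt hdc, subset_empty_iff] at huv
    simp [huv, hε.le]
  have hint : ∀ w ∈ Icc c d, IntervalIntegrable f volume c w := fun w hw =>
    (hf.mono_set (uIcc_subset_Icc (left_mem_Icc.2 hcd) hw)).intervalIntegrable
  have hF : UniformContinuousOn (fun t => ∫ s in c..t, f s) (Icc c d) := by
    refine isCompact_Icc.uniformContinuousOn_of_continuous ?_
    simpa [uIcc_of_le hcd] using continuousOn_primitive_interval' (a := c)
      (hint d (right_mem_Icc.2 hcd)) (by simp)
  obtain ⟨δ, hδ, hF⟩ := Metric.uniformContinuousOn_iff_le.1 hF ε hε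
  refine ⟨δ, hδ, fun u v huv hlen => ?_⟩
  rcases lt_or_ge v u with hvu | huv'
  · simp [Icc_eq_empty_of_lt hvu, hε.le]
  have hu : u ∈ Icc c d := huv (left_mem_Icc.2 huv')
  have hv : v ∈ Icc c d := huv (right_mem_Icc.2 huv')
  rw [integral_Icc_eq_integral_Ioc, ← integral_of_le huv',
    ← integral_interval_sub_left (hint v hv) (hint u hu)]
  refine (le_abs_self _).trans ?_
  have hvu : dist v u ≤ δ := by rwa [Real.dist_eq, abs_of_nonneg (by linarith)]
  simpa [Real.dist_eq] using hF v hv u hu hvu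

theorem Icc_induction_expanding {c d s Δ : ℝ} {N : ℕ} (hs : s ∈ Icc c d) (hΔ : 0 < Δ)
    (hN : d - c ≤ N * Δ) {P : ℕ → ℝ → ℝ → Prop} (h0 : P 0 s s)
    (hstep : ∀ n < N, ∀ a b a' b', c ≤ a' → a' ≤ a → a ≤ s → s ≤ b → b ≤ b' → b' ≤ d →
      a - a' ≤ Δ → b' - b ≤ Δ → P n a b → P (n + 1) a' b') :
    P N c d := by
  have key : ∀ n ≤ N, P n (max c (s - n * Δ)) (min d (s + n * Δ)) := by
    intro n
    induction n with
    | zero => simpa [hs.1, hs.2] using h0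
    | succ n ih =>
      intro hn
      have hnΔ : 0 ≤ (n : ℝ) * Δ := by positivity
      push_cast
      refine hstep n hn _ _ _ _ (le_max_left _ _) (max_le_max le_rfl (by linarith))
        (max_le hs.1 (by linarith)) (le_min hs.2 (by linarith)) (min_le_min le_rfl (by linarith))
        (min_le_left _ _) ?_ ?_ (ih (Nat.le_of_succ_le hn))
      · rw [sub_le_iff_le_add, add_comm, ← max_add_add_right]
        exact max_le_max (by linarith) (by linarith)
      · rw [sub_le_iff_le_add', add_comm, ← min_add_add_right]
        exact min_le_min (by linarith) (by linarith)
  have := key N le_rfl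
  rwa [max_eq_left (by linarith [hs.2]), min_eq_left (by linarith [hs.1])] at this

theorem Set.OrdConnected.exists_Icc_subset_mem_nhdsWithin {T : Set ℝ} (hT : T.OrdConnected)
    {s : ℝ} (hs : s ∈ T) : ∃ a b, s ∈ Icc a b ∧ Icc a b ⊆ T ∧ Icc a b ∈ 𝓝[T] s := by
  have hL : ∃ a ∈ T, a ≤ s ∧ Ici a ∈ 𝓝[T] s := by
    by_cases h : ∃ a ∈ T, a < s
    · obtain ⟨a, ha, has⟩ := h
      exact ⟨a, ha, has.le, mem_nhdsWithin_of_mem_nhds (Ici_mem_nhds has)⟩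
    · push Not at h
      exact ⟨s, hs, le_rfl, mem_of_superset self_mem_nhdsWithin h⟩
  have hR : ∃ b ∈ T, s ≤ b ∧ Iic b ∈ 𝓝[T] s := by
    by_cases h : ∃ b ∈ T, s < b
    · obtain ⟨b, hb, hsb⟩ := h
      exact ⟨b, hb, hsb.le, mem_nhdsWithin_of_mem_nhds (Iic_mem_nhds hsb)⟩
    · push Not at h
      exact ⟨s, hs, le_rfl, mem_of_superset self_mem_nhdsWithin h⟩
  obtain ⟨a, ha, has, hLa⟩ := hL
  obtain ⟨b, hb, hsb, hRb⟩ := hR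
  exact ⟨a, b, ⟨has, hsb⟩, hT.out ha hb, Ici_inter_Iic (a := a) ▸ inter_mem hLa hRb⟩

theorem exists_isOpen_eq_inter_of_forall_mem_nhdsWithin {α : Type*} [TopologicalSpace α]
    {D S : Set α} (hDS : D ⊆ S) (hD : ∀ q ∈ D, D ∈ 𝓝[S] q) : ∃ V, IsOpen V ∧ D = V ∩ S := by
  refine ⟨interior {q | q ∈ S → q ∈ D}, isOpen_interior, Subset.antisymm
    (fun q hq => ⟨mem_interior_iff_mem_nhds.2 (mem_nhdsWithin_iff_eventually.1 (hD q hq)),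
      hDS hq⟩) fun q hq => interior_subset hq.1 hq.2⟩

section

variable {E : Type*} [NormedAddCommGroup E] {T : Set ℝ} {X : ℝ → E → E}

theorem aestronglyMeasurable_comp_of_caratheodory {α : Type*} [MeasurableSpace α]
    [MeasurableSpace E] [BorelSpace E] [SecondCountableTopology E] {μ : Measure α}
    {Y : α → E → E} {s : Set α} (hs : MeasurableSet s) (hmeas : ∀ y, Measurable fun t => Y t y)
    (hcont : ∀ t ∈ s, Continuous (Y t)) {f : α → E} (hf : AEMeasurable f (μ.restrict s)) :
    AEStronglyMeasurable (fun t => Y t (f t)) (μ.restrict s) := by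
  classical
  -- Redefine `Y` off `s` so that it is continuous in the state for every time.
  set Y' : E → α → E := fun y t => if t ∈ s then Y t y else 0
  have hY' : Measurable (Function.uncurry Y') := by
    refine measurable_uncurry_of_continuous_of_measurable (fun t => ?_) fun y =>
      Measurable.ite hs (hmeas y) measurable_const
    by_cases ht : t ∈ s
    · simpa [Y', ht] using hcont t ht
    · simpa [Y', ht] using continuous_const
  refine (hY'.comp_aemeasurable (hf.prodMk aemeasurable_id)).aestronglyMeasurable.congr ?_
  filter_upwards [ae_restrict_mem hs] with t ht
  simp [Y', ht]

-- One function `k` plays the roles of both the bound `h` and the Lipschitz modulus `ℓ` of the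
-- hypothesis: `|h| + |ℓ|` serves for both.
structure IsIntegrableBoundOn (X : ℝ → E → E) (k : ℝ → ℝ) (I : Set ℝ) (K : Set E) : Prop where
  integrableOn : IntegrableOn k I
  norm_le : ∀ t ∈ I, ∀ y ∈ K, ‖X t y‖ ≤ k t
  norm_sub_le : ∀ t ∈ I, ∀ y₁ ∈ K, ∀ y₂ ∈ K, ‖X t y₁ - X t y₂‖ ≤ k t * ‖y₁ - y₂‖

namespace IsIntegrableBoundOn

variable {k : ℝ → ℝ} {I : Set ℝ} {K : Set E}

theorem mono (hk : IsIntegrableBoundOn X k I K) {I' : Set ℝ} {K' : Set E} (hI : I' ⊆ I)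
    (hK : K' ⊆ K) : IsIntegrableBoundOn X k I' K' :=
  ⟨hk.integrableOn.mono_set hI, fun t ht y hy => hk.norm_le t (hI ht) y (hK hy),
    fun t ht y₁ hy₁ y₂ hy₂ => hk.norm_sub_le t (hI ht) y₁ (hK hy₁) y₂ (hK hy₂)⟩

theorem nonneg (hk : IsIntegrableBoundOn X k I K) {t : ℝ} (ht : t ∈ I) {y : E} (hy : y ∈ K) :
    0 ≤ k t :=
  (norm_nonneg _).trans (hk.norm_le t ht y hy)

theorem integrableOn_comp [MeasurableSpace E] [BorelSpace E] [SecondCountableTopology E]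
    (hk : IsIntegrableBoundOn X k I K) (hI : MeasurableSet I)
    (hXmeas : ∀ y, Measurable fun t => X t y) (hXcont : ∀ t ∈ I, Continuous (X t))
    {η : ℝ → E} (hη : ContinuousOn η I) (hηK : MapsTo η I K) :
    IntegrableOn (fun t => X t (η t)) I :=
  hk.integrableOn.mono' (aestronglyMeasurable_comp_of_caratheodory hI hXmeas hXcont
    (hη.aemeasurable hI)) ((ae_restrict_mem hI).mono fun t ht => hk.norm_le t ht _ (hηK ht))

end IsIntegrableBoundOn

def IsLocallyIntegrablyBounded (T : Set ℝ) (X : ℝ → E → E) : Prop :=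
  ∀ a b, Icc a b ⊆ T → ∀ K : Set E, IsCompact K → ∃ k, IsIntegrableBoundOn X k (Icc a b) K

theorem isLocallyIntegrablyBounded_of_forall
    (hXbd : ∀ a b : ℝ, Icc a b ⊆ T → ∀ K : Set E, IsCompact K →
      ∃ h ℓ : ℝ → ℝ, IntegrableOn h (Icc a b) ∧ IntegrableOn ℓ (Icc a b) ∧
        (∀ t ∈ Icc a b, ∀ x ∈ K, ‖X t x‖ ≤ h t) ∧
        ∀ t ∈ Icc a b, ∀ x1 ∈ K, ∀ x2 ∈ K, ‖X t x1 - X t x2‖ ≤ ℓ t * ‖x1 - x2‖) :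
    IsLocallyIntegrablyBounded T X := by
  intro a b hab K hK
  obtain ⟨h, ℓ, hh, hℓ, hXh, hXℓ⟩ := hXbd a b hab K hK
  refine ⟨fun t => |h t| + |ℓ t|, hh.abs.add hℓ.abs, fun t ht y hy => ?_,
    fun t ht y₁ hy₁ y₂ hy₂ => ?_⟩
  · exact (hXh t ht y hy).trans ((le_abs_self _).trans (le_add_of_nonneg_right (abs_nonneg _)))
  · refine (hXℓ t ht y₁ hy₁ y₂ hy₂).trans (mul_le_mul_of_nonneg_right ?_ (norm_nonneg _))
    exact (le_abs_self _).trans (le_add_of_nonneg_left (abs_nonneg _))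

variable [NormedSpace ℝ E]

theorem norm_integral_le_setIntegral_Icc {f : ℝ → E} {g : ℝ → ℝ} {a b s t : ℝ}
    (hs : s ∈ Icc a b) (ht : t ∈ Icc a b) (hg : IntegrableOn g (Icc a b))
    (hfg : ∀ u ∈ Icc a b, ‖f u‖ ≤ g u) : ‖∫ u in s..t, f u‖ ≤ ∫ u in Icc a b, g u := by
  have hsub : Ι s t ⊆ Icc a b := uIoc_subset_uIcc.trans (uIcc_subset_Icc hs ht)
  rw [norm_integral_eq_norm_integral_uIoc]
  calc ‖∫ u in Ι s t, f u‖ ≤ ∫ u in Ι s t, g u :=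
        norm_integral_le_of_norm_le (hg.mono_set hsub)
          ((ae_restrict_mem measurableSet_uIoc).mono fun u hu => hfg u (hsub hu))
    _ ≤ ∫ u in Icc a b, g u :=
        setIntegral_mono_set hg ((ae_restrict_mem measurableSet_Icc).mono fun u hu =>
          (norm_nonneg _).trans (hfg u hu)) hsub.eventuallyLE

theorem IsIntegrableBoundOn.norm_integral_sub_le {k : ℝ → ℝ} {K : Set E} {a b s t D : ℝ}
    (hk : IsIntegrableBoundOn X k (Icc a b) K) {γ₁ γ₂ : ℝ → E} (h₁ : MapsTo γ₁ (Icc a b) K)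
    (h₂ : MapsTo γ₂ (Icc a b) K) (hD : ∀ u ∈ Icc a b, ‖γ₁ u - γ₂ u‖ ≤ D) (hs : s ∈ Icc a b)
    (ht : t ∈ Icc a b) :
    ‖∫ u in s..t, (X u (γ₁ u) - X u (γ₂ u))‖ ≤ (∫ u in Icc a b, k u) * D :=
  (norm_integral_le_setIntegral_Icc hs ht (hk.integrableOn.mul_const D) fun u hu =>
    (hk.norm_sub_le u hu _ (h₁ hu) _ (h₂ hu)).trans
      (mul_le_mul_of_nonneg_left (hD u hu) (hk.nonneg hu (h₁ hu)))).trans_eq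
    (MeasureTheory.integral_mul_const D k)

theorem isSolutionOn_Icc_self {s : ℝ} (hs : s ∈ T) (y : E) :
    IsSolutionOn T X s y (Icc s s) fun _ => y := by
  refine ⟨by simpa using hs, ordConnected_Icc, left_mem_Icc.2 le_rfl, continuousOn_const, rfl,
    fun a b hab => .of_measure_zero (measure_mono_null hab (by simp)), fun t ht => ?_⟩
  obtain rfl : t = s := by simpa using ht
  simp

namespace IsSolutionOn

variable {t0 : ℝ} {x : E} {J : Set ℝ} {ξ : ℝ → E}

theorem subset (h : IsSolutionOn T X t0 x J ξ) : J ⊆ T := h.1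

theorem ordConnected (h : IsSolutionOn T X t0 x J ξ) : J.OrdConnected := h.2.1

theorem mem (h : IsSolutionOn T X t0 x J ξ) : t0 ∈ J := h.2.2.1

theorem continuousOn (h : IsSolutionOn T X t0 x J ξ) : ContinuousOn ξ J := h.2.2.2.1

theorem apply_base (h : IsSolutionOn T X t0 x J ξ) : ξ t0 = x := h.2.2.2.2.1

theorem integrableOn (h : IsSolutionOn T X t0 x J ξ) {a b : ℝ} (hab : Icc a b ⊆ J) :
    IntegrableOn (fun u => X u (ξ u)) (Icc a b) :=
  h.2.2.2.2.2.1 a b hab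

theorem apply_eq (h : IsSolutionOn T X t0 x J ξ) {t : ℝ} (ht : t ∈ J) :
    ξ t = x + ∫ u in t0..t, X u (ξ u) :=
  h.2.2.2.2.2.2 t ht

theorem intervalIntegrable (h : IsSolutionOn T X t0 x J ξ) {a b : ℝ} (ha : a ∈ J)
    (hb : b ∈ J) : IntervalIntegrable (fun u => X u (ξ u)) volume a b :=
  (h.integrableOn (h.ordConnected.uIcc_subset ha hb)).intervalIntegrable

theorem eq_add_integral (h : IsSolutionOn T X t0 x J ξ) {s t : ℝ} (hs : s ∈ J) (ht : t ∈ J) :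
    ξ t = ξ s + ∫ u in s..t, X u (ξ u) := by
  have ht0 := h.mem
  rw [h.apply_eq ht, h.apply_eq hs, add_assoc, integral_add_adjacent_intervals
    (h.intervalIntegrable ht0 hs) (h.intervalIntegrable hs ht)]

theorem rebase (h : IsSolutionOn T X t0 x J ξ) {s : ℝ} (hs : s ∈ J) :
    IsSolutionOn T X s (ξ s) J ξ :=
  ⟨h.subset, h.ordConnected, hs, h.continuousOn, rfl, fun _ _ => h.integrableOn,
    fun _ ht => h.eq_add_integral hs ht⟩

theorem mono (h : IsSolutionOn T X t0 x J ξ) {S : Set ℝ} (hS : S ⊆ J) (hSc : S.OrdConnected)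
    (ht0 : t0 ∈ S) : IsSolutionOn T X t0 x S ξ :=
  ⟨hS.trans h.subset, hSc, ht0, h.continuousOn.mono hS, h.apply_base,
    fun _ _ hab => h.integrableOn (hab.trans hS), fun _ ht => h.apply_eq (hS ht)⟩

theorem restrict (h : IsSolutionOn T X t0 x J ξ) {a b s : ℝ} (hI : Icc a b ⊆ J)
    (hs : s ∈ Icc a b) : IsSolutionOn T X s (ξ s) (Icc a b) ξ :=
  (h.rebase (hI hs)).mono hI ordConnected_Icc hs

theorem congr {η : ℝ → E} (h : IsSolutionOn T X t0 x J ξ) (he : EqOn η ξ J) :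
    IsSolutionOn T X t0 x J η := by
  obtain ⟨hJT, hJ, ht0, hcont, hx, hint, heq⟩ := h
  have hX : EqOn (fun u => X u (η u)) (fun u => X u (ξ u)) J := fun u hu => by simp [he hu]
  refine ⟨hJT, hJ, ht0, hcont.congr he, he ht0 ▸ hx, fun a b hab => ?_, fun t ht => ?_⟩
  · exact (hint a b hab).congr_fun (hX.symm.mono hab) measurableSet_Icc
  · rw [he ht, heq t ht, integral_congr (hX.symm.mono (hJ.uIcc_subset ht0 ht))]

variable {a m b : ℝ} {y : E} {η : ℝ → E}

theorem union_Icc (h₁ : IsSolutionOn T X m y (Icc a m) η) (h₂ : IsSolutionOn T X m y (Icc m b) η) :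
    IsSolutionOn T X m y (Icc a b) η := by
  have hI : Icc a m ∪ Icc m b = Icc a b := Icc_union_Icc_eq_Icc h₁.mem.1 h₂.mem.2
  refine ⟨hI ▸ union_subset h₁.subset h₂.subset, ordConnected_Icc, hI ▸ Or.inl h₁.mem, ?_,
    h₁.apply_base, fun c d hcd => ?_, ?_⟩
  · exact hI ▸ h₁.continuousOn.union_of_isClosed h₂.continuousOn isClosed_Icc isClosed_Icc
  · exact (hI ▸ (h₁.integrableOn subset_rfl).union (h₂.integrableOn subset_rfl)).mono_set hcd
  · rw [← hI]
    rintro t (ht | ht)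
    exacts [h₁.apply_eq ht, h₂.apply_eq ht]

theorem glue {s₁ s₂ : ℝ} {y₁ y₂ : E} {η₁ η₂ : ℝ → E}
    (h₁ : IsSolutionOn T X s₁ y₁ (Icc a m) η₁) (h₂ : IsSolutionOn T X s₂ y₂ (Icc m b) η₂)
    (hm : η₁ m = η₂ m) :
    ∃ η, IsSolutionOn T X m (η₁ m) (Icc a b) η ∧ EqOn η η₁ (Icc a m) ∧ EqOn η η₂ (Icc m b) := by
  have hm₁ : m ∈ Icc a m := ⟨h₁.mem.1.trans h₁.mem.2, le_rfl⟩
  have hm₂ : m ∈ Icc m b := ⟨le_rfl, h₂.mem.1.trans h₂.mem.2⟩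
  have e₁ : EqOn (fun t => if t ≤ m then η₁ t else η₂ t) η₁ (Icc a m) := fun t ht => if_pos ht.2
  have e₂ : EqOn (fun t => if t ≤ m then η₁ t else η₂ t) η₂ (Icc m b) := fun t ht => by
    rcases ht.1.eq_or_lt with rfl | hlt
    · simp [hm]
    · simp [not_le.2 hlt]
  exact ⟨_, union_Icc ((h₁.rebase hm₁).congr e₁) (hm ▸ (h₂.rebase hm₂).congr e₂), e₁, e₂⟩

theorem exists_extend {a' b' s : ℝ} {ζ₁ ζ₂ : ℝ → E} (h : IsSolutionOn T X s y (Icc a b) η)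
    (h₁ : IsSolutionOn T X a (η a) (Icc a' a) ζ₁) (h₂ : IsSolutionOn T X b (η b) (Icc b b') ζ₂) :
    ∃ η', IsSolutionOn T X s y (Icc a' b') η' ∧
      EqOn η' ζ₁ (Icc a' a) ∧ EqOn η' η (Icc a b) ∧ EqOn η' ζ₂ (Icc b b') := by
  have hab : a ≤ b := h.mem.1.trans h.mem.2
  obtain ⟨ηL, hL, eL₁, eL⟩ := h₁.glue (h.restrict subset_rfl (right_mem_Icc.2 hab))
    h₁.apply_base
  obtain ⟨η', hR, eR, eR₂⟩ := hL.glue h₂ ((eL (right_mem_Icc.2 hab)).trans h₂.apply_base.symm)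
  have hs : s ∈ Icc a' b' := ⟨h₁.mem.1.trans h.mem.1, h.mem.2.trans h₂.mem.2⟩
  refine ⟨η', ?_, fun t ht => ?_, fun t ht => ?_, eR₂⟩
  · have := hR.rebase hs
    rwa [eR ⟨hs.1, h.mem.2⟩, eL h.mem, h.apply_base] at this
  · rw [eR ⟨ht.1, ht.2.trans hab⟩, eL₁ ht]
  · rw [eR ⟨h₁.mem.1.trans ht.1, ht.2⟩, eL ht]

end IsSolutionOn

theorem IsSolutionOn.norm_sub_le_two_mul {a b s : ℝ} {y z : E} {η ξ : ℝ → E} {k : ℝ → ℝ}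
    {K : Set E} (hk : IsIntegrableBoundOn X k (Icc a b) K) (hk2 : ∫ t in Icc a b, k t ≤ 1 / 2)
    (hη : IsSolutionOn T X s y (Icc a b) η) (hξ : IsSolutionOn T X s z (Icc a b) ξ)
    (hηK : MapsTo η (Icc a b) K) (hξK : MapsTo ξ (Icc a b) K) :
    ∀ t ∈ Icc a b, ‖η t - ξ t‖ ≤ 2 * ‖y - z‖ := by
  have hs := hη.mem
  obtain ⟨u, hu, hmax⟩ := isCompact_Icc.exists_isMaxOn ⟨s, hs⟩
    (hη.continuousOn.sub hξ.continuousOn).norm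
  set M := ‖η u - ξ u‖
  have hmax : ∀ t ∈ Icc a b, ‖η t - ξ t‖ ≤ M := fun t ht => hmax ht
  have hdiff : η u - ξ u = (y - z) + ∫ v in s..u, (X v (η v) - X v (ξ v)) := by
    rw [integral_sub (hη.intervalIntegrable hs hu) (hξ.intervalIntegrable hs hu),
      hη.apply_eq hu, hξ.apply_eq hu]
    abel
  have hM : M ≤ ‖y - z‖ + M / 2 :=
    calc M ≤ ‖y - z‖ + ‖∫ v in s..u, (X v (η v) - X v (ξ v))‖ :=
          (congrArg norm hdiff).le.trans (norm_add_le _ _)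
      _ ≤ ‖y - z‖ + (∫ v in Icc a b, k v) * M := by
        gcongr
        exact hk.norm_integral_sub_le hηK hξK hmax hs hu
      _ ≤ ‖y - z‖ + M / 2 := by nlinarith [norm_nonneg (η u - ξ u)]
  exact fun t ht => (hmax t ht).trans (by linarith)

theorem IsSolutionOn.eqOn (hX : IsLocallyIntegrablyBounded T X) {t0 : ℝ} {x : E}
    {J₁ J₂ : Set ℝ} {ξ₁ ξ₂ : ℝ → E} (h₁ : IsSolutionOn T X t0 x J₁ ξ₁)
    (h₂ : IsSolutionOn T X t0 x J₂ ξ₂) : EqOn ξ₁ ξ₂ (J₁ ∩ J₂) := by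
  rintro t ⟨ht₁, ht₂⟩
  have hI₁ : uIcc t0 t ⊆ J₁ := h₁.ordConnected.uIcc_subset h₁.mem ht₁
  have hI₂ : uIcc t0 t ⊆ J₂ := h₂.ordConnected.uIcc_subset h₂.mem ht₂
  have hK : IsCompact (ξ₁ '' uIcc t0 t ∪ ξ₂ '' uIcc t0 t) :=
    (isCompact_uIcc.image_of_continuousOn (h₁.continuousOn.mono hI₁)).union
      (isCompact_uIcc.image_of_continuousOn (h₂.continuousOn.mono hI₂))
  obtain ⟨k, hk⟩ := hX _ _ (hI₁.trans h₁.subset) _ hK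
  obtain ⟨δ, hδ, hwin⟩ := hk.integrableOn.exists_pos_forall_setIntegral_Icc_le one_half_pos
  obtain ⟨N, hN⟩ := Archimedean.arch (max t0 t - min t0 t) hδ
  have window : ∀ u v w, Icc u v ⊆ uIcc t0 t → v - u ≤ δ → w ∈ Icc u v → ξ₁ w = ξ₂ w →
      EqOn ξ₁ ξ₂ (Icc u v) := fun u v w huv hlen hw hξw t ht => by
    have := (h₁.restrict (huv.trans hI₁) hw).norm_sub_le_two_mul (hk.mono huv subset_rfl)
      (hwin u v huv hlen) (h₂.restrict (huv.trans hI₂) hw)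
      (fun t ht => .inl (mem_image_of_mem _ (huv ht)))
      (fun t ht => .inr (mem_image_of_mem _ (huv ht))) t ht
    rwa [hξw, sub_self, norm_zero, mul_zero, norm_le_zero_iff, sub_eq_zero] at this
  refine Icc_induction_expanding (P := fun _ a b => EqOn ξ₁ ξ₂ (Icc a b)) left_mem_uIcc hδ
    (by rwa [nsmul_eq_mul] at hN) ?_ ?_ right_mem_uIcc
  · rintro t ⟨ht, ht'⟩
    rw [le_antisymm ht' ht, h₁.apply_base, h₂.apply_base]
  · intro _ _ a b a' b' hca' ha'a has hsb hbb' hb'd hlen₁ hlen₂ hab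
    rw [← Icc_union_Icc_eq_Icc ha'a (has.trans (hsb.trans hbb')),
      ← Icc_union_Icc_eq_Icc (has.trans hsb) hbb']
    refine (window a' a a (Icc_subset_Icc hca' ((has.trans hsb).trans (hbb'.trans hb'd))) hlen₁
      (right_mem_Icc.2 ha'a) (hab (left_mem_Icc.2 (has.trans hsb)))).union (hab.union ?_)
    exact window b b' b (Icc_subset_Icc (hca'.trans (ha'a.trans (has.trans hsb))) hb'd) hlen₂
      (left_mem_Icc.2 hbb') (hab (right_mem_Icc.2 (has.trans hsb)))

def flowDomain (T : Set ℝ) (X : ℝ → E → E) : Set (ℝ × ℝ × E) :=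
  {q | ∃ J ξ, IsSolutionOn T X q.2.1 q.2.2 J ξ ∧ q.1 ∈ J}

open Classical in
noncomputable def flow (T : Set ℝ) (X : ℝ → E → E) (t1 t0 : ℝ) (x : E) : E :=
  if h : ∃ J ξ, IsSolutionOn T X t0 x J ξ ∧ t1 ∈ J then h.choose_spec.choose t1 else 0

theorem flowDomain_subset : flowDomain T X ⊆ T ×ˢ T ×ˢ (univ : Set E) :=
  fun _ ⟨_, _, hξ, ht1⟩ => ⟨hξ.subset ht1, hξ.subset hξ.mem, trivial⟩

theorem flow_eq (hX : IsLocallyIntegrablyBounded T X) {t1 t0 : ℝ} {x : E} {J : Set ℝ}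
    {ξ : ℝ → E} (hξ : IsSolutionOn T X t0 x J ξ) (ht1 : t1 ∈ J) : flow T X t1 t0 x = ξ t1 := by
  have h : ∃ J ξ, IsSolutionOn T X t0 x J ξ ∧ t1 ∈ J := ⟨J, ξ, hξ, ht1⟩
  rw [flow, dif_pos h]
  exact h.choose_spec.choose_spec.1.eqOn hX hξ ⟨h.choose_spec.choose_spec.2, ht1⟩

theorem exists_isSolutionOn_mapsTo_closedBall [CompleteSpace E] [MeasurableSpace E] [BorelSpace E]
    [SecondCountableTopology E] (hXmeas : ∀ y, Measurable fun t => X t y)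
    (hXcont : ∀ t ∈ T, Continuous (X t)) {a b s r : ℝ} {y : E} {k : ℝ → ℝ}
    (hsub : Icc a b ⊆ T) (hs : s ∈ Icc a b) (hr : 0 ≤ r)
    (hk : IsIntegrableBoundOn X k (Icc a b) (closedBall y r)) (hkr : ∫ t in Icc a b, k t ≤ r)
    (hk2 : ∫ t in Icc a b, k t ≤ 1 / 2) :
    ∃ η, IsSolutionOn T X s y (Icc a b) η ∧ MapsTo η (Icc a b) (closedBall y r) := by
  have hab : a ≤ b := hs.1.trans hs.2
  have : CompleteSpace (closedBall y r) := isClosed_closedBall.completeSpace_coe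
  have : CompactSpace (Icc a b) := isCompact_iff_compactSpace.1 isCompact_Icc
  have : Nonempty C(Icc a b, closedBall y r) := ⟨.const _ ⟨y, mem_closedBall_self hr⟩⟩
  let γ : C(Icc a b, closedBall y r) → ℝ → E := fun η => IccExtend hab fun t => (η t : E)
  have hγc : ∀ η, Continuous (γ η) := fun η =>
    (continuous_subtype_val.comp η.continuous).Icc_extend'
  have hγB : ∀ η t, γ η t ∈ closedBall y r := fun η t => (η _).2
  have hint : ∀ η, IntegrableOn (fun t => X t (γ η t)) (Icc a b) := fun η =>
    hk.integrableOn_comp measurableSet_Icc hXmeas (fun t ht => hXcont t (hsub ht))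
      (hγc η).continuousOn fun t _ => hγB η t
  have hmem : ∀ η (t : Icc a b), y + ∫ u in s..t, X u (γ η u) ∈ closedBall y r := fun η t => by
    rw [mem_closedBall, dist_eq_norm, add_sub_cancel_left]
    exact (norm_integral_le_setIntegral_Icc hs t.2 hk.integrableOn fun u hu =>
      hk.norm_le u hu _ (hγB η u)).trans hkr
  have hii : ∀ η, ∀ t₁ ∈ Icc a b, ∀ t₂ ∈ Icc a b,
      IntervalIntegrable (fun u => X u (γ η u)) volume t₁ t₂ :=
    fun η t₁ ht₁ t₂ ht₂ => ((hint η).mono_set (uIcc_subset_Icc ht₁ ht₂)).intervalIntegrable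
  have hcont : ∀ η, Continuous fun t : Icc a b => y + ∫ u in s..t, X u (γ η u) := fun η =>
    continuous_const.add ((continuousOn_primitive_interval' (hii η a (left_mem_Icc.2 hab) b
      (right_mem_Icc.2 hab)) (Icc_subset_uIcc hs)).comp_continuous continuous_subtype_val
      fun t => Icc_subset_uIcc t.2)
  let P : C(Icc a b, closedBall y r) → C(Icc a b, closedBall y r) := fun η =>
    ⟨fun t => ⟨_, hmem η t⟩, (hcont η).subtype_mk _⟩
  have hP : ContractingWith (1 / 2) P := by
    refine ⟨by rw [one_div, NNReal.inv_lt_one_iff two_ne_zero]; norm_num,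
      LipschitzWith.of_dist_le_mul fun η₁ η₂ => ?_⟩
    rw [ContinuousMap.dist_le (by positivity)]
    intro t
    change dist (y + _) (y + _) ≤ _
    rw [dist_add_left, dist_eq_norm, ← integral_sub (hii η₁ s hs t t.2) (hii η₂ s hs t t.2)]
    have hγ : ∀ u ∈ Icc a b, ‖γ η₁ u - γ η₂ u‖ ≤ dist η₁ η₂ := fun u _ => by
      rw [← dist_eq_norm]
      exact ContinuousMap.dist_apply_le_dist (f := η₁) (g := η₂) (projIcc a b hab u)
    calc _ ≤ (∫ u in Icc a b, k u) * dist η₁ η₂ :=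
          hk.norm_integral_sub_le (fun u _ => hγB η₁ u) (fun u _ => hγB η₂ u) hγ hs t.2
      _ ≤ 1 / 2 * dist η₁ η₂ := mul_le_mul_of_nonneg_right hk2 dist_nonneg
      _ = _ := by norm_num
  obtain ⟨η, hη⟩ : ∃ η, P η = η := ⟨_, hP.fixedPoint_isFixedPt⟩
  have heq : ∀ t ∈ Icc a b, γ η t = y + ∫ u in s..t, X u (γ η u) := fun t ht => by
    conv_lhs => rw [← hη]
    simp [γ, IccExtend_of_mem hab _ ht, P]
  refine ⟨γ η, ⟨hsub, ordConnected_Icc, hs, (hγc η).continuousOn, ?_,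
    fun c d hcd => (hint η).mono_set hcd, heq⟩, fun t _ => hγB η t⟩
  rw [heq s hs, integral_same, add_zero]

theorem IsSolutionOn.exists_isSolutionOn_norm_sub_le [CompleteSpace E] [MeasurableSpace E]
    [BorelSpace E] [SecondCountableTopology E] (hXmeas : ∀ y, Measurable fun t => X t y)
    (hXcont : ∀ t ∈ T, Continuous (X t)) {a b s : ℝ} {y : E} {ξ₀ : ℝ → E} {k : ℝ → ℝ}
    {K : Set E} (hξ₀ : IsSolutionOn T X s (ξ₀ s) (Icc a b) ξ₀) (hξ₀K : MapsTo ξ₀ (Icc a b) K)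
    (hk : IsIntegrableBoundOn X k (Icc a b) K) (hk2 : ∫ t in Icc a b, k t ≤ 1 / 2)
    (hy : closedBall y (1 / 2) ⊆ K) :
    ∃ η, IsSolutionOn T X s y (Icc a b) η ∧ ∀ t ∈ Icc a b, ‖η t - ξ₀ t‖ ≤ 2 * ‖y - ξ₀ s‖ := by
  obtain ⟨η, hη, hηy⟩ := exists_isSolutionOn_mapsTo_closedBall hXmeas hXcont hξ₀.subset hξ₀.mem
    (by norm_num) (hk.mono subset_rfl hy) hk2 hk2
  exact ⟨η, hη, hη.norm_sub_le_two_mul hk hk2 hξ₀ (hηy.mono_right hy) hξ₀K⟩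

variable [ProperSpace E] [MeasurableSpace E] [BorelSpace E]

theorem IsSolutionOn.exists_forall_norm_sub_lt (hXmeas : ∀ y, Measurable fun t => X t y)
    (hXcont : ∀ t ∈ T, Continuous (X t))
    (hX : IsLocallyIntegrablyBounded T X) {c d t0 : ℝ} {x : E} {ξ₀ : ℝ → E}
    (hξ₀ : IsSolutionOn T X t0 x (Icc c d) ξ₀) {ρ : ℝ} (hρ : 0 < ρ) :
    ∃ ε > 0, ∀ s ∈ Icc c d, ∀ y, ‖y - ξ₀ s‖ < ε →
      ∃ η, IsSolutionOn T X s y (Icc c d) η ∧ ∀ t ∈ Icc c d, ‖η t - ξ₀ t‖ < ρ := by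
  set K := cthickening 1 (ξ₀ '' Icc c d)
  have hξ₀K : MapsTo ξ₀ (Icc c d) K := fun t ht =>
    self_subset_cthickening _ (mem_image_of_mem _ ht)
  obtain ⟨k, hk⟩ := hX c d hξ₀.subset K (isCompact_Icc.image_of_continuousOn hξ₀.continuousOn).cthickening
  obtain ⟨δ, hδ, hwin⟩ := hk.integrableOn.exists_pos_forall_setIntegral_Icc_le one_half_pos
  obtain ⟨N, hN⟩ := Archimedean.arch (d - c) hδ
  -- The error may double on each of the `N` steps, so it must start below `2⁻ᴺ`.
  refine ⟨min ρ (1 / 2) / 2 ^ N, by positivity, fun s hs y hy => ?_⟩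
  have hyN : 2 ^ N * ‖y - ξ₀ s‖ < min ρ (1 / 2) := by
    rwa [lt_div_iff₀ (by positivity), mul_comm] at hy
  have window : ∀ u v w z, Icc u v ⊆ Icc c d → v - u ≤ δ → w ∈ Icc u v → ‖z - ξ₀ w‖ ≤ 1 / 2 →
      ∃ ζ, IsSolutionOn T X w z (Icc u v) ζ ∧ ∀ t ∈ Icc u v, ‖ζ t - ξ₀ t‖ ≤ 2 * ‖z - ξ₀ w‖ :=
    fun u v w z huv hlen hw hz => (hξ₀.restrict huv hw).exists_isSolutionOn_norm_sub_le hXmeas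
      hXcont (hξ₀K.mono_left huv) (hk.mono huv subset_rfl) (hwin u v huv hlen)
      ((closedBall_subset_closedBall' (by rw [dist_eq_norm]; linarith)).trans
        (closedBall_subset_cthickening (mem_image_of_mem _ (huv hw)) 1))
  refine (Icc_induction_expanding (P := fun n a b => ∃ η, IsSolutionOn T X s y (Icc a b) η ∧
      ∀ t ∈ Icc a b, ‖η t - ξ₀ t‖ ≤ 2 ^ n * ‖y - ξ₀ s‖) hs hδ (by rwa [nsmul_eq_mul] at hN)
    ⟨_, isSolutionOn_Icc_self (hξ₀.subset hs) y, fun t ht => by simp [le_antisymm ht.2 ht.1]⟩ ?_).imp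
    fun η hη => ⟨hη.1, fun t ht => (hη.2 t ht).trans_lt (hyN.trans_le (min_le_left _ _))⟩
  intro n hn a b a' b' hca' ha'a has hsb hbb' hb'd hlen₁ hlen₂ ⟨η, hη, hηξ₀⟩
  have hab := has.trans hsb
  have hsmall : 2 ^ n * ‖y - ξ₀ s‖ ≤ 1 / 2 :=
    calc 2 ^ n * ‖y - ξ₀ s‖ ≤ 2 ^ N * ‖y - ξ₀ s‖ := by gcongr; norm_num
      _ ≤ 1 / 2 := hyN.le.trans (min_le_right _ _)
  obtain ⟨ζ₁, h₁, hζ₁⟩ := window a' a a (η a) (Icc_subset_Icc hca' (hab.trans (hbb'.trans hb'd)))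
    hlen₁ (right_mem_Icc.2 ha'a) ((hηξ₀ a (left_mem_Icc.2 hab)).trans hsmall)
  obtain ⟨ζ₂, h₂, hζ₂⟩ := window b b' b (η b) (Icc_subset_Icc (hca'.trans (ha'a.trans hab)) hb'd)
    hlen₂ (left_mem_Icc.2 hbb') ((hηξ₀ b (right_mem_Icc.2 hab)).trans hsmall)
  obtain ⟨η', hη', e₁, e, e₂⟩ := hη.exists_extend h₁ h₂
  refine ⟨η', hη', ?_⟩
  rw [← Icc_union_Icc_eq_Icc ha'a (hab.trans hbb'), ← Icc_union_Icc_eq_Icc hab hbb', pow_succ]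
  rintro t (ht | ht | ht)
  · rw [e₁ ht]
    nlinarith [hζ₁ t ht, hηξ₀ a (left_mem_Icc.2 hab)]
  · rw [e ht]
    nlinarith [hηξ₀ t ht, norm_nonneg (y - ξ₀ s), pow_pos (two_pos : (0 : ℝ) < 2) n]
  · rw [e₂ ht]
    nlinarith [hζ₂ t ht, hηξ₀ b (right_mem_Icc.2 hab)]

theorem exists_isSolutionOn_mem_nhdsWithin (hT : T.OrdConnected)
    (hXmeas : ∀ y, Measurable fun t => X t y) (hXcont : ∀ t ∈ T, Continuous (X t))
    (hX : IsLocallyIntegrablyBounded T X) {s : ℝ} (hs : s ∈ T) (y : E) :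
    ∃ a b η, Icc a b ∈ 𝓝[T] s ∧ IsSolutionOn T X s y (Icc a b) η := by
  obtain ⟨a, b, hsab, habT, habs⟩ := hT.exists_Icc_subset_mem_nhdsWithin hs
  obtain ⟨k, hk⟩ := hX a b habT (closedBall y (1 / 2)) (isCompact_closedBall _ _)
  obtain ⟨δ, hδ, hwin⟩ := hk.integrableOn.exists_pos_forall_setIntegral_Icc_le one_half_pos
  have hsub : Icc (max a (s - δ / 2)) (min b (s + δ / 2)) ⊆ Icc a b :=
    Icc_subset_Icc (le_max_left _ _) (min_le_left _ _)
  have hk2 := hwin _ _ hsub (by linarith [le_max_right a (s - δ / 2), min_le_right b (s + δ / 2)])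
  obtain ⟨η, hη, -⟩ := exists_isSolutionOn_mapsTo_closedBall hXmeas hXcont (hsub.trans habT)
    ⟨max_le hsab.1 (by linarith), le_min hsab.2 (by linarith)⟩ (by norm_num)
    (hk.mono hsub subset_rfl) hk2 hk2
  refine ⟨_, _, η, ?_, hη⟩
  rw [← Icc_inter_Icc]
  exact inter_mem habs (mem_nhdsWithin_of_mem_nhds (Icc_mem_nhds (by linarith) (by linarith)))

theorem IsSolutionOn.exists_extension (hT : T.OrdConnected)
    (hXmeas : ∀ y, Measurable fun t => X t y) (hXcont : ∀ t ∈ T, Continuous (X t))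
    (hX : IsLocallyIntegrablyBounded T X) {t0 c d : ℝ} {x : E} {ξ : ℝ → E}
    (hξ : IsSolutionOn T X t0 x (Icc c d) ξ) :
    ∃ c' d' η, IsSolutionOn T X t0 x (Icc c' d') η ∧ ∀ t ∈ Icc c d, Icc c' d' ∈ 𝓝[T] t := by
  have hcd : c ≤ d := hξ.mem.1.trans hξ.mem.2
  obtain ⟨a₁, b₁, ζ₁, hN₁, h₁⟩ :=
    exists_isSolutionOn_mem_nhdsWithin hT hXmeas hXcont hX (hξ.subset (left_mem_Icc.2 hcd)) (ξ c)
  obtain ⟨a₂, b₂, ζ₂, hN₂, h₂⟩ :=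
    exists_isSolutionOn_mem_nhdsWithin hT hXmeas hXcont hX (hξ.subset (right_mem_Icc.2 hcd)) (ξ d)
  obtain ⟨η, hη, -⟩ := hξ.exists_extend
    (h₁.mono (Icc_subset_Icc_right h₁.mem.2) ordConnected_Icc (right_mem_Icc.2 h₁.mem.1))
    (h₂.mono (Icc_subset_Icc_left h₂.mem.1) ordConnected_Icc (left_mem_Icc.2 h₂.mem.2))
  refine ⟨a₁, b₂, η, hη, fun t ht => Ici_inter_Iic (a := a₁) ▸ inter_mem ?_ ?_⟩
  · rcases (h₁.mem.1.trans ht.1).lt_or_eq with hlt | rfl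
    · exact mem_nhdsWithin_of_mem_nhds (Ici_mem_nhds hlt)
    · rw [le_antisymm h₁.mem.1 ht.1] at hN₁ ⊢
      exact mem_of_superset hN₁ Icc_subset_Ici_self
  · rcases (ht.2.trans h₂.mem.2).lt_or_eq with hlt | rfl
    · exact mem_nhdsWithin_of_mem_nhds (Iic_mem_nhds hlt)
    · rw [le_antisymm h₂.mem.2 ht.2] at hN₂
      exact mem_of_superset hN₂ Icc_subset_Iic_self

theorem eventually_mem_flowDomain_and_dist_flow_lt (hT : T.OrdConnected)
    (hXmeas : ∀ y, Measurable fun t => X t y)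
    (hXcont : ∀ t ∈ T, Continuous (X t)) (hX : IsLocallyIntegrablyBounded T X)
    {q : ℝ × ℝ × E} (hq : q ∈ flowDomain T X) {ρ : ℝ} (hρ : 0 < ρ) :
    ∀ᶠ q' in 𝓝[T ×ˢ T ×ˢ univ] q, q' ∈ flowDomain T X ∧
      dist (flow T X q'.1 q'.2.1 q'.2.2) (flow T X q.1 q.2.1 q.2.2) < ρ := by
  obtain ⟨t1, t0, x⟩ := q
  obtain ⟨J, ξ, hξ, ht1⟩ : ∃ J ξ, IsSolutionOn T X t0 x J ξ ∧ t1 ∈ J := hq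
  obtain ⟨c, d, ξ₀, hξ₀, hcd⟩ := (hξ.mono (hξ.ordConnected.uIcc_subset hξ.mem ht1) ordConnected_uIcc
    left_mem_uIcc).exists_extension hT hXmeas hXcont hX
  have hπ : ∀ (π : ℝ × ℝ × E → ℝ) (t : ℝ), Continuous π → MapsTo π (T ×ˢ T ×ˢ univ) T →
      π (t1, t0, x) = t → t ∈ uIcc t0 t1 →
      Tendsto π (𝓝[T ×ˢ T ×ˢ univ] (t1, t0, x)) (𝓝[Icc c d] t) :=
    fun π t hπc hπT hπt ht => hπt ▸ (hπc.continuousWithinAt.tendsto_nhdsWithin hπT).mono_right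
      (nhdsWithin_le_of_mem (hcd _ (hπt ▸ ht)))
  have h₀ := hπ _ t0 (continuous_fst.comp continuous_snd) (fun _ h => h.2.1) rfl left_mem_uIcc
  have h₁ := hπ _ t1 continuous_fst (fun _ h => h.1) rfl right_mem_uIcc
  have ht1' : t1 ∈ Icc c d := mem_of_mem_nhdsWithin (hξ.subset ht1) (hcd t1 right_mem_uIcc)
  obtain ⟨ε, hε, htube⟩ := hξ₀.exists_forall_norm_sub_lt hXmeas hXcont hX (half_pos hρ)
  have hx : Tendsto (fun q' : ℝ × ℝ × E => q'.2.2 - ξ₀ q'.2.1) (𝓝[T ×ˢ T ×ˢ univ] (t1, t0, x))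
      (𝓝 (x - ξ₀ t0)) := (continuous_snd.comp continuous_snd).continuousWithinAt.tendsto.sub
    ((hξ₀.continuousOn t0 hξ₀.mem).tendsto.comp h₀)
  rw [hξ₀.apply_base, sub_self] at hx
  filter_upwards [h₀ self_mem_nhdsWithin, h₁ self_mem_nhdsWithin,
    Metric.tendsto_nhds.1 hx ε hε,
    Metric.tendsto_nhds.1 ((hξ₀.continuousOn t1 ht1').tendsto.comp h₁) _ (half_pos hρ)]
    with ⟨t1', t0', x'⟩ ht0' ht1'' hx' hξ₀t1'
  rw [dist_zero_right] at hx'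
  obtain ⟨η, hη, hηξ₀⟩ := htube t0' ht0' x' hx'
  refine ⟨⟨_, η, hη, ht1''⟩, ?_⟩
  rw [flow_eq hX hη ht1'', flow_eq hX hξ₀ ht1']
  calc dist (η t1') (ξ₀ t1) ≤ dist (η t1') (ξ₀ t1') + dist (ξ₀ t1') (ξ₀ t1) := dist_triangle ..
    _ < ρ / 2 + ρ / 2 := add_lt_add (by rw [dist_eq_norm]; exact hηξ₀ t1' ht1'') hξ₀t1'
    _ = ρ := add_halves ρ

end

/-- The Banach/ℝⁿ local model of parts (vii) and (viii) of the paper's Theorem 3.4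
('Continuous dependence of flows'): solutions are unique, the flow domain `D_X` is open
in `T × T × E`, and the flow `Φ^X` is well defined and continuous on `D_X`. -/
theorem flow_domain_open_and_flow_continuous
    {E : Type*} [NormedAddCommGroup E] [NormedSpace ℝ E] [FiniteDimensional ℝ E]
    [MeasurableSpace E] [BorelSpace E]
    (T : Set ℝ) (hT : T.OrdConnected) (X : ℝ → E → E)
    (hXmeas : ∀ x : E, Measurable fun t => X t x)
    (hXcont : ∀ t ∈ T, Continuous fun x => X t x)
    (hXbd : ∀ a b : ℝ, Icc a b ⊆ T → ∀ K : Set E, IsCompact K →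
      ∃ h ℓ : ℝ → ℝ, IntegrableOn h (Icc a b) ∧ IntegrableOn ℓ (Icc a b) ∧
        (∀ t ∈ Icc a b, ∀ x ∈ K, ‖X t x‖ ≤ h t) ∧
        ∀ t ∈ Icc a b, ∀ x1 ∈ K, ∀ x2 ∈ K, ‖X t x1 - X t x2‖ ≤ ℓ t * ‖x1 - x2‖) :
    (∀ (t0 : ℝ) (x : E) (J1 J2 : Set ℝ) (ξ1 ξ2 : ℝ → E),
      IsSolutionOn T X t0 x J1 ξ1 → IsSolutionOn T X t0 x J2 ξ2 →
      ∀ t ∈ J1 ∩ J2, ξ1 t = ξ2 t) ∧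
    (∃ V : Set (ℝ × ℝ × E), IsOpen V ∧
      {q : ℝ × ℝ × E | ∃ J ξ, IsSolutionOn T X q.2.1 q.2.2 J ξ ∧ q.1 ∈ J} =
        V ∩ (T ×ˢ T ×ˢ (univ : Set E))) ∧
    ∃ Φ : ℝ → ℝ → E → E,
      (∀ (t1 t0 : ℝ) (x : E) (J : Set ℝ) (ξ : ℝ → E),
        IsSolutionOn T X t0 x J ξ → t1 ∈ J → Φ t1 t0 x = ξ t1) ∧
      ContinuousOn (fun q : ℝ × ℝ × E => Φ q.1 q.2.1 q.2.2)
        {q : ℝ × ℝ × E | ∃ J ξ, IsSolutionOn T X q.2.1 q.2.2 J ξ ∧ q.1 ∈ J} := by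
  have hX := isLocallyIntegrablyBounded_of_forall hXbd
  have key := fun q (hq : q ∈ flowDomain T X) ρ (hρ : 0 < ρ) =>
    eventually_mem_flowDomain_and_dist_flow_lt hT hXmeas hXcont hX hq hρ
  refine ⟨fun _ _ _ _ _ _ h₁ h₂ => h₁.eqOn hX h₂,
    exists_isOpen_eq_inter_of_forall_mem_nhdsWithin flowDomain_subset fun q hq =>
      (key q hq 1 one_pos).mono fun _ h => h.1,
    flow T X, fun _ _ _ _ _ hξ ht1 => flow_eq hX hξ ht1, fun q hq => ?_⟩
  exact (Metric.tendsto_nhds.2 fun ρ hρ => (key q hq ρ hρ).mono fun _ h => h.2).mono_left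
    (nhdsWithin_mono _ flowDomain_subset)
end

section
/- Let E be a finite-dimensional real normed space, P a topological space, t0, t1 ∈ ℝ, p0 ∈ P, U ⊆ E open, K ⊆ U compact, and X : ℝ × E × P → E such that s ↦ X(s, y, p) is measurable for every (y, p) and y ↦ X(s, y, p) is continuous for every (s, p). Suppose there exist an open neighbourhood O1 of p0, a compact set K' ⊆ E, and a map Φ : ℝ × E × P → E such that: (i) Φ(s, x, p) ∈ K' for all (s, x, p) ∈ |t0, t1| × K × O1; (ii) for each (x, p) ∈ K × O1 the map s ↦ X(s, Φ(s, x, p), p) is integrable on |t0, t1| and Φ(t, x, p) = x + ∫_{t0}^{t} X(s, Φ(s, x, p), p) ds for all t ∈ |t0, t1|; (iii) for each (x̄, p̄) ∈ K × O1 and ε > 0 there are a neighbourhood V of x̄ and a neighbourhood O ⊆ O1 of p̄ with ‖Φ(t, x, p) − Φ(t, x̄, p̄)‖ < ε for all t ∈ |t0, t1|, x ∈ V ∩ K, p ∈ O; (iv) there is a nonnegative ℓ : ℝ → ℝ integrable on |t0, t1| with ‖X(s, y1, p0) − X(s, y2, p0)‖ ≤ ℓ(s) ‖y1 − y2‖ for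 all s ∈ |t0, t1| and y1, y2 ∈ K'; (v) for every ε > 0 there is a neighbourhood O2 ⊆ O1 of p0 such that for every p ∈ O2 there is an integrable g : ℝ → ℝ on |t0, t1| with ‖X(s, y, p) − X(s, y, p0)‖ ≤ g(s) for all s ∈ |t0, t1|, y ∈ K', and ∫_{|t0,t1|} g(s) ds < ε. Then for every ε > 0 there is a neighbourhood O of p0 such that ‖Φ(t1, x, p) − Φ(t1, x, p0)‖ < ε for all x ∈ K and all p ∈ O. -/
open Set MeasureTheory intervalIntegral
open scoped Interval

/-! The difference `Δ t = Φ t x p - Φ t x p0` of two solutions is the integral of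
`X(s, Φ(s,x,p), p) - X(s, Φ(s,x,p0), p0)`, whose norm is at most `g s + l s * ‖Δ s‖` by (iv)
and (v). An integral Grönwall inequality with integrable kernel `l` then bounds `‖Δ t1‖` by
`C(∫ l) * ∫ g`, and `∫ g` is arbitrarily small near `p0`.

The Grönwall inequality is proved without exponentials: on a piece of `[a, b]` where
`∫ l ≤ 1/2`, evaluating the inequality at a maximiser of `u` gives `max u ≤ 2 (u a + G)`;
the primitive of `l` cuts `[a, b]` into `n` such pieces when `∫ l ≤ n / 2`. -/

section Gronwall

variable {u l : ℝ → ℝ} {a b G : ℝ}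

theorem le_two_mul_of_integral_le_half (hab : a ≤ b) (hu : ContinuousOn u (Icc a b))
    (hu0 : ∀ t ∈ Icc a b, 0 ≤ u t) (hl : IntegrableOn l (Icc a b))
    (hl0 : ∀ t ∈ Icc a b, 0 ≤ l t) (hl_half : ∫ r in a..b, l r ≤ 1 / 2)
    (h : ∀ t ∈ Icc a b, u t ≤ u a + G + ∫ r in a..t, l r * u r) :
    u b ≤ 2 * (u a + G) := by
  obtain ⟨c, hc, hmax⟩ := isCompact_Icc.exists_isMaxOn (nonempty_Icc.2 hab) hu
  have hsub : Icc a c ⊆ Icc a b := Icc_subset_Icc_right hc.2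
  have hbc : u b ≤ u c := hmax (right_mem_Icc.2 hab)
  have hlc : ∫ r in a..c, l r ≤ 1 / 2 :=
    (integral_mono_interval le_rfl hc.1 hc.2
      (ae_restrict_of_forall_mem measurableSet_Ioc fun r hr => hl0 r (Ioc_subset_Icc_self hr))
      ((intervalIntegrable_iff_integrableOn_Icc_of_le hab).2 hl)).trans hl_half
  have hlu : ∫ r in a..c, l r * u r ≤ (∫ r in a..c, l r) * u c := by
    rw [← intervalIntegral.integral_mul_const]
    refine integral_mono_on hc.1 ?_ ?_ fun r hr =>
      mul_le_mul_of_nonneg_left (hmax (hsub hr)) (hl0 r (hsub hr))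
    · exact (intervalIntegrable_iff_integrableOn_Icc_of_le hc.1).2
        ((hl.mul_continuousOn hu isCompact_Icc).mono_set hsub)
    · exact (intervalIntegrable_iff_integrableOn_Icc_of_le hc.1).2
        ((hl.mono_set hsub).mul_const _)
  have := mul_le_mul_of_nonneg_right hlc (hu0 c hc)
  linarith [h c hc]

theorem add_two_mul_le_two_pow_mul_of_integral_le (n : ℕ) (hab : a ≤ b)
    (hu : ContinuousOn u (Icc a b)) (hu0 : ∀ t ∈ Icc a b, 0 ≤ u t)
    (hl : IntegrableOn l (Icc a b)) (hl0 : ∀ t ∈ Icc a b, 0 ≤ l t) (hG : 0 ≤ G)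
    (hln : ∫ r in a..b, l r ≤ n / 2)
    (h : ∀ s ∈ Icc a b, ∀ t ∈ Icc s b, u t ≤ u s + G + ∫ r in s..t, l r * u r) :
    u b + 2 * G ≤ 2 ^ (n + 1) * (u a + 2 * G) := by
  induction n generalizing b with
  | zero =>
    have := le_two_mul_of_integral_le_half hab hu hu0 hl hl0 (by norm_num at hln; linarith)
      (h a (left_mem_Icc.2 hab))
    norm_num
    linarith
  | succ n ih =>
    have ih' : ∀ c ∈ Icc a b, ∫ r in a..c, l r ≤ n / 2 →
        u c + 2 * G ≤ 2 ^ (n + 1) * (u a + 2 * G) := fun c hc hlc =>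
      ih hc.1 (hu.mono (Icc_subset_Icc_right hc.2)) (fun t ht => hu0 t ⟨ht.1, ht.2.trans hc.2⟩)
        (hl.mono_set (Icc_subset_Icc_right hc.2)) (fun t ht => hl0 t ⟨ht.1, ht.2.trans hc.2⟩)
        hlc fun s hs t ht => h s ⟨hs.1, hs.2.trans hc.2⟩ t ⟨ht.1, ht.2.trans hc.2⟩
    have hua : 0 ≤ u a + 2 * G := by linarith [hu0 a (left_mem_Icc.2 hab)]
    rw [pow_succ]
    by_cases hb : ∫ r in a..b, l r ≤ n / 2
    · nlinarith [ih' b (right_mem_Icc.2 hab) hb, pow_pos (two_pos (α := ℝ)) (n + 1)]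
    · have hlI : IntegrableOn l (uIcc a b) := by rwa [uIcc_of_le hab]
      have hprim := continuousOn_primitive_interval hlI
      rw [uIcc_of_le hab] at hprim
      obtain ⟨c, hc, hlc⟩ : ∃ c ∈ Icc a b, ∫ r in a..c, l r = n / 2 :=
        intermediate_value_Icc hab hprim ⟨by simp only [integral_same]; positivity,
          (not_le.1 hb).le⟩
      have hcb : ∫ r in c..b, l r ≤ 1 / 2 := by
        rw [← integral_interval_sub_left hlI.intervalIntegrable
          ((hlI.mono_set (uIcc_subset_uIcc_left (by rwa [uIcc_of_le hab]))).intervalIntegrable)]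
        push_cast at hln
        linarith
      have hsub : Icc c b ⊆ Icc a b := Icc_subset_Icc_left hc.1
      have := le_two_mul_of_integral_le_half hc.2 (hu.mono hsub) (fun t ht => hu0 t (hsub ht))
        (hl.mono_set hsub) (fun t ht => hl0 t (hsub ht)) hcb (h c hc)
      linarith [ih' c hc hlc.le]

theorem add_two_mul_le_two_pow_mul_of_integral_uIoc_le (n : ℕ)
    (hu : ContinuousOn u (uIcc a b)) (hu0 : ∀ t ∈ uIcc a b, 0 ≤ u t)
    (hl : IntegrableOn l (uIcc a b)) (hl0 : ∀ t ∈ uIcc a b, 0 ≤ l t) (hG : 0 ≤ G)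
    (hln : ∫ r in Ι a b, l r ≤ n / 2)
    (h : ∀ s ∈ uIcc a b, ∀ t ∈ uIcc a b, u t ≤ u s + G + ∫ r in Ι s t, l r * u r) :
    u b + 2 * G ≤ 2 ^ (n + 1) * (u a + 2 * G) := by
  rcases le_total a b with hab | hba
  · rw [uIcc_of_le hab] at hu hu0 hl hl0 h
    rw [uIoc_of_le hab, ← integral_of_le hab] at hln
    refine add_two_mul_le_two_pow_mul_of_integral_le n hab hu hu0 hl hl0 hG hln
      fun s hs t ht => ?_
    have := h s hs t ⟨hs.1.trans ht.1, ht.2⟩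
    rwa [uIoc_of_le ht.1, ← integral_of_le ht.1] at this
  -- for `b ≤ a`, run time backwards: apply the ordered case to `u ∘ neg` on `[-a, -b]`
  rw [uIcc_of_ge hba] at hu hu0 hl hl0 h
  rw [uIoc_of_ge hba, ← integral_of_le hba] at hln
  have hneg : ∀ r ∈ Icc (-a) (-b), -r ∈ Icc b a := fun r hr =>
    ⟨by linarith [hr.2], by linarith [hr.1]⟩
  have hl' : IntegrableOn (fun r => l (-r)) (Icc (-a) (-b)) := by
    rw [← intervalIntegrable_iff_integrableOn_Icc_of_le (neg_le_neg hba)]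
    exact (IntervalIntegrable.iff_comp_neg).1
      ((intervalIntegrable_iff_integrableOn_Icc_of_le hba).2 hl).symm
  have := add_two_mul_le_two_pow_mul_of_integral_le (u := fun r => u (-r)) (l := fun r => l (-r))
    n (neg_le_neg hba) (hu.comp continuous_neg.continuousOn hneg)
    (fun t ht => hu0 _ (hneg t ht)) hl' (fun t ht => hl0 _ (hneg t ht)) hG
    (by rwa [integral_comp_neg (fun r => l r), neg_neg, neg_neg])
    fun s hs t ht => ?_
  · simpa only [neg_neg] using this
  have := h (-s) (hneg s hs) (-t) (hneg t ⟨hs.1.trans ht.1, ht.2⟩)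
  rwa [uIoc_of_ge (neg_le_neg ht.1), ← integral_of_le (neg_le_neg ht.1),
    ← integral_comp_neg (fun r => l r * u r)] at this

end Gronwall

theorem norm_integral_le_two_pow_mul_integral {E : Type*} [NormedAddCommGroup E]
    [NormedSpace ℝ E] {f : ℝ → E} {g l : ℝ → ℝ} {t0 t1 : ℝ} (n : ℕ)
    (hf : IntegrableOn f (uIcc t0 t1)) (hg : IntegrableOn g (uIcc t0 t1))
    (hl : IntegrableOn l (uIcc t0 t1)) (hg0 : ∀ s ∈ uIcc t0 t1, 0 ≤ g s)
    (hl0 : ∀ s ∈ uIcc t0 t1, 0 ≤ l s) (hln : ∫ s in uIcc t0 t1, l s ≤ n / 2)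
    (hfgl : ∀ s ∈ uIcc t0 t1, ‖f s‖ ≤ g s + l s * ‖∫ r in t0..s, f r‖) :
    ‖∫ s in t0..t1, f s‖ ≤ 2 ^ (n + 2) * ∫ s in uIcc t0 t1, g s := by
  set u : ℝ → ℝ := fun t => ‖∫ r in t0..t, f r‖ with hu_def
  set G := ∫ s in uIcc t0 t1, g s
  have hu : ContinuousOn u (uIcc t0 t1) := (continuousOn_primitive_interval hf).norm
  have hlu : IntegrableOn (fun r => l r * u r) (uIcc t0 t1) :=
    hl.mul_continuousOn hu isCompact_uIcc
  have hG : 0 ≤ G := setIntegral_nonneg measurableSet_uIcc hg0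
  have step : ∀ s ∈ uIcc t0 t1, ∀ t ∈ uIcc t0 t1,
      u t ≤ u s + G + ∫ r in Ι s t, l r * u r := by
    intro s hs t ht
    have hst : Ι s t ⊆ uIcc t0 t1 := uIoc_subset_uIcc.trans (uIcc_subset_uIcc hs ht)
    have hgG : ∫ r in Ι s t, g r ≤ G := setIntegral_mono_set hg
      (ae_restrict_of_forall_mem measurableSet_uIcc hg0) hst.eventuallyLE
    calc u t = ‖(∫ r in t0..s, f r) + ∫ r in s..t, f r‖ := by
          rw [integral_add_adjacent_intervals
            (hf.mono_set (uIcc_subset_uIcc_left hs)).intervalIntegrable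
            (hf.mono_set (uIcc_subset_uIcc hs ht)).intervalIntegrable]
      _ ≤ u s + ∫ r in Ι s t, ‖f r‖ :=
          (norm_add_le _ _).trans (add_le_add le_rfl norm_integral_le_integral_norm_uIoc)
      _ ≤ u s + ∫ r in Ι s t, (g r + l r * u r) :=
          add_le_add le_rfl (setIntegral_mono_on (hf.mono_set hst).norm
            ((hg.mono_set hst).add (hlu.mono_set hst)) measurableSet_uIoc
            fun r hr => hfgl r (hst hr))
      _ = u s + (∫ r in Ι s t, g r) + ∫ r in Ι s t, l r * u r := by
          rw [integral_add (hg.mono_set hst) (hlu.mono_set hst), add_assoc]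
      _ ≤ u s + G + ∫ r in Ι s t, l r * u r := by gcongr
  have hln' : ∫ r in Ι t0 t1, l r ≤ n / 2 := (setIntegral_mono_set hl
    (ae_restrict_of_forall_mem measurableSet_uIcc hl0) uIoc_subset_uIcc.eventuallyLE).trans hln
  have := add_two_mul_le_two_pow_mul_of_integral_uIoc_le n hu (fun _ _ => norm_nonneg _) hl hl0
    hG hln' step
  simp only [hu_def, integral_same, norm_zero, zero_add] at this
  rw [pow_succ]
  linarith

theorem fixed_time_flow_continuous_in_parameter_C0_general
    {E P : Type*} [NormedAddCommGroup E] [NormedSpace ℝ E]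
    [TopologicalSpace P]
    (t0 t1 : ℝ) (p0 : P)
    (K : Set E)
    (X : ℝ → E → P → E)
    (O1 : Set P) (hp0 : p0 ∈ O1)
    (K' : Set E)
    (Φ : ℝ → E → P → E)
    (h1 : ∀ s ∈ uIcc t0 t1, ∀ x ∈ K, ∀ p ∈ O1, Φ s x p ∈ K')
    (h2 : ∀ x ∈ K, ∀ p ∈ O1,
      IntegrableOn (fun s => X s (Φ s x p) p) (uIcc t0 t1) ∧
      ∀ t ∈ uIcc t0 t1, Φ t x p = x + ∫ s in t0..t, X s (Φ s x p) p)
    (l : ℝ → ℝ) (hl0 : ∀ s, 0 ≤ l s) (hlint : IntegrableOn l (uIcc t0 t1))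
    (h4 : ∀ s ∈ uIcc t0 t1, ∀ y1 ∈ K', ∀ y2 ∈ K',
      ‖X s y1 p0 - X s y2 p0‖ ≤ l s * ‖y1 - y2‖)
    (h5 : ∀ ε > (0 : ℝ), ∃ O2 : Set P, IsOpen O2 ∧ p0 ∈ O2 ∧ O2 ⊆ O1 ∧
      ∀ p ∈ O2, ∃ g : ℝ → ℝ, IntegrableOn g (uIcc t0 t1) ∧
        (∀ s ∈ uIcc t0 t1, ∀ y ∈ K', ‖X s y p - X s y p0‖ ≤ g s) ∧
        ∫ s in uIcc t0 t1, g s < ε) :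
    ∀ ε > (0 : ℝ), ∃ O : Set P, IsOpen O ∧ p0 ∈ O ∧
      ∀ x ∈ K, ∀ p ∈ O, ‖Φ t1 x p - Φ t1 x p0‖ < ε := by
  intro ε hε
  obtain ⟨n, hn⟩ := exists_nat_ge (2 * ∫ s in uIcc t0 t1, l s)
  obtain ⟨O, hO, hp0O, hOO1, hOg⟩ := h5 (ε / 2 ^ (n + 2)) (by positivity)
  refine ⟨O, hO, hp0O, fun x hx p hp => ?_⟩
  obtain ⟨g, hg, hgX, hgε⟩ := hOg p hp
  obtain ⟨hXp, hΦp⟩ := h2 x hx p (hOO1 hp)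
  obtain ⟨hXp0, hΦp0⟩ := h2 x hx p0 hp0
  have hΦ : ∀ t ∈ uIcc t0 t1, Φ t x p - Φ t x p0 =
      ∫ s in t0..t, (X s (Φ s x p) p - X s (Φ s x p0) p0) := fun t ht => by
    rw [hΦp t ht, hΦp0 t ht, add_sub_add_left_eq_sub, integral_sub
      (hXp.mono_set (uIcc_subset_uIcc_left ht)).intervalIntegrable
      (hXp0.mono_set (uIcc_subset_uIcc_left ht)).intervalIntegrable]
  have hg0 : ∀ s ∈ uIcc t0 t1, 0 ≤ g s := fun s hs =>
    (norm_nonneg _).trans (hgX s hs _ (h1 s hs x hx p0 hp0))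
  have hX : ∀ s ∈ uIcc t0 t1, ‖X s (Φ s x p) p - X s (Φ s x p0) p0‖ ≤
      g s + l s * ‖∫ r in t0..s, (X r (Φ r x p) p - X r (Φ r x p0) p0)‖ := fun s hs => by
    rw [← hΦ s hs, ← sub_add_sub_cancel _ (X s (Φ s x p) p0)]
    exact (norm_add_le _ _).trans (add_le_add (hgX s hs _ (h1 s hs x hx p (hOO1 hp)))
      (h4 s hs _ (h1 s hs x hx p (hOO1 hp)) _ (h1 s hs x hx p0 hp0)))
  calc ‖Φ t1 x p - Φ t1 x p0‖
      ≤ 2 ^ (n + 2) * ∫ s in uIcc t0 t1, g s := by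
        rw [hΦ t1 right_mem_uIcc]
        exact norm_integral_le_two_pow_mul_integral n (hXp.sub hXp0) hg hlint hg0
          (fun s _ => hl0 s) (by linarith) hX
    _ < 2 ^ (n + 2) * (ε / 2 ^ (n + 2)) := by gcongr
    _ = ε := by field_simp

/-- The C⁰ case of the paper's main Theorem ('Continuous dependence of fixed-time flow on
parameter') in the local model `E = ℝⁿ`: under the stated hypotheses on the flow `Φ` of
the time- and parameter-dependent vector field `X`, the fixed-time flow depends
continuously (uniformly over the compact set `K`) on the parameter at `p0`. -/
theorem fixed_time_flow_continuous_in_parameter_C0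
    {E P : Type*} [NormedAddCommGroup E] [NormedSpace ℝ E] [FiniteDimensional ℝ E]
    [MeasurableSpace E] [BorelSpace E] [TopologicalSpace P]
    (t0 t1 : ℝ) (p0 : P) (U : Set E) (hU : IsOpen U)
    (K : Set E) (hK : IsCompact K) (hKU : K ⊆ U)
    (X : ℝ → E → P → E)
    (hXmeas : ∀ (y : E) (p : P), Measurable fun s => X s y p)
    (hXcont : ∀ (s : ℝ) (p : P), Continuous fun y => X s y p)
    (O1 : Set P) (hO1 : IsOpen O1) (hp0 : p0 ∈ O1)
    (K' : Set E) (hK' : IsCompact K')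
    (Φ : ℝ → E → P → E)
    (h1 : ∀ s ∈ uIcc t0 t1, ∀ x ∈ K, ∀ p ∈ O1, Φ s x p ∈ K')
    (h2 : ∀ x ∈ K, ∀ p ∈ O1,
      IntegrableOn (fun s => X s (Φ s x p) p) (uIcc t0 t1) ∧
      ∀ t ∈ uIcc t0 t1, Φ t x p = x + ∫ s in t0..t, X s (Φ s x p) p)
    (h3 : ∀ xb ∈ K, ∀ pb ∈ O1, ∀ ε > (0 : ℝ),
      ∃ V : Set E, IsOpen V ∧ xb ∈ V ∧ ∃ O : Set P, IsOpen O ∧ pb ∈ O ∧ O ⊆ O1 ∧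
        ∀ t ∈ uIcc t0 t1, ∀ x ∈ V ∩ K, ∀ p ∈ O, ‖Φ t x p - Φ t xb pb‖ < ε)
    (l : ℝ → ℝ) (hl0 : ∀ s, 0 ≤ l s) (hlint : IntegrableOn l (uIcc t0 t1))
    (h4 : ∀ s ∈ uIcc t0 t1, ∀ y1 ∈ K', ∀ y2 ∈ K',
      ‖X s y1 p0 - X s y2 p0‖ ≤ l s * ‖y1 - y2‖)
    (h5 : ∀ ε > (0 : ℝ), ∃ O2 : Set P, IsOpen O2 ∧ p0 ∈ O2 ∧ O2 ⊆ O1 ∧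
      ∀ p ∈ O2, ∃ g : ℝ → ℝ, IntegrableOn g (uIcc t0 t1) ∧
        (∀ s ∈ uIcc t0 t1, ∀ y ∈ K', ‖X s y p - X s y p0‖ ≤ g s) ∧
        ∫ s in uIcc t0 t1, g s < ε) :
    ∀ ε > (0 : ℝ), ∃ O : Set P, IsOpen O ∧ p0 ∈ O ∧
      ∀ x ∈ K, ∀ p ∈ O, ‖Φ t1 x p - Φ t1 x p0‖ < ε :=
  fixed_time_flow_continuous_in_parameter_C0_general t0 t1 p0 K X O1 hp0 K' Φ h1 h2 l hl0 hlint h4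
    h5
end

section
/- Let X be a type carrying two metric structures d1 and d2 (each satisfying the metric space axioms: nonnegativity, d(x, y) = 0 iff x = y, symmetry, and the triangle inequality). Let K ⊆ X be compact with respect to the topology induced by d1. Assume that for every x ∈ K there exist ε_x > 0 and c_x > 0 such that for all x1, x2 with d1(x1, x) < ε_x and d1(x2, x) < ε_x one has c_x⁻¹ · d1(x1, x2) ≤ d2(x1, x2) ≤ c_x · d1(x1, x2). Then there exists c > 0 such that c⁻¹ · d1(x1, x2) ≤ d2(x1, x2) ≤ c · d1(x1, x2) for all x1, x2 ∈ K. -/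
/-- Metric-space abstraction of the paper's Lemma 5.2 ('Comparison of Riemannian distance
for different Riemannian metrics'): two metrics on a set which are locally bi-Lipschitz
equivalent near each point of a compact set `K` are uniformly bi-Lipschitz equivalent
on `K`. -/
theorem locally_biLipschitz_metrics_uniform_on_compact
    {X : Type*} [MetricSpace X] (d2 : X → X → ℝ)
    (h0 : ∀ x y : X, 0 ≤ d2 x y)
    (heq : ∀ x y : X, d2 x y = 0 ↔ x = y)
    (hsymm : ∀ x y : X, d2 x y = d2 y x)
    (htri : ∀ x y z : X, d2 x z ≤ d2 x y + d2 y z)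
    (K : Set X) (hK : IsCompact K)
    (hloc : ∀ x ∈ K, ∃ ε > (0 : ℝ), ∃ c > (0 : ℝ),
      ∀ x1 x2 : X, dist x1 x < ε → dist x2 x < ε →
        c⁻¹ * dist x1 x2 ≤ d2 x1 x2 ∧ d2 x1 x2 ≤ c * dist x1 x2) :
    ∃ c > (0 : ℝ), ∀ x1 ∈ K, ∀ x2 ∈ K,
      c⁻¹ * dist x1 x2 ≤ d2 x1 x2 ∧ d2 x1 x2 ≤ c * dist x1 x2 := by
  rcases K.eq_empty_or_nonempty with rfl | hne
  · exact ⟨1, one_pos, fun x1 hx1 => absurd hx1 (Set.notMem_empty _)⟩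
  choose! ε hε c hc H using hloc
  -- monotonicity of the conclusion in c
  have mono : ∀ {c' c'' : ℝ} {x1 x2 : X}, 0 < c' → c' ≤ c'' →
      c'⁻¹ * dist x1 x2 ≤ d2 x1 x2 ∧ d2 x1 x2 ≤ c' * dist x1 x2 →
      c''⁻¹ * dist x1 x2 ≤ d2 x1 x2 ∧ d2 x1 x2 ≤ c'' * dist x1 x2 := by
    intro c' c'' x1 x2 hc' hle ⟨h1, h2⟩
    have hd : (0:ℝ) ≤ dist x1 x2 := dist_nonneg
    have hinv : c''⁻¹ ≤ c'⁻¹ := by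
      apply inv_anti₀ hc' hle
    constructor
    · exact le_trans (mul_le_mul_of_nonneg_right hinv hd) h1
    · exact le_trans h2 (mul_le_mul_of_nonneg_right hle hd)
  -- finite subcover by balls of radius ε x / 2
  have hcov : K ⊆ ⋃ x ∈ K, Metric.ball x (ε x / 2) := fun x hx =>
    Set.mem_biUnion hx (by simp [Metric.mem_ball, half_pos (hε x hx)])
  obtain ⟨t, htK, htfin, htcov⟩ :=
    hK.elim_finite_subcover_image (fun x _ => Metric.isOpen_ball) hcov
  obtain ⟨x0, hx0⟩ := hne
  have hx0' := htcov hx0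
  simp only [Set.mem_iUnion] at hx0'
  obtain ⟨i0, hi0, _⟩ := hx0'
  let s : Finset X := htfin.toFinset
  have hsK : ∀ x ∈ s, x ∈ K := fun x hx => htK (htfin.mem_toFinset.mp hx)
  have hs : s.Nonempty := ⟨i0, htfin.mem_toFinset.mpr hi0⟩
  set δ : ℝ := s.inf' hs (fun x => ε x / 2) with hδdef
  have hδpos : 0 < δ := by
    apply Finset.lt_inf'_iff hs |>.mpr
    intro x hx
    exact half_pos (hε x (hsK x hx))
  set C0 : ℝ := s.sup' hs c with hC0def
  have hC0pos : 0 < C0 := by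
    obtain ⟨j, hj⟩ := hs
    exact lt_of_lt_of_le (hc j (hsK j hj)) (Finset.le_sup' c hj)
  -- close pairs
  have hclose : ∀ x1 ∈ K, ∀ x2 : X, dist x1 x2 < δ →
      C0⁻¹ * dist x1 x2 ≤ d2 x1 x2 ∧ d2 x1 x2 ≤ C0 * dist x1 x2 := by
    intro x1 hx1 x2 hd
    have := htcov hx1
    simp only [Set.mem_iUnion] at this
    obtain ⟨i, hi, hball⟩ := this
    have his : i ∈ s := htfin.mem_toFinset.mpr hi
    have hiK : i ∈ K := htK hi
    rw [Metric.mem_ball] at hball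
    have hδi : δ ≤ ε i / 2 := Finset.inf'_le _ his
    have h1 : dist x1 i < ε i := lt_of_lt_of_le hball (by linarith)
    have h2 : dist x2 i < ε i := by
      have := dist_triangle x2 x1 i
      rw [dist_comm x2 x1] at this
      linarith
    have hbnd := H i hiK x1 x2 h1 h2
    exact mono (hc i hiK) (Finset.le_sup' c his) hbnd
  -- continuity of d2 on K ×ˢ K
  have hcont : ContinuousOn (fun p : X × X => d2 p.1 p.2) (K ×ˢ K) := by
    intro p hp
    obtain ⟨hp1, hp2⟩ := hp
    apply ContinuousAt.continuousWithinAt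
    rw [Metric.continuousAt_iff]
    intro r hr
    have hca := hc p.1 hp1
    have hcb := hc p.2 hp2
    refine ⟨min (min (ε p.1) (ε p.2)) (r / (c p.1 + c p.2 + 1)), lt_min (lt_min (hε p.1 hp1) (hε p.2 hp2)) (div_pos hr (by linarith)), ?_⟩
    intro q hq
    rw [Prod.dist_eq, max_lt_iff] at hq
    obtain ⟨hq1, hq2⟩ := hq
    have hq1a : dist q.1 p.1 < ε p.1 := lt_of_lt_of_le hq1 (le_trans (min_le_left _ _) (min_le_left _ _))
    have hq2a : dist q.2 p.2 < ε p.2 := lt_of_lt_of_le hq2 (le_trans (min_le_left _ _) (min_le_right _ _))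
    have hq1b : dist q.1 p.1 < r / (c p.1 + c p.2 + 1) := lt_of_lt_of_le hq1 (min_le_right _ _)
    have hq2b : dist q.2 p.2 < r / (c p.1 + c p.2 + 1) := lt_of_lt_of_le hq2 (min_le_right _ _)
    have hself1 : dist p.1 p.1 < ε p.1 := by simp [hε p.1 hp1]
    have hself2 : dist p.2 p.2 < ε p.2 := by simp [hε p.2 hp2]
    have hb1 : d2 q.1 p.1 ≤ c p.1 * dist q.1 p.1 :=
      (H p.1 hp1 q.1 p.1 hq1a hself1).2
    have hb2 : d2 q.2 p.2 ≤ c p.2 * dist q.2 p.2 :=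
      (H p.2 hp2 q.2 p.2 hq2a hself2).2
    have htri1 : d2 q.1 q.2 ≤ d2 q.1 p.1 + d2 p.1 p.2 + d2 p.2 q.2 := by
      have a := htri q.1 p.1 q.2
      have b := htri p.1 p.2 q.2
      linarith
    have htri2 : d2 p.1 p.2 ≤ d2 p.1 q.1 + d2 q.1 q.2 + d2 q.2 p.2 := by
      have a := htri p.1 q.1 p.2
      have b := htri q.1 q.2 p.2
      linarith
    rw [Real.dist_eq, abs_lt]
    have hsy1 : d2 p.1 q.1 = d2 q.1 p.1 := hsymm _ _
    have hsy2 : d2 p.2 q.2 = d2 q.2 p.2 := hsymm _ _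
    have hdnn1 : (0:ℝ) ≤ dist q.1 p.1 := dist_nonneg
    have hdnn2 : (0:ℝ) ≤ dist q.2 p.2 := dist_nonneg
    have hne0 : c p.1 + c p.2 + 1 ≠ 0 := by
      have h1 := hca; have h2 := hcb; intro h; linarith
    have key : (c p.1 + c p.2 + 1) * (r / (c p.1 + c p.2 + 1)) = r := by
      field_simp
    constructor <;> nlinarith [mul_le_mul_of_nonneg_left hq1b.le hca.le,
      mul_le_mul_of_nonneg_left hq2b.le hcb.le,
      mul_pos hca (hε p.1 hp1), mul_pos hcb (hε p.2 hp2),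
      dist_nonneg (x := q.1) (y := p.1)]
  -- the far set
  set S : Set (X × X) := (K ×ˢ K) ∩ {p | δ ≤ dist p.1 p.2} with hSdef
  have hScompact : IsCompact S :=
    (hK.prod hK).inter_right (isClosed_le continuous_const (by fun_prop))
  by_cases hSne : S.Nonempty
  · -- bounds on far pairs
    obtain ⟨pm, hpmS, hpm⟩ := hScompact.exists_isMinOn hSne
      (hcont.mono (Set.inter_subset_left))
    obtain ⟨pM, hpMKK, hpM⟩ := (hK.prod hK).exists_isMaxOn ⟨(x0, x0), hx0, hx0⟩ hcont
    set m : ℝ := d2 pm.1 pm.2 with hmdef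
    set M : ℝ := d2 pM.1 pM.2 with hMdef
    have hmpos : 0 < m := by
      rcases (h0 pm.1 pm.2).lt_or_eq with h | h
      · exact h
      · exfalso
        have : pm.1 = pm.2 := (heq _ _).mp h.symm
        have hdp : δ ≤ dist pm.1 pm.2 := hpmS.2
        rw [this, dist_self] at hdp
        linarith
    obtain ⟨D, hD⟩ := Metric.isBounded_iff.mp hK.isBounded
    have hDpos : 0 < D := by
      have hd1 : δ ≤ dist pm.1 pm.2 := hpmS.2
      have := hD hpmS.1.1 hpmS.1.2
      linarith
    have hfar : ∀ x1 ∈ K, ∀ x2 ∈ K, δ ≤ dist x1 x2 →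
        (max (M / δ) (D / m))⁻¹ * dist x1 x2 ≤ d2 x1 x2 ∧
        d2 x1 x2 ≤ (max (M / δ) (D / m)) * dist x1 x2 := by
      intro x1 hx1 x2 hx2 hd
      have hmem : (x1, x2) ∈ S := ⟨⟨hx1, hx2⟩, hd⟩
      have hge : m ≤ d2 x1 x2 := hpm hmem
      have hle : d2 x1 x2 ≤ M := hpM (show (x1, x2) ∈ K ×ˢ K from ⟨hx1, hx2⟩)
      have hdist : dist x1 x2 ≤ D := hD hx1 hx2
      have hcf : 0 < max (M / δ) (D / m) :=
        lt_max_of_lt_right (div_pos hDpos hmpos)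
      constructor
      · -- (max)⁻¹ * dist ≤ d2 : since (D/m)⁻¹ * dist = m/D * dist ≤ m ≤ d2
        have h1 : (max (M / δ) (D / m))⁻¹ ≤ (D / m)⁻¹ :=
          inv_anti₀ (div_pos hDpos hmpos) (le_max_right _ _)
        have h2 : (D / m)⁻¹ * dist x1 x2 ≤ m := by
          rw [inv_div]
          rw [div_mul_eq_mul_div, div_le_iff₀ hDpos]
          nlinarith
        calc (max (M / δ) (D / m))⁻¹ * dist x1 x2
            ≤ (D / m)⁻¹ * dist x1 x2 := by
              apply mul_le_mul_of_nonneg_right h1 dist_nonneg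
          _ ≤ m := h2
          _ ≤ d2 x1 x2 := hge
      · have hMnn : 0 ≤ M := le_trans (h0 _ _) hle
        calc d2 x1 x2 ≤ M := hle
          _ = M / δ * δ := by field_simp
          _ ≤ M / δ * dist x1 x2 := by
              apply mul_le_mul_of_nonneg_left hd (div_nonneg hMnn hδpos.le)
          _ ≤ (max (M / δ) (D / m)) * dist x1 x2 := by
              apply mul_le_mul_of_nonneg_right (le_max_left _ _) dist_nonneg
    refine ⟨max C0 (max (M / δ) (D / m)),
      lt_max_of_lt_left hC0pos, fun x1 hx1 x2 hx2 => ?_⟩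
    rcases lt_or_ge (dist x1 x2) δ with h | h
    · exact mono hC0pos (le_max_left _ _) (hclose x1 hx1 x2 h)
    · exact mono (lt_max_of_lt_right (div_pos hDpos hmpos)) (le_max_right _ _)
        (hfar x1 hx1 x2 hx2 h)
  · -- no far pairs
    refine ⟨C0, hC0pos, fun x1 hx1 x2 hx2 => ?_⟩
    rcases lt_or_ge (dist x1 x2) δ with h | h
    · exact hclose x1 hx1 x2 h
    · exact absurd ⟨(x1, x2), ⟨hx1, hx2⟩, h⟩ hSne
end
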